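/- arXiv:1803.09950 — 9 statements merged into one kernel-verified Lean document; each statement's English description precedes it below -/
import Mathlib

section
/- Let Q = z + (0,s)^d ⊆ [0,1)^d be an open cube of side length s on which V = α almost everywhere, and define the periodic function u by u(x) = ∏_{i=1}^d sin(π(x_i − z_i)/s) for x ∈ Q and u(x) = 0 for x ∈ [0,1)^d \ Q (extended ℤ^d-periodically). Then u is Lipschitz, nonzero, and satisfies |||u|||² = (α + dπ²/s²) ‖u‖²; in particular ‖u‖² ≥ s²/(dπ² + α s²) · |||u|||², showing that the lower energy bound in terms of the maximal valley width is sharp when s = εL. (Remark 2.5 of the paper.) -/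
open MeasureTheory Real
open scoped BigOperators RealInnerProductSpace

noncomputable section

/-- A function on `ℝ^d` is periodic if it is `ℤ^d`-periodic. -/
def ZPeriodic {d : ℕ} (f : (Fin d → ℝ) → ℝ) : Prop :=
  ∀ (x : Fin d → ℝ) (k : Fin d → ℤ), f (x + fun i => (k i : ℝ)) = f x

/-- The unit cell `[0,1)^d`. -/
def unitCell (d : ℕ) : Set (Fin d → ℝ) := Set.univ.pi fun _ => Set.Ico (0 : ℝ) 1

/-- Squared Euclidean norm `|∇f(x)|²` of the (a.e. defined) gradient of `f`. -/
def gradSq {d : ℕ} (f : (Fin d → ℝ) → ℝ) (x : Fin d → ℝ) : ℝ :=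
  ∑ i, (fderiv ℝ f x (Pi.single i 1)) ^ 2

/-- `‖v‖²`, the squared `L²` norm over the unit cell. -/
def l2sq {d : ℕ} (v : (Fin d → ℝ) → ℝ) : ℝ := ∫ x in unitCell d, (v x) ^ 2

/-- `‖∇v‖²_{L²([0,1)^d)}`. -/
def gradL2sq {d : ℕ} (v : (Fin d → ℝ) → ℝ) : ℝ := ∫ x in unitCell d, gradSq v x

/-- `|||v|||²`, the squared energy norm over the unit cell. -/
def energySq {d : ℕ} (V v : (Fin d → ℝ) → ℝ) : ℝ :=
  ∫ x in unitCell d, (gradSq v x + V x * (v x) ^ 2)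

/-- The open grid cell of side `ε` with lower-left corner `ε q`. -/
def gridCell {d : ℕ} (ε : ℝ) (q : Fin d → ℤ) : Set (Fin d → ℝ) :=
  {x | ∀ i, (q i : ℝ) * ε < x i ∧ x i < ((q i : ℝ) + 1) * ε}

/-- `V` is a periodic two-valued potential, constant on each (open) grid cell. -/
def IsGridPotential {d : ℕ} (ε α β : ℝ) (V : (Fin d → ℝ) → ℝ) : Prop :=
  ZPeriodic V ∧ (∀ x, V x = α ∨ V x = β) ∧
    ∀ q : Fin d → ℤ, (∀ x ∈ gridCell ε q, V x = α) ∨ (∀ x ∈ gridCell ε q, V x = β)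

/-- The axis-aligned closed cube of side `ε m` which is the union of the grid cells
`q + r`, `r ∈ {0, …, m-1}^d`. -/
def gridCube {d : ℕ} (ε : ℝ) (q : Fin d → ℤ) (m : ℕ) : Set (Fin d → ℝ) :=
  {x | ∀ i, (q i : ℝ) * ε ≤ x i ∧ x i ≤ ((q i : ℝ) + (m : ℝ)) * ε}

/-- An α-cube: a closed cube, union of grid cells, contained in `closure {V = α}`. -/
def IsAlphaCube {d : ℕ} (ε α : ℝ) (V : (Fin d → ℝ) → ℝ) (q : Fin d → ℤ) (m : ℕ) : Prop :=
  1 ≤ m ∧ gridCube ε q m ⊆ closure {x | V x = α}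

/-- A maximal α-cube: an α-cube maximal under inclusion among α-cubes. -/
def IsMaxAlphaCube {d : ℕ} (ε α : ℝ) (V : (Fin d → ℝ) → ℝ) (q : Fin d → ℤ) (m : ℕ) : Prop :=
  IsAlphaCube ε α V q m ∧ ∀ q' m', IsAlphaCube ε α V q' m' →
    gridCube ε q m ⊆ gridCube ε q' m' → gridCube ε q m = gridCube ε q' m'

/-- `ε L` is the largest side length of a maximal α-cube (with `L = 1` if no α-cube exists):
the maximal width of a potential valley. -/
def IsValleyWidth {d : ℕ} (ε α : ℝ) (V : (Fin d → ℝ) → ℝ) (L : ℕ) : Prop :=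
  IsGreatest {m | ∃ q, IsMaxAlphaCube ε α V q m} L ∨
    ((∀ q m, ¬ IsAlphaCube ε α V q m) ∧ L = 1)

/-- `κ` is the maximal number of maximal α-cubes containing a common α-grid cell. -/
def IsOverlapNumber {d : ℕ} (ε α : ℝ) (V : (Fin d → ℝ) → ℝ) (κ : ℕ) : Prop :=
  IsGreatest {n | ∃ q : Fin d → ℤ, (∀ x ∈ gridCell ε q, V x = α) ∧
    n = Nat.card {p : (Fin d → ℤ) × ℕ //
      IsMaxAlphaCube ε α V p.1 p.2 ∧ gridCell ε q ⊆ gridCube ε p.1 p.2}} κ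

/-- A cut-off function `η` with constant `Cη`: periodic, `C¹`, `[0,1]`-valued, equal to `1`
on every α-cell, vanishing on the closed concentric subcube of side `ε/2` of every β-cell,
with `‖∇η‖_∞ ≤ Cη / ε`. -/
structure IsCutoff {d : ℕ} (ε Cη α β : ℝ) (V η : (Fin d → ℝ) → ℝ) : Prop where
  periodic : ZPeriodic η
  contDiff : ContDiff ℝ 1 η
  mem_Icc : ∀ x, η x ∈ Set.Icc (0 : ℝ) 1
  eq_one : ∀ q : Fin d → ℤ, (∀ x ∈ gridCell ε q, V x = α) → ∀ x ∈ gridCell ε q, η x = 1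
  eq_zero : ∀ q : Fin d → ℤ, (∀ x ∈ gridCell ε q, V x = β) → ∀ x : Fin d → ℝ,
    (∀ i, ((q i : ℝ) + 1/4) * ε ≤ x i ∧ x i ≤ ((q i : ℝ) + 3/4) * ε) → η x = 0
  grad_le : ∀ x, ‖fderiv ℝ η x‖ ≤ Cη / ε


/-- The 1-periodic bump `t ↦ sin(π t / s)` on `[0, s]`, `0` on `[s, 1]`. -/
def bump (s t : ℝ) : ℝ := if Int.fract t ≤ s then Real.sin (π * Int.fract t / s) else 0


open scoped NNReal

/-! ### Auxiliary lemmas -/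

/-- The companion "cosine bump". -/
def cbump (s t : ℝ) : ℝ := if Int.fract t < s then π / s * Real.cos (π * Int.fract t / s) else 0

lemma bump_eq_sin_min (s t : ℝ) (hs : 0 < s) :
    bump s t = Real.sin (π / s * min (Int.fract t) s) := by
  unfold bump
  split_ifs with h
  · rw [min_eq_left h]; ring_nf
  · rw [min_eq_right (le_of_not_ge h)]
    rw [div_mul_cancel₀ _ (ne_of_gt hs), Real.sin_pi]

lemma bump_add_int (s t : ℝ) (k : ℤ) : bump s (t + k) = bump s t := by
  simp [bump, Int.fract_add_intCast]

lemma abs_bump_le_one (s t : ℝ) (hs : 0 < s) : |bump s t| ≤ 1 := by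
  rw [bump_eq_sin_min s t hs]; exact abs_sin_le_one _

lemma bump_measurable (s : ℝ) : Measurable (bump s) := by
  unfold bump
  refine Measurable.ite ?_ ?_ measurable_const
  · exact measurableSet_le measurable_fract measurable_const
  · exact Real.measurable_sin.comp (((measurable_fract.const_mul π)).div_const s)

lemma cbump_measurable (s : ℝ) : Measurable (cbump s) := by
  unfold cbump
  refine Measurable.ite ?_ ?_ measurable_const
  · exact measurableSet_lt measurable_fract measurable_const
  · exact (Real.measurable_cos.comp (((measurable_fract.const_mul π)).div_const s)).const_mul _

lemma abs_cbump_le (s t : ℝ) (hs : 0 < s) : |cbump s t| ≤ π / s := by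
  have hps : 0 ≤ π / s := div_nonneg Real.pi_pos.le hs.le
  unfold cbump
  split_ifs with h
  · rw [abs_mul, abs_of_nonneg hps]
    calc π / s * |Real.cos (π * Int.fract t / s)| ≤ π / s * 1 :=
      mul_le_mul_of_nonneg_left (abs_cos_le_one _) hps
      _ = π / s := mul_one _
  · simpa using hps

lemma periodic_shift {f : ℝ → ℝ} (hper : ∀ t, f (t + 1) = f t) :
    ∀ (k : ℤ) (t : ℝ), f (t + k) = f t := by
  intro k
  induction k using Int.induction_on with
  | zero => simp
  | succ n ih => intro t
                 push_cast
                 rw [show t + ((n:ℝ) + 1) = (t + n) + 1 by ring, hper]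
                 have := ih t; push_cast at this; exact this
  | pred n ih =>
      intro t
      have h1 : f ((t - (n:ℝ) - 1) + 1) = f (t - (n:ℝ) - 1) := hper _
      rw [show t - (n:ℝ) - 1 + 1 = t - n by ring] at h1
      have h2 : f (t - (n:ℝ)) = f t := by
        have := ih t; push_cast at this
        rwa [show t + -(n:ℝ) = t - (n:ℝ) by ring] at this
      push_cast
      rw [show t + (-(n:ℝ) - 1) = t - (n:ℝ) - 1 by ring, ← h1, h2]

lemma lipschitzWith_of_periodic {f : ℝ → ℝ} {K : ℝ≥0} (hper : ∀ t, f (t + 1) = f t)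
    (hf : ∀ a b : ℝ, a ∈ Set.Icc (0:ℝ) 1 → b ∈ Set.Icc (0:ℝ) 1 →
      dist (f a) (f b) ≤ K * dist a b) : LipschitzWith K f := by
  have hZ := periodic_shift hper
  have main : ∀ m : ℕ, ∀ a b : ℝ, 0 ≤ a → a ≤ 1 → a ≤ b → b ≤ m + 1 →
      dist (f a) (f b) ≤ K * (b - a) := by
    intro m
    induction m with
    | zero =>
      intro a b ha ha1 hab hb
      have hb1 : b ≤ 1 := by simpa using hb
      have habd : dist a b = b - a := by
        rw [Real.dist_eq, abs_of_nonpos (by linarith : a - b ≤ 0)]; ring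
      have := hf a b ⟨ha, ha1⟩ ⟨le_trans ha hab, hb1⟩
      rwa [habd] at this
    | succ n ih =>
      intro a b ha ha1 hab hb
      by_cases h1 : b ≤ 1
      · have habd : dist a b = b - a := by
          rw [Real.dist_eq, abs_of_nonpos (by linarith : a - b ≤ 0)]; ring
        have := hf a b ⟨ha, ha1⟩ ⟨le_trans ha hab, h1⟩
        rwa [habd] at this
      · push_neg at h1
        have hb' : b - 1 ≤ (n:ℝ) + 1 := by
          push_cast at hb; linarith
        have h2 : dist (f 1) (f b) = dist (f 0) (f (b - 1)) := by
          have e1 : f 1 = f 0 := by simpa using hper 0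
          have e2 : f b = f (b - 1) := by
            have := hper (b - 1); rw [show b - 1 + 1 = b by ring] at this; exact this
          rw [e1, e2]
        have hstep1 : dist (f a) (f 1) ≤ K * (1 - a) := by
          have habd : dist a 1 = 1 - a := by
            rw [Real.dist_eq, abs_of_nonpos (by linarith : a - 1 ≤ 0)]; ring
          have := hf a 1 ⟨ha, ha1⟩ ⟨zero_le_one, le_refl 1⟩
          rwa [habd] at this
        calc dist (f a) (f b) ≤ dist (f a) (f 1) + dist (f 1) (f b) := dist_triangle _ _ _
          _ ≤ K * (1 - a) + K * (b - 1 - 0) := by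
              refine add_le_add hstep1 ?_
              rw [h2]
              exact ih 0 (b-1) le_rfl zero_le_one (by linarith) hb'
          _ = K * (b - a) := by ring
  refine LipschitzWith.of_dist_le_mul fun x y => ?_
  have symmcase : ∀ x y : ℝ, x ≤ y → dist (f x) (f y) ≤ K * dist x y := by
    intro x y hxy
    set n : ℤ := ⌊x⌋ with hn
    have hx' : f x = f (x - n) := by
      have := hZ n (x - n); rw [show x - (n:ℝ) + (n:ℝ) = x by ring] at this
      exact this
    have hy' : f y = f (y - n) := by
      have := hZ n (y - n); rw [show y - (n:ℝ) + (n:ℝ) = y by ring] at this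
      exact this
    have h0 : 0 ≤ x - n := sub_nonneg.mpr (Int.floor_le x)
    have h1 : x - n ≤ 1 := by have := Int.lt_floor_add_one x; linarith
    have hm : y - n ≤ (Nat.ceil (y - (n:ℝ)) : ℝ) + 1 := by
      have := Nat.le_ceil (y - (n:ℝ)); linarith
    have hxyd : dist x y = y - x := by
      rw [Real.dist_eq, abs_of_nonpos (by linarith : x - y ≤ 0)]; ring
    have := main (Nat.ceil (y - (n:ℝ))) (x - n) (y - n) h0 h1 (by linarith) hm
    rw [hx', hy', hxyd]
    calc dist (f (x-n)) (f (y-n)) ≤ K * ((y - n) - (x - n)) := this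
      _ = K * (y - x) := by ring
  rcases le_total x y with hxy | hxy
  · exact symmcase x y hxy
  · rw [dist_comm, dist_comm x y]; exact symmcase y x hxy

lemma bump_lipschitz {s : ℝ} (hs : 0 < s) (hs1 : s ≤ 1) :
    LipschitzWith (Real.toNNReal (π / s)) (bump s) := by
  have hps : 0 ≤ π / s := div_nonneg pi_pos.le hs.le
  set h : ℝ → ℝ := fun t => Real.sin (π / s * min t s) with hh
  have hsin : LipschitzWith 1 Real.sin := by
    refine lipschitzWith_of_nnnorm_deriv_le Real.differentiable_sin fun x => ?_
    rw [Real.deriv_sin]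
    have : ‖Real.cos x‖ ≤ 1 := by rw [Real.norm_eq_abs]; exact Real.abs_cos_le_one x
    exact_mod_cast this
  have l2 : LipschitzWith (Real.toNNReal (π / s)) (fun t : ℝ => π / s * min t s) := by
    refine LipschitzWith.of_dist_le_mul fun a b => ?_
    rw [Real.dist_eq, Real.dist_eq, ← mul_sub, abs_mul, abs_of_nonneg hps,
      Real.coe_toNNReal _ hps]
    refine mul_le_mul_of_nonneg_left ?_ hps
    have := abs_min_sub_min_le_max a s b s
    simpa using this
  have hlip : LipschitzWith (Real.toNNReal (π / s)) h := by
    have := hsin.comp l2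
    rwa [one_mul] at this
  have heq : ∀ t ∈ Set.Icc (0:ℝ) 1, bump s t = h t := by
    intro t ht
    rcases lt_or_eq_of_le ht.2 with h1 | h1
    · have : Int.fract t = t := Int.fract_eq_self.mpr ⟨ht.1, h1⟩
      rw [bump_eq_sin_min s t hs, this]
    · subst h1
      rw [bump_eq_sin_min s 1 hs, Int.fract_one]
      have h2 : min (0:ℝ) s = 0 := min_eq_left hs.le
      have h3 : min (1:ℝ) s = s := min_eq_right hs1
      rw [h2, mul_zero, Real.sin_zero, hh]
      show (0:ℝ) = Real.sin (π / s * min 1 s)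
      rw [h3, div_mul_cancel₀ _ (ne_of_gt hs), Real.sin_pi]
  refine lipschitzWith_of_periodic (fun t => ?_) (fun a b ha hb => ?_)
  · have e : (t + 1) = t + ((1:ℤ):ℝ) := by push_cast; ring
    rw [e]; exact bump_add_int s t 1
  · rw [heq a ha, heq b hb]; exact hlip.dist_le_mul a b

lemma lipschitz_mul_of_le_one {X : Type*} [PseudoMetricSpace X] {f g : X → ℝ} {Kf Kg : ℝ≥0}
    (hf : LipschitzWith Kf f) (hg : LipschitzWith Kg g)
    (hfb : ∀ x, |f x| ≤ 1) (hgb : ∀ x, |g x| ≤ 1) :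
    LipschitzWith (Kf + Kg) (fun x => f x * g x) := by
  refine LipschitzWith.of_dist_le_mul fun x y => ?_
  have h1 := hf.dist_le_mul x y
  have h2 := hg.dist_le_mul x y
  rw [Real.dist_eq] at h1 h2 ⊢
  have key : |f x * g x - f y * g y| ≤ |f x| * |g x - g y| + |g y| * |f x - f y| := by
    calc |f x * g x - f y * g y| = |f x * (g x - g y) + (f x - f y) * g y| := by ring_nf
      _ ≤ |f x * (g x - g y)| + |(f x - f y) * g y| := abs_add_le _ _
      _ = |f x| * |g x - g y| + |g y| * |f x - f y| := by rw [abs_mul, abs_mul]; ring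
  have e1 : |f x| * |g x - g y| ≤ |g x - g y| := mul_le_of_le_one_left (abs_nonneg _) (hfb x)
  have e2 : |g y| * |f x - f y| ≤ |f x - f y| := mul_le_of_le_one_left (abs_nonneg _) (hgb y)
  push_cast
  linarith

lemma lipschitz_finset_prod {X : Type*} [PseudoMetricSpace X] {ι : Type*}
    (F : ι → X → ℝ) (K : ℝ≥0) (hL : ∀ i, LipschitzWith K (F i)) (hb : ∀ i x, |F i x| ≤ 1)
    (A : Finset ι) :
    LipschitzWith (A.card * K) (fun x => ∏ i ∈ A, F i x) ∧ (∀ x, |∏ i ∈ A, F i x| ≤ 1) := by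
  induction A using Finset.cons_induction with
  | empty => constructor
             · simpa using LipschitzWith.const (1:ℝ)
             · intro x; simp
  | cons a A ha ih =>
    obtain ⟨ihL, ihb⟩ := ih
    constructor
    · have := lipschitz_mul_of_le_one (hL a) ihL (hb a) ihb
      have hc : ((Finset.cons a A ha).card : ℝ≥0) * K = K + A.card * K := by
        rw [Finset.card_cons]; push_cast; ring
      rw [hc]
      simpa [Finset.prod_cons] using this
    · intro x
      rw [Finset.prod_cons, abs_mul]
      calc |F a x| * |∏ i ∈ A, F i x| ≤ 1 * 1 :=
        mul_le_mul (hb a x) (ihb x) (abs_nonneg _) zero_le_one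
        _ = 1 := mul_one 1

lemma mem_unitCell {d : ℕ} (x : Fin d → ℝ) :
    x ∈ unitCell d ↔ ∀ i, 0 ≤ x i ∧ x i < 1 := by
  simp [unitCell, Set.mem_pi, Set.mem_Ico]

lemma measurableSet_unitCell (d : ℕ) : MeasurableSet (unitCell d) :=
  MeasurableSet.univ_pi fun _ => measurableSet_Ico

lemma volume_hyperplane {d : ℕ} (i : Fin d) (a : ℝ) :
    volume {x : Fin d → ℝ | x i = a} = 0 := by
  have : {x : Fin d → ℝ | x i = a} = Set.univ.pi
      (fun j => if j = i then ({a} : Set ℝ) else Set.univ) := by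
    ext x
    simp only [Set.mem_setOf_eq, Set.mem_pi, Set.mem_univ, forall_true_left]
    constructor
    · intro h j; by_cases hj : j = i <;> simp [hj, h]
    · intro h; have := h i; simpa using this
  rw [this, volume_pi_pi]
  refine Finset.prod_eq_zero (Finset.mem_univ i) ?_
  simp

lemma volume_unitCell (d : ℕ) : volume (unitCell d) = 1 := by
  rw [unitCell, volume_pi_pi]
  simp [Real.volume_Ico]

instance unitCell_finiteMeasure (d : ℕ) : IsFiniteMeasure (volume.restrict (unitCell d)) := by
  constructor
  rw [Measure.restrict_apply_univ, volume_unitCell]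
  exact ENNReal.one_lt_top

lemma integrableOn_cell_prod {d : ℕ} (f : Fin d → ℝ → ℝ) (hm : ∀ i, Measurable (f i))
    (C : ℝ) (hb : ∀ i t, |f i t| ≤ C) :
    IntegrableOn (fun x : Fin d → ℝ => ∏ i, f i (x i)) (unitCell d) := by
  have hmeas : Measurable (fun x : Fin d → ℝ => ∏ i, f i (x i)) :=
    Finset.measurable_prod _ fun i _ => (hm i).comp (measurable_pi_apply i)
  refine Integrable.mono' (integrable_const (C ^ d)) hmeas.aestronglyMeasurable ?_
  refine Filter.Eventually.of_forall fun x => ?_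
  rw [Real.norm_eq_abs, Finset.abs_prod]
  calc (∏ i, |f i (x i)|) ≤ ∏ _i : Fin d, C := Finset.prod_le_prod
        (fun i _ => abs_nonneg _) (fun i _ => hb i (x i))
    _ = C ^ d := by rw [Finset.prod_const, Finset.card_univ, Fintype.card_fin]

lemma integral_cell_prod {d : ℕ} (f : Fin d → ℝ → ℝ) :
    ∫ x in unitCell d, ∏ i, f i (x i) = ∏ i, ∫ t in Set.Ico (0:ℝ) 1, f i t := by
  rw [← integral_indicator (measurableSet_unitCell d)]
  have key : (unitCell d).indicator (fun x => ∏ i, f i (x i))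
      = fun x => ∏ i, (Set.Ico (0:ℝ) 1).indicator (f i) (x i) := by
    funext x
    by_cases hx : x ∈ unitCell d
    · rw [Set.indicator_of_mem hx]
      refine Finset.prod_congr rfl fun i _ => ?_
      rw [Set.indicator_of_mem (Set.mem_Ico.mpr ((mem_unitCell x).mp hx i))]
    · rw [Set.indicator_of_notMem hx]
      rw [mem_unitCell] at hx
      push_neg at hx
      obtain ⟨i, hi⟩ := hx
      refine (Finset.prod_eq_zero (Finset.mem_univ i) ?_).symm
      rw [Set.indicator_of_notMem]
      intro h
      exact absurd h.2 (not_lt.mpr (hi h.1))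
  rw [key]
  have := MeasureTheory.integral_fintype_prod_eq_prod (μ := fun _ => volume)
    (fun i => (Set.Ico (0:ℝ) 1).indicator (f i))
  simp only [volume_pi]
  rw [this]
  refine Finset.prod_congr rfl fun i _ => ?_
  rw [integral_indicator measurableSet_Ico]

lemma fract_shift_low {z t : ℝ} (hz1 : z ≤ 1) (ht0 : 0 ≤ t) (htz : t < z) :
    Int.fract (t - z) = t - z + 1 := by
  have h1 := Int.fract_add_intCast (t - z + 1) (-1)
  have e : t - z + 1 + ((-1:ℤ):ℝ) = t - z := by push_cast; ring
  rw [e] at h1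
  rw [h1, Int.fract_eq_self.mpr ⟨by linarith, by linarith⟩]

lemma bump_shift_eq {s z : ℝ} (hs : 0 < s) (hz : 0 ≤ z) (hzs : z + s ≤ 1) :
    ∀ t ∈ Set.Ico (0:ℝ) 1, bump s (t - z)
      = if z < t ∧ t < z + s then Real.sin (π * (t - z) / s) else 0 := by
  have hs1 : s ≤ 1 := by linarith
  intro t ht
  obtain ⟨ht0, ht1⟩ := ht
  by_cases h : z < t ∧ t < z + s
  · have hf : Int.fract (t - z) = t - z :=
      Int.fract_eq_self.mpr ⟨by linarith [h.1], by linarith [h.2]⟩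
    rw [if_pos h, bump, hf, if_pos (by linarith [h.2])]
  · rw [if_neg h]
    rcases lt_trichotomy t z with hlt | heq | hgt
    · have hf : Int.fract (t - z) = t - z + 1 := fract_shift_low (by linarith) ht0 hlt
      have hge : s ≤ Int.fract (t - z) := by rw [hf]; linarith
      rw [bump]
      split_ifs with h2
      · have : Int.fract (t - z) = s := le_antisymm h2 hge
        rw [this, mul_div_assoc, div_self (ne_of_gt hs), mul_one, Real.sin_pi]
      · rfl
    · subst heq
      simp [bump, Int.fract_zero, hs.le]
    · have hts : z + s ≤ t := by
        by_contra hc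
        push_neg at hc
        exact h ⟨hgt, hc⟩
      have hf : Int.fract (t - z) = t - z :=
        Int.fract_eq_self.mpr ⟨by linarith, by linarith⟩
      have hge : s ≤ Int.fract (t - z) := by rw [hf]; linarith
      rw [bump]
      split_ifs with h2
      · have : Int.fract (t - z) = s := le_antisymm h2 hge
        rw [this, mul_div_assoc, div_self (ne_of_gt hs), mul_one, Real.sin_pi]
      · rfl

lemma cbump_shift_eq {s z : ℝ} (hs : 0 < s) (hz : 0 ≤ z) (hzs : z + s ≤ 1) :
    ∀ t ∈ Set.Ico (0:ℝ) 1, t ≠ z → cbump s (t - z)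
      = if z < t ∧ t < z + s then π / s * Real.cos (π * (t - z) / s) else 0 := by
  have hs1 : s ≤ 1 := by linarith
  intro t ht htz
  obtain ⟨ht0, ht1⟩ := ht
  by_cases h : z < t ∧ t < z + s
  · have hf : Int.fract (t - z) = t - z :=
      Int.fract_eq_self.mpr ⟨by linarith [h.1], by linarith [h.2]⟩
    rw [if_pos h, cbump, hf, if_pos (by linarith [h.2])]
  · rw [if_neg h]
    rcases lt_trichotomy t z with hlt | heq | hgt
    · have hf : Int.fract (t - z) = t - z + 1 := fract_shift_low (by linarith) ht0 hlt
      have hge : s ≤ Int.fract (t - z) := by rw [hf]; linarith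
      rw [cbump, if_neg (not_lt.mpr hge)]
    · exact absurd heq htz
    · have hts : z + s ≤ t := by
        by_contra hc
        push_neg at hc
        exact h ⟨hgt, hc⟩
      have hf : Int.fract (t - z) = t - z :=
        Int.fract_eq_self.mpr ⟨by linarith, by linarith⟩
      have hge : s ≤ Int.fract (t - z) := by rw [hf]; linarith
      rw [cbump, if_neg (not_lt.mpr hge)]

lemma integral_sin_sq_ioo (s z : ℝ) (hs : 0 < s) :
    ∫ t in Set.Ioo z (z + s), Real.sin (π * (t - z) / s) ^ 2 = s / 2 := by
  have hπ : (π : ℝ) ≠ 0 := ne_of_gt pi_pos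
  have hF : ∀ t ∈ Set.uIcc z (z + s), HasDerivAt
      (fun t => (t - z) / 2 - s / (4 * π) * Real.sin (2 * π * (t - z) / s))
      (Real.sin (π * (t - z) / s) ^ 2) t := by
    intro t _
    have h1 : HasDerivAt (fun t : ℝ => (t - z) / 2) (1 / 2) t := by
      simpa using ((hasDerivAt_id t).sub_const z).div_const 2
    have h2 : HasDerivAt (fun t : ℝ => 2 * π * (t - z) / s) (2 * π / s) t := by
      have := (((hasDerivAt_id t).sub_const z).const_mul (2 * π)).div_const s
      simpa using this
    have h3 := h2.sin
    have h4 := h3.const_mul (s / (4 * π))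
    have h5 := h1.sub h4
    refine h5.congr_deriv ?_
    rw [Real.sin_sq, Real.cos_sq]
    have harg : 2 * (π * (t - z) / s) = 2 * π * (t - z) / s := by ring
    rw [harg]
    field_simp
    ring
  have hcont : Continuous fun t => Real.sin (π * (t - z) / s) ^ 2 := by
    continuity
  have := intervalIntegral.integral_eq_sub_of_hasDerivAt hF
    (hcont.intervalIntegrable z (z + s))
  rw [intervalIntegral.integral_of_le (by linarith : z ≤ z + s),
    integral_Ioc_eq_integral_Ioo] at this
  rw [this]
  have e1 : 2 * π * (z + s - z) / s = 2 * π := by field_simp; ring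
  rw [e1]
  simp [Real.sin_two_pi]

lemma integral_cos_sq_ioo (s z : ℝ) (hs : 0 < s) :
    ∫ t in Set.Ioo z (z + s), (π / s * Real.cos (π * (t - z) / s)) ^ 2 = π ^ 2 / (2 * s) := by
  have hπ : (π : ℝ) ≠ 0 := ne_of_gt pi_pos
  have hF : ∀ t ∈ Set.uIcc z (z + s), HasDerivAt
      (fun t => (t - z) / 2 + s / (4 * π) * Real.sin (2 * π * (t - z) / s))
      (Real.cos (π * (t - z) / s) ^ 2) t := by
    intro t _
    have h1 : HasDerivAt (fun t : ℝ => (t - z) / 2) (1 / 2) t := by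
      simpa using ((hasDerivAt_id t).sub_const z).div_const 2
    have h2 : HasDerivAt (fun t : ℝ => 2 * π * (t - z) / s) (2 * π / s) t := by
      have := (((hasDerivAt_id t).sub_const z).const_mul (2 * π)).div_const s
      simpa using this
    have h4 := (h2.sin).const_mul (s / (4 * π))
    have h5 := h1.add h4
    refine h5.congr_deriv ?_
    rw [Real.cos_sq]
    have harg : 2 * (π * (t - z) / s) = 2 * π * (t - z) / s := by ring
    rw [harg]
    field_simp
    ring
  have hcont : Continuous fun t => Real.cos (π * (t - z) / s) ^ 2 := by
    continuity
  have key := intervalIntegral.integral_eq_sub_of_hasDerivAt hF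
    (hcont.intervalIntegrable z (z + s))
  rw [intervalIntegral.integral_of_le (by linarith : z ≤ z + s),
    integral_Ioc_eq_integral_Ioo] at key
  have e1 : 2 * π * (z + s - z) / s = 2 * π := by field_simp; ring
  rw [e1] at key
  simp [Real.sin_two_pi] at key
  have : ∫ t in Set.Ioo z (z + s), (π / s * Real.cos (π * (t - z) / s)) ^ 2
      = (π / s) ^ 2 * ∫ t in Set.Ioo z (z + s), Real.cos (π * (t - z) / s) ^ 2 := by
    rw [← integral_const_mul]
    refine integral_congr_ae (Filter.Eventually.of_forall fun t => ?_)
    ring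
  rw [this, key]
  field_simp

lemma integral_bump_sq {s z : ℝ} (hs : 0 < s) (hz : 0 ≤ z) (hzs : z + s ≤ 1) :
    ∫ t in Set.Ico (0:ℝ) 1, (bump s (t - z))^2 = s / 2 := by
  have h1 : ∀ t ∈ Set.Ico (0:ℝ) 1, (bump s (t - z))^2
      = (Set.Ioo z (z+s)).indicator (fun t => Real.sin (π * (t - z)/s)^2) t := by
    intro t ht
    rw [bump_shift_eq hs hz hzs t ht, Set.indicator_apply]
    by_cases h : z < t ∧ t < z + s
    · rw [if_pos h, if_pos (Set.mem_Ioo.mpr h)]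
    · rw [if_neg h, if_neg (fun hc => h (Set.mem_Ioo.mp hc))]
      norm_num
  rw [setIntegral_congr_fun measurableSet_Ico h1,
    setIntegral_indicator measurableSet_Ioo,
    Set.inter_eq_self_of_subset_right
      (fun t ht => Set.mem_Ico.mpr ⟨by linarith [Set.mem_Ioo.mp ht |>.1],
        by linarith [Set.mem_Ioo.mp ht |>.2]⟩)]
  exact integral_sin_sq_ioo s z hs

lemma integral_cbump_sq {s z : ℝ} (hs : 0 < s) (hz : 0 ≤ z) (hzs : z + s ≤ 1) :
    ∫ t in Set.Ico (0:ℝ) 1, (cbump s (t - z))^2 = π ^ 2 / (2 * s) := by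
  have hznull : ∀ᵐ t : ℝ, t ≠ z := by
    have h0 : volume ({z} : Set ℝ) = 0 := volume_singleton
    have := MeasureTheory.measure_eq_zero_iff_ae_notMem.mp h0
    filter_upwards [this] with t ht
    simpa using ht
  have h1 : ∀ᵐ t : ℝ, t ∈ Set.Ico (0:ℝ) 1 → (cbump s (t - z))^2
      = (Set.Ioo z (z+s)).indicator (fun t => (π / s * Real.cos (π * (t - z)/s))^2) t := by
    filter_upwards [hznull] with t htz ht
    rw [cbump_shift_eq hs hz hzs t ht htz, Set.indicator_apply]
    by_cases h : z < t ∧ t < z + s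
    · rw [if_pos h, if_pos (Set.mem_Ioo.mpr h)]
    · rw [if_neg h, if_neg (fun hc => h (Set.mem_Ioo.mp hc))]
      norm_num
  rw [setIntegral_congr_ae measurableSet_Ico h1,
    setIntegral_indicator measurableSet_Ioo,
    Set.inter_eq_self_of_subset_right
      (fun t ht => Set.mem_Ico.mpr ⟨by linarith [Set.mem_Ioo.mp ht |>.1],
        by linarith [Set.mem_Ioo.mp ht |>.2]⟩)]
  exact integral_cos_sq_ioo s z hs

/-- Remark 2.5 of the paper: for an open cube `Q = z + (0,s)^d ⊆ [0,1)^d`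
on which `V = α` a.e., the periodic function `u(x) = ∏ᵢ sin(π(xᵢ - zᵢ)/s)` on `Q`, `0` off
`Q`, is Lipschitz, nonzero, and satisfies `|||u|||² = (α + dπ²/s²) ‖u‖²`; in particular
`‖u‖² ≥ s²/(dπ² + αs²) |||u|||²`, so the lower energy bound is sharp for `s = εL`. -/
theorem statement2 (d : ℕ) (hd : 1 ≤ d) (ε α β s : ℝ) (V : (Fin d → ℝ) → ℝ)
    (z : Fin d → ℝ)
    (hε : 0 < ε) (hεN : ∃ n : ℕ, 0 < n ∧ ε * n = 1)
    (hα : 0 ≤ α) (hαβ : α ≤ β) (hV : IsGridPotential ε α β V)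
    (hs : 0 < s)
    (hQsub : ∀ i, 0 ≤ z i ∧ z i + s ≤ 1)
    (hVα : ∀ᵐ x : Fin d → ℝ, (∀ i, z i < x i ∧ x i < z i + s) → V x = α) :
    ∀ u : (Fin d → ℝ) → ℝ, u = (fun x => ∏ i, bump s (x i - z i)) →
      ZPeriodic u ∧ (∃ K : NNReal, LipschitzWith K u) ∧ u ≠ 0 ∧
        energySq V u = (α + d * π ^ 2 / s ^ 2) * l2sq u ∧
        s ^ 2 / (d * π ^ 2 + α * s ^ 2) * energySq V u ≤ l2sq u := by
  intro u hu
  subst hu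
  have hπ : (0:ℝ) < π := pi_pos
  have hs0 : s ≠ 0 := ne_of_gt hs
  have hs1 : s ≤ 1 := by
    have h1 := (hQsub ⟨0, hd⟩).1
    have h2 := (hQsub ⟨0, hd⟩).2
    linarith
  -- squared L² norm
  have hl2 : l2sq (fun x : Fin d → ℝ => ∏ i, bump s (x i - z i)) = (s/2)^d := by
    rw [l2sq]
    have e : ∀ x : Fin d → ℝ, ((fun x : Fin d → ℝ => ∏ i, bump s (x i - z i)) x)^2
        = ∏ i, (fun t => (bump s (t - z i))^2) (x i) := by
      intro x
      simp only
      rw [← Finset.prod_pow]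
    simp only [e]
    rw [integral_cell_prod (fun i t => (bump s (t - z i))^2)]
    have e2 : ∀ i : Fin d, (∫ t in Set.Ico (0:ℝ) 1, (bump s (t - z i))^2) = s / 2 :=
      fun i => integral_bump_sq hs (hQsub i).1 (hQsub i).2
    simp only [e2]
    rw [Finset.prod_const, Finset.card_univ, Fintype.card_fin]
  -- energy
  have hen : energySq V (fun x : Fin d → ℝ => ∏ i, bump s (x i - z i))
      = (d:ℝ) * (π^2/(2*s)) * (s/2)^(d-1) + α * (s/2)^d := by
    classical
    set g : Fin d → Fin d → ℝ → ℝ :=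
      fun i j t => if j = i then (cbump s (t - z j))^2 else (bump s (t - z j))^2 with hg
    have hNN : ∀ᵐ x : Fin d → ℝ, ∀ i, x i ≠ 0 ∧ x i ≠ z i ∧ x i ≠ z i + s := by
      rw [MeasureTheory.ae_all_iff]
      intro i
      have h1 := MeasureTheory.measure_eq_zero_iff_ae_notMem.mp (volume_hyperplane i (0:ℝ))
      have h2 := MeasureTheory.measure_eq_zero_iff_ae_notMem.mp (volume_hyperplane i (z i))
      have h3 := MeasureTheory.measure_eq_zero_iff_ae_notMem.mp (volume_hyperplane i (z i + s))
      filter_upwards [h1, h2, h3] with x hx1 hx2 hx3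
      exact ⟨hx1, hx2, hx3⟩
    have hae : (fun x => gradSq (fun x : Fin d → ℝ => ∏ i, bump s (x i - z i)) x
          + V x * ((fun x : Fin d → ℝ => ∏ i, bump s (x i - z i)) x) ^ 2)
        =ᵐ[volume.restrict (unitCell d)]
        (fun x => (∑ i, ∏ j, g i j (x j)) + α * ∏ j, (bump s (x j - z j))^2) := by
      refine (MeasureTheory.ae_restrict_iff' (measurableSet_unitCell d)).mpr ?_
      filter_upwards [hVα, hNN] with x hVx hxN hxcell
      by_cases hxQ : ∀ i, z i < x i ∧ x i < z i + s
      · -- x inside the open cube Q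
        have hVxα : V x = α := hVx hxQ
        have hQopen : IsOpen {y : Fin d → ℝ | ∀ i, z i < y i ∧ y i < z i + s} := by
          have e : {y : Fin d → ℝ | ∀ i, z i < y i ∧ y i < z i + s}
              = Set.univ.pi (fun i => Set.Ioo (z i) (z i + s)) := by
            ext y; simp [Set.mem_pi, Set.mem_Ioo]
          rw [e]
          exact isOpen_set_pi Set.finite_univ (fun i _ => isOpen_Ioo)
        have hQeq : ∀ y ∈ {y : Fin d → ℝ | ∀ i, z i < y i ∧ y i < z i + s},
            (∏ i, bump s (y i - z i)) = ∏ i, Real.sin (π / s * (y i - z i)) := by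
          intro y hy
          refine Finset.prod_congr rfl fun i _ => ?_
          have h1 : Int.fract (y i - z i) = y i - z i :=
            Int.fract_eq_self.mpr ⟨by linarith [(hy i).1], by linarith [(hy i).2]⟩
          rw [bump, h1, if_pos (by linarith [(hy i).2] : y i - z i ≤ s),
            show π * (y i - z i) / s = π / s * (y i - z i) from by ring]
        have hfeq : (fun x : Fin d → ℝ => ∏ i, bump s (x i - z i))
            =ᶠ[nhds x] (fun y => ∏ i, Real.sin (π / s * (y i - z i))) :=
          Filter.eventuallyEq_of_mem (hQopen.mem_nhds hxQ) hQeq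
        have hD : ∀ i : Fin d, HasFDerivAt
            (fun y : Fin d → ℝ => Real.sin (π / s * (y i - z i)))
            (Real.cos (π / s * (x i - z i)) • ((π / s) •
              (ContinuousLinearMap.proj i : (Fin d → ℝ) →L[ℝ] ℝ))) x := by
          intro i
          have hproj : HasFDerivAt (fun y : Fin d → ℝ => y i)
              (ContinuousLinearMap.proj i : (Fin d → ℝ) →L[ℝ] ℝ) x :=
            hasFDerivAt_apply i x
          have h1 := (hproj.sub_const (z i)).const_mul (π / s)
          exact h1.sin
        have hprod := HasFDerivAt.finset_prod (u := (Finset.univ : Finset (Fin d)))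
          (fun i _ => hD i)
        have hfd : fderiv ℝ (fun x : Fin d → ℝ => ∏ i, bump s (x i - z i)) x
            = ∑ i, (∏ l ∈ Finset.univ.erase i, Real.sin (π / s * (x l - z l))) •
              (Real.cos (π / s * (x i - z i)) • ((π / s) •
                (ContinuousLinearMap.proj i : (Fin d → ℝ) →L[ℝ] ℝ))) := by
          rw [hfeq.fderiv_eq]
          exact hprod.fderiv
        have heval : ∀ i : Fin d,
            fderiv ℝ (fun x : Fin d → ℝ => ∏ i, bump s (x i - z i)) x (Pi.single i 1)
            = (∏ l ∈ Finset.univ.erase i, Real.sin (π / s * (x l - z l))) *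
              (Real.cos (π / s * (x i - z i)) * (π / s)) := by
          intro i
          rw [hfd, ContinuousLinearMap.sum_apply]
          have hterm : ∀ j : Fin d,
              ((∏ l ∈ Finset.univ.erase j, Real.sin (π / s * (x l - z l))) •
              (Real.cos (π / s * (x j - z j)) • ((π / s) •
                (ContinuousLinearMap.proj j : (Fin d → ℝ) →L[ℝ] ℝ)))) (Pi.single i 1)
              = if j = i then (∏ l ∈ Finset.univ.erase j, Real.sin (π / s * (x l - z l))) *
                  (Real.cos (π / s * (x j - z j)) * (π / s)) else 0 := by
            intro j
            rw [ContinuousLinearMap.smul_apply, ContinuousLinearMap.smul_apply,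
              ContinuousLinearMap.smul_apply, ContinuousLinearMap.proj_apply,
              Pi.single_apply]
            by_cases h : j = i
            · rw [if_pos h, if_pos h]
              simp only [smul_eq_mul]
              ring
            · rw [if_neg h, if_neg h]
              simp
          rw [Finset.sum_congr rfl (fun j _ => hterm j),
            Finset.sum_ite_eq' Finset.univ i, if_pos (Finset.mem_univ i)]
        have husq : ((∏ i, bump s (x i - z i)))^2 = ∏ j, (bump s (x j - z j))^2 := by
          rw [Finset.prod_pow]
        have hRHSi : ∀ i : Fin d, (∏ j, g i j (x j))
            = ((∏ l ∈ Finset.univ.erase i, Real.sin (π / s * (x l - z l))) *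
              (Real.cos (π / s * (x i - z i)) * (π / s)))^2 := by
          intro i
          rw [← Finset.mul_prod_erase _ _ (Finset.mem_univ i)]
          have hgi : g i i (x i) = (π / s * Real.cos (π / s * (x i - z i)))^2 := by
            show (if i = i then (cbump s (x i - z i))^2 else (bump s (x i - z i))^2)
                = (π / s * Real.cos (π / s * (x i - z i)))^2
            rw [if_pos rfl]
            have hf : Int.fract (x i - z i) = x i - z i :=
              Int.fract_eq_self.mpr ⟨by linarith [(hxQ i).1], by linarith [(hxQ i).2]⟩
            rw [cbump, hf, if_pos (by linarith [(hxQ i).2] : x i - z i < s),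
              show π * (x i - z i) / s = π / s * (x i - z i) from by ring]
          have hgj : ∀ j ∈ Finset.univ.erase i,
              g i j (x j) = (Real.sin (π / s * (x j - z j)))^2 := by
            intro j hj
            show (if j = i then (cbump s (x j - z j))^2 else (bump s (x j - z j))^2)
                = (Real.sin (π / s * (x j - z j)))^2
            rw [if_neg (Finset.ne_of_mem_erase hj)]
            have hf : Int.fract (x j - z j) = x j - z j :=
              Int.fract_eq_self.mpr ⟨by linarith [(hxQ j).1], by linarith [(hxQ j).2]⟩
            rw [bump, hf, if_pos (by linarith [(hxQ j).2] : x j - z j ≤ s),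
              show π * (x j - z j) / s = π / s * (x j - z j) from by ring]
          rw [hgi, Finset.prod_congr rfl hgj, Finset.prod_pow]
          ring
        rw [gradSq, hVxα, husq]
        rw [Finset.sum_congr rfl (fun i _ => by rw [heval i]),
          Finset.sum_congr rfl (fun i _ => (hRHSi i).symm)]
      · -- x outside Q : everything vanishes
        rw [not_forall] at hxQ
        obtain ⟨i, hi⟩ := hxQ
        obtain ⟨hx0, hxz, hxzs⟩ := hxN i
        have hxcell_i := (mem_unitCell x).mp hxcell i
        have hk : ∃ k : ℤ, z i + k + s < x i ∧ x i < z i + k + 1 := by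
          rcases lt_trichotomy (x i) (z i) with hlt | heq | hgt
          · refine ⟨-1, ?_, ?_⟩
            · have hxi : 0 < x i := lt_of_le_of_ne hxcell_i.1 (Ne.symm hx0)
              have := (hQsub i).2
              push_cast
              linarith
            · push_cast
              linarith
          · exact absurd heq hxz
          · have hges : z i + s < x i := by
              rcases not_and_or.mp hi with h | h
              · exact absurd hgt h
              · push_neg at h
                exact lt_of_le_of_ne h (Ne.symm hxzs)
            refine ⟨0, ?_, ?_⟩
            · push_cast; linarith
            · have := (hQsub i).1
              push_cast
              linarith [hxcell_i.2]
        obtain ⟨k, hk1, hk2⟩ := hk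
        have hfract : ∀ y : Fin d → ℝ, z i + k + s < y i → y i < z i + k + 1 →
            Int.fract (y i - z i) = y i - z i - k := by
          intro y hy1 hy2
          have h1 := Int.fract_add_intCast (y i - z i - k) k
          rw [show y i - z i - (k:ℝ) + (k:ℝ) = y i - z i from by ring] at h1
          rw [h1]
          exact Int.fract_eq_self.mpr ⟨by linarith, by linarith⟩
        have hSopen : IsOpen ((fun y : Fin d → ℝ => y i) ⁻¹'
            Set.Ioo (z i + k + s) (z i + k + 1)) :=
          (continuous_apply i).isOpen_preimage _ isOpen_Ioo
        have hxS : x ∈ (fun y : Fin d → ℝ => y i) ⁻¹' Set.Ioo (z i + k + s) (z i + k + 1) :=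
          Set.mem_preimage.mpr (Set.mem_Ioo.mpr ⟨hk1, hk2⟩)
        have hbump0 : ∀ y ∈ (fun y : Fin d → ℝ => y i) ⁻¹'
            Set.Ioo (z i + k + s) (z i + k + 1), bump s (y i - z i) = 0 := by
          intro y hy
          obtain ⟨hy1, hy2⟩ := Set.mem_Ioo.mp (Set.mem_preimage.mp hy)
          rw [bump, hfract y hy1 hy2, if_neg (not_le.mpr (by linarith : s < y i - z i - k))]
        have hu0 : ∀ y ∈ (fun y : Fin d → ℝ => y i) ⁻¹'
            Set.Ioo (z i + k + s) (z i + k + 1), (∏ j, bump s (y j - z j)) = 0 := by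
          intro y hy
          exact Finset.prod_eq_zero (Finset.mem_univ i) (hbump0 y hy)
        have hfeq0 : (fun x : Fin d → ℝ => ∏ j, bump s (x j - z j))
            =ᶠ[nhds x] (fun _ => (0:ℝ)) :=
          Filter.eventuallyEq_of_mem (hSopen.mem_nhds hxS) hu0
        have hfd0 : fderiv ℝ (fun x : Fin d → ℝ => ∏ j, bump s (x j - z j)) x = 0 := by
          rw [hfeq0.fderiv_eq]
          exact fderiv_const_apply 0
        have hux : (∏ j, bump s (x j - z j)) = 0 := hu0 x hxS
        have hbx : bump s (x i - z i) = 0 := hbump0 x hxS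
        have hcbx : cbump s (x i - z i) = 0 := by
          rw [cbump, hfract x hk1 hk2, if_neg (not_lt.mpr (by linarith : s ≤ x i - z i - k))]
        have hterm0 : ∀ i' : Fin d, (∏ j, g i' j (x j)) = 0 := by
          intro i'
          refine Finset.prod_eq_zero (Finset.mem_univ i) ?_
          rw [hg]
          by_cases h : i = i'
          · simp only [if_pos h, hcbx]
            norm_num
          · simp only [if_neg h, hbx]
            norm_num
        rw [gradSq, hfd0, hux]
        rw [Finset.sum_congr rfl (fun i' _ => hterm0 i')]
        have hprod0 : (∏ j, (bump s (x j - z j))^2) = 0 :=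
          Finset.prod_eq_zero (Finset.mem_univ i) (by simp [hbx])
        rw [hprod0]
        simp
    -- now compute the integral
    have hmeasg : ∀ i j : Fin d, Measurable (g i j) := by
      intro i j
      rw [hg]
      by_cases h : j = i
      · simp only [if_pos h]
        exact ((cbump_measurable s).comp (measurable_id.sub_const (z j))).pow_const 2
      · simp only [if_neg h]
        exact ((bump_measurable s).comp (measurable_id.sub_const (z j))).pow_const 2
    have hboundg : ∀ i j : Fin d, ∀ t, |g i j t| ≤ 1 + (π/s)^2 := by
      intro i j t
      have hps : 0 ≤ π / s := div_nonneg pi_pos.le hs.le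
      rw [hg]
      by_cases h : j = i
      · simp only [if_pos h]
        rw [abs_pow]
        have := abs_cbump_le s (t - z j) hs
        nlinarith [abs_nonneg (cbump s (t - z j))]
      · simp only [if_neg h]
        rw [abs_pow]
        have := abs_bump_le_one s (t - z j) hs
        nlinarith [abs_nonneg (bump s (t - z j))]
    have hInt1 : ∀ i : Fin d, IntegrableOn
        (fun x : Fin d → ℝ => ∏ j, g i j (x j)) (unitCell d) := by
      intro i
      exact integrableOn_cell_prod (g i) (hmeasg i) (1 + (π/s)^2) (hboundg i)
    have hInt2 : IntegrableOn
        (fun x : Fin d → ℝ => ∏ j, (bump s (x j - z j))^2) (unitCell d) := by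
      refine integrableOn_cell_prod (fun j t => (bump s (t - z j))^2)
        (fun j => ((bump_measurable s).comp (measurable_id.sub_const (z j))).pow_const 2)
        1 (fun j t => ?_)
      rw [abs_pow]
      have := abs_bump_le_one s (t - z j) hs
      nlinarith [abs_nonneg (bump s (t - z j))]
    rw [energySq, integral_congr_ae hae]
    rw [integral_add (integrable_finset_sum Finset.univ (fun i _ => hInt1 i))
      (hInt2.const_mul α)]
    rw [integral_finset_sum Finset.univ (fun i _ => hInt1 i)]
    rw [integral_const_mul]
    have hP : ∀ i : Fin d, (∫ x in unitCell d, ∏ j, g i j (x j))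
        = π^2/(2*s) * (s/2)^(d-1) := by
      intro i
      rw [integral_cell_prod (g i)]
      have e : ∀ j : Fin d, (∫ t in Set.Ico (0:ℝ) 1, g i j t)
          = if j = i then π^2/(2*s) else (s/2) := by
        intro j
        by_cases h : j = i
        · simp only [hg, if_pos h]
          rw [integral_cbump_sq hs (hQsub j).1 (hQsub j).2]
        · simp only [hg, if_neg h]
          rw [integral_bump_sq hs (hQsub j).1 (hQsub j).2]
      rw [Finset.prod_congr rfl (fun j _ => e j)]
      rw [← Finset.mul_prod_erase _ _ (Finset.mem_univ i), if_pos rfl]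
      rw [Finset.prod_congr rfl (fun j hj => if_neg (Finset.ne_of_mem_erase hj))]
      rw [Finset.prod_const, Finset.card_erase_of_mem (Finset.mem_univ i),
        Finset.card_univ, Fintype.card_fin]
    rw [Finset.sum_congr rfl (fun i _ => hP i), Finset.sum_const,
      Finset.card_univ, Fintype.card_fin]
    have hB : (∫ x in unitCell d, ∏ j, (bump s (x j - z j))^2) = (s/2)^d := by
      rw [integral_cell_prod (fun j t => (bump s (t - z j))^2)]
      rw [Finset.prod_congr rfl (fun j _ =>
        integral_bump_sq hs (hQsub j).1 (hQsub j).2),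
        Finset.prod_const, Finset.card_univ, Fintype.card_fin]
    rw [hB, nsmul_eq_mul]
    ring
  -- identity form
  have hident : energySq V (fun x : Fin d → ℝ => ∏ i, bump s (x i - z i))
      = (α + (d:ℝ) * π ^ 2 / s ^ 2) * l2sq (fun x : Fin d → ℝ => ∏ i, bump s (x i - z i)) := by
    rw [hen, hl2]
    have hpow : (s/2)^d = (s/2)^(d-1) * (s/2) := by
      conv_lhs => rw [show d = (d-1)+1 from (Nat.succ_pred_eq_of_pos hd).symm]
      rw [pow_succ]
    rw [hpow]
    field_simp
    ring
  -- periodicity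
  have hper : ZPeriodic (fun x : Fin d → ℝ => ∏ i, bump s (x i - z i)) := by
    intro x k
    refine Finset.prod_congr rfl fun i _ => ?_
    have e : (x + fun j => ((k j : ℤ):ℝ)) i - z i = (x i - z i) + ((k i : ℤ):ℝ) := by
      simp [Pi.add_apply]; ring
    rw [e, bump_add_int]
  refine ⟨hper, ?_, ?_, hident, ?_⟩
  -- Lipschitz
  · refine ⟨(Finset.univ : Finset (Fin d)).card * Real.toNNReal (π / s), ?_⟩
    refine (lipschitz_finset_prod (fun i (x : Fin d → ℝ) => bump s (x i - z i))
      (Real.toNNReal (π / s)) ?_ ?_ Finset.univ).1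
    · intro i
      have hcoord : LipschitzWith 1 (fun x : Fin d → ℝ => x i - z i) := by
        refine LipschitzWith.of_dist_le_mul fun x y => ?_
        have := (LipschitzWith.eval (i := i) (α := fun _ : Fin d => ℝ)).dist_le_mul x y
        simpa [Real.dist_eq] using this
      have := (bump_lipschitz hs hs1).comp hcoord
      rw [mul_one] at this
      exact this
    · intro i x
      exact abs_bump_le_one s _ hs
  -- nonzero
  · intro hzero
    have hx0 := congrFun hzero (fun i => z i + s / 2)
    simp only [Pi.zero_apply] at hx0
    have hone : ∀ i : Fin d, bump s ((fun i => z i + s / 2) i - z i) = 1 := by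
      intro i
      have e : (fun i => z i + s / 2) i - z i = s / 2 := by ring
      rw [e, bump]
      have hf : Int.fract (s / 2) = s / 2 :=
        Int.fract_eq_self.mpr ⟨by linarith, by linarith⟩
      rw [hf, if_pos (by linarith)]
      rw [show π * (s / 2) / s = π / 2 by field_simp]
      exact Real.sin_pi_div_two
    rw [Finset.prod_congr rfl (fun i _ => hone i), Finset.prod_const_one] at hx0
    exact one_ne_zero hx0
  -- inequality
  · rw [hident]
    have hpos : 0 < (d:ℝ) * π^2 + α * s^2 := by
      have h1 : (0:ℝ) < (d:ℝ) * π ^ 2 := by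
        have hd0 : (0:ℝ) < (d:ℝ) := by exact_mod_cast lt_of_lt_of_le Nat.zero_lt_one hd
        positivity
      have h2 : 0 ≤ α * s^2 := mul_nonneg hα (sq_nonneg s)
      linarith
    have heq : s ^ 2 / ((d:ℝ) * π ^ 2 + α * s ^ 2) *
        ((α + (d:ℝ) * π ^ 2 / s ^ 2) * l2sq (fun x : Fin d → ℝ => ∏ i, bump s (x i - z i)))
        = l2sq (fun x : Fin d → ℝ => ∏ i, bump s (x i - z i)) := by
      field_simp
      ring
    exact le_of_eq heq


end
end

section
/- Let H be a real Hilbert space, let (V_i)_{i∈I} be a finite family of closed subspaces of H with orthogonal projections P_i : H → H onto V_i, and set P := Σ_{i∈I} P_i. Assume: (i) there is K₁ > 0 such that every u ∈ H admits a decomposition u = Σ_{i∈I} u_i with u_i ∈ V_i and Σ_{i∈I} ‖u_i‖² ≤ K₁ ‖u‖²; (ii) there is K₂ > 0 such that for every choice of u_i ∈ V_i one has ‖Σ_{i∈I} u_i‖² ≤ K₂ Σ_{i∈I} ‖u_i‖². Then K₁^{-1} ‖v‖² ≤ ⟨P v, v⟩ ≤ K₂ ‖v‖² for all v ∈ H.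 (Corollary 3.3 of the paper: spectral equivalence of the additive Schwarz operator.) -/
open scoped RealInnerProductSpace BigOperators

/-!
Since `P i v` is the orthogonal projection of `v` onto `V i`, `⟪P v, v⟫ = Σ ‖P i v‖²`.
Lower bound: for a stable decomposition `v = Σ uᵢ`, `‖v‖² = Σ ⟪P i v, uᵢ⟫`, and Cauchy–Schwarz
gives `‖v‖⁴ ≤ ⟪P v, v⟫ · K₁ ‖v‖²`. Upper bound: `⟪P v, v⟫² ≤ ‖P v‖² ‖v‖² ≤ K₂ ⟪P v, v⟫ ‖v‖²`.
-/

theorem le_of_sq_le_mul {α : Type*} [Semiring α] [LinearOrder α] [IsStrictOrderedRing α]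
    {a b : α} (ha : 0 ≤ a) (hb : 0 ≤ b) (h : a ^ 2 ≤ a * b) : a ≤ b := by
  rcases ha.eq_or_lt with rfl | ha
  · exact hb
  · exact le_of_mul_le_mul_left (by rwa [← sq]) ha

section Projection

variable {H : Type*} [NormedAddCommGroup H] [InnerProductSpace ℝ H]
  {I : Type*} [Fintype I] {V : I → Submodule ℝ H} {x : I → H} {v : H}

theorem real_inner_eq_norm_sq_of_forall_inner_eq {W : Submodule ℝ H} {y : H} (hy : y ∈ W)
    (hproj : ∀ w ∈ W, ⟪y, w⟫ = ⟪v, w⟫) : ⟪y, v⟫ = ‖y‖ ^ 2 := by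
  rw [real_inner_comm, ← hproj y hy, real_inner_self_eq_norm_sq]

theorem real_inner_sum_eq_sum_norm_sq_of_forall_inner_eq (hx : ∀ i, x i ∈ V i)
    (hproj : ∀ i, ∀ w ∈ V i, ⟪x i, w⟫ = ⟪v, w⟫) : ⟪∑ i, x i, v⟫ = ∑ i, ‖x i‖ ^ 2 := by
  rw [sum_inner]
  exact Finset.sum_congr rfl fun i _ => real_inner_eq_norm_sq_of_forall_inner_eq (hx i) (hproj i)

theorem norm_sq_le_sum_norm_mul_norm_of_eq_sum {u : I → H}
    (hproj : ∀ i, ∀ w ∈ V i, ⟪x i, w⟫ = ⟪v, w⟫) (hu : ∀ i, u i ∈ V i) (hvu : v = ∑ i, u i) :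
    ‖v‖ ^ 2 ≤ ∑ i, ‖x i‖ * ‖u i‖ :=
  calc ‖v‖ ^ 2 = ⟪v, ∑ i, u i⟫ := by rw [← hvu, real_inner_self_eq_norm_sq]
    _ = ∑ i, ⟪x i, u i⟫ := by
        rw [inner_sum]
        exact Finset.sum_congr rfl fun i _ => (hproj i (u i) (hu i)).symm
    _ ≤ ∑ i, ‖x i‖ * ‖u i‖ := Finset.sum_le_sum fun i _ => real_inner_le_norm _ _

theorem inv_mul_norm_sq_le_sum_norm_sq {u : I → H} {K : ℝ} (hK : 0 < K)
    (hproj : ∀ i, ∀ w ∈ V i, ⟪x i, w⟫ = ⟪v, w⟫) (hu : ∀ i, u i ∈ V i) (hvu : v = ∑ i, u i)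
    (hstable : ∑ i, ‖u i‖ ^ 2 ≤ K * ‖v‖ ^ 2) :
    K⁻¹ * ‖v‖ ^ 2 ≤ ∑ i, ‖x i‖ ^ 2 := by
  have hsq : (‖v‖ ^ 2) ^ 2 ≤ ‖v‖ ^ 2 * (K * ∑ i, ‖x i‖ ^ 2) :=
    calc (‖v‖ ^ 2) ^ 2 ≤ (∑ i, ‖x i‖ * ‖u i‖) ^ 2 := by
          gcongr; exact norm_sq_le_sum_norm_mul_norm_of_eq_sum hproj hu hvu
      _ ≤ (∑ i, ‖x i‖ ^ 2) * ∑ i, ‖u i‖ ^ 2 := Finset.sum_mul_sq_le_sq_mul_sq _ _ _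
      _ ≤ (∑ i, ‖x i‖ ^ 2) * (K * ‖v‖ ^ 2) := by gcongr
      _ = ‖v‖ ^ 2 * (K * ∑ i, ‖x i‖ ^ 2) := by ring
  rw [inv_mul_le_iff₀ hK]
  exact le_of_sq_le_mul (by positivity) (by positivity) hsq

theorem sum_norm_sq_le_mul_norm_sq {K : ℝ} (hK : 0 ≤ K) (hx : ∀ i, x i ∈ V i)
    (hproj : ∀ i, ∀ w ∈ V i, ⟪x i, w⟫ = ⟪v, w⟫)
    (hbound : ‖∑ i, x i‖ ^ 2 ≤ K * ∑ i, ‖x i‖ ^ 2) :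
    ∑ i, ‖x i‖ ^ 2 ≤ K * ‖v‖ ^ 2 := by
  have hinner := real_inner_sum_eq_sum_norm_sq_of_forall_inner_eq hx hproj
  have hS : 0 ≤ ∑ i, ‖x i‖ ^ 2 := by positivity
  refine le_of_sq_le_mul hS (by positivity) ?_
  calc (∑ i, ‖x i‖ ^ 2) ^ 2 ≤ (‖∑ i, x i‖ * ‖v‖) ^ 2 := by
        rw [← hinner]; exact pow_le_pow_left₀ (hinner ▸ hS) (real_inner_le_norm _ _) 2
    _ = ‖∑ i, x i‖ ^ 2 * ‖v‖ ^ 2 := by ring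
    _ ≤ (K * ∑ i, ‖x i‖ ^ 2) * ‖v‖ ^ 2 := by gcongr
    _ = (∑ i, ‖x i‖ ^ 2) * (K * ‖v‖ ^ 2) := by ring

end Projection

theorem statement5_general {H : Type*} [NormedAddCommGroup H] [InnerProductSpace ℝ H]
    {I : Type*} [Fintype I]
    (V : I → Submodule ℝ H)
    (P : I → H →L[ℝ] H)
    (hPmem : ∀ i u, P i u ∈ V i)
    (hPproj : ∀ i u, ∀ w ∈ V i, ⟪P i u, w⟫ = ⟪u, w⟫)
    (K₁ K₂ : ℝ) (hK₁ : 0 < K₁) (hK₂ : 0 < K₂)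
    (h1 : ∀ u : H, ∃ uu : I → H, (∀ i, uu i ∈ V i) ∧ u = ∑ i, uu i ∧
      ∑ i, ‖uu i‖ ^ 2 ≤ K₁ * ‖u‖ ^ 2)
    (h2 : ∀ uu : I → H, (∀ i, uu i ∈ V i) → ‖∑ i, uu i‖ ^ 2 ≤ K₂ * ∑ i, ‖uu i‖ ^ 2)
    (v : H) :
    K₁⁻¹ * ‖v‖ ^ 2 ≤ ⟪∑ i, P i v, v⟫ ∧ ⟪∑ i, P i v, v⟫ ≤ K₂ * ‖v‖ ^ 2 := by
  have hmem : ∀ i, P i v ∈ V i := fun i => hPmem i v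
  have hproj : ∀ i, ∀ w ∈ V i, ⟪P i v, w⟫ = ⟪v, w⟫ := fun i => hPproj i v
  rw [real_inner_sum_eq_sum_norm_sq_of_forall_inner_eq hmem hproj]
  obtain ⟨u, hu, hvu, hstable⟩ := h1 v
  exact ⟨inv_mul_norm_sq_le_sum_norm_sq hK₁ hproj hu hvu hstable,
    sum_norm_sq_le_mul_norm_sq hK₂.le hmem hproj (h2 _ hmem)⟩

/-- Corollary 3.3 of the paper: spectral equivalence of the additive
Schwarz operator. Let `(V i)` be a finite family of closed subspaces of a real Hilbert
space `H`, with orthogonal projections `P i` onto `V i` (a bounded linear map with values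
in `V i` satisfying `⟪P i u, w⟫ = ⟪u, w⟫` for all `w ∈ V i`), and `P = Σ P i`. If every
`u` admits a decomposition `u = Σ uᵢ`, `uᵢ ∈ V i`, with `Σ ‖uᵢ‖² ≤ K₁ ‖u‖²`, and
`‖Σ uᵢ‖² ≤ K₂ Σ ‖uᵢ‖²` for every such family, then
`K₁⁻¹ ‖v‖² ≤ ⟪P v, v⟫ ≤ K₂ ‖v‖²` for all `v`. -/
theorem statement5 {H : Type*} [NormedAddCommGroup H] [InnerProductSpace ℝ H]
    [CompleteSpace H] {I : Type*} [Fintype I]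
    (V : I → Submodule ℝ H) (hclosed : ∀ i, IsClosed (V i : Set H))
    (P : I → H →L[ℝ] H)
    (hPmem : ∀ i u, P i u ∈ V i)
    (hPproj : ∀ i u, ∀ w ∈ V i, ⟪P i u, w⟫ = ⟪u, w⟫)
    (K₁ K₂ : ℝ) (hK₁ : 0 < K₁) (hK₂ : 0 < K₂)
    (h1 : ∀ u : H, ∃ uu : I → H, (∀ i, uu i ∈ V i) ∧ u = ∑ i, uu i ∧
      ∑ i, ‖uu i‖ ^ 2 ≤ K₁ * ‖u‖ ^ 2)
    (h2 : ∀ uu : I → H, (∀ i, uu i ∈ V i) → ‖∑ i, uu i‖ ^ 2 ≤ K₂ * ∑ i, ‖uu i‖ ^ 2)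
    (v : H) :
    K₁⁻¹ * ‖v‖ ^ 2 ≤ ⟪∑ i, P i v, v⟫ ∧ ⟪∑ i, P i v, v⟫ ≤ K₂ * ‖v‖ ^ 2 :=
  statement5_general V P hPmem hPproj K₁ K₂ hK₁ hK₂ h1 h2 v
end

section
/- Let H be a real Hilbert space with inner product a and norm |||v||| := a(v,v)^{1/2}. Let (u_i)_{i≥1} be a complete orthogonal family in H with a(u_i, u_i) = E_i, where 0 < E_1 ≤ E_2 ≤ E_3 ≤ …, and let B : H → H be the bounded linear operator determined by B u_i = (E_1/E_i) u_i for all i. Then for every v ∈ H and every k ∈ ℕ: min_{c∈ℝ} |||B^k v − c u_1||| ≤ (E_1/E_2)^k · min_{c∈ℝ} |||v − c u_1|||. (Energy-norm convergence of the scaled inverse power iteration, Section 4.1 of the paper.) -/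
open scoped RealInnerProductSpace

private lemma sqle {a b : ℝ} (hb : 0 ≤ b) (h : a ^ 2 ≤ b ^ 2) (_ha : 0 ≤ a) : a ≤ b := by
  nlinarith

/-- Section 4.1 of the paper: energy-norm convergence of the scaled
inverse power iteration. Let `(u i)_{i ∈ ℕ}` be a complete orthogonal family in a real
Hilbert space `H` (whose inner product `a` has norm `|||·||| = ‖·‖`), with
`a(uᵢ, uᵢ) = Eᵢ`, `0 < E₀ ≤ E₁ ≤ ⋯` (0-based indexing of the eigenpairs), and let `B` be
the bounded operator with `B uᵢ = (E₀/Eᵢ) uᵢ`. Then for every `v` and `k`,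
`min_c |||B^k v - c u₀||| ≤ (E₀/E₁)^k · min_c |||v - c u₀|||`. -/
theorem statement8 {H : Type*} [NormedAddCommGroup H] [InnerProductSpace ℝ H]
    [CompleteSpace H]
    (u : ℕ → H) (E : ℕ → ℝ) (hpos : 0 < E 0) (hmono : Monotone E)
    (hnorm : ∀ i, ⟪u i, u i⟫ = E i)
    (horth : ∀ i j, i ≠ j → ⟪u i, u j⟫ = 0)
    (hcomplete : (Submodule.span ℝ (Set.range u)).topologicalClosure = ⊤)
    (B : H →L[ℝ] H) (hB : ∀ i, B (u i) = (E 0 / E i) • u i)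
    (v : H) (k : ℕ) :
    (⨅ c : ℝ, ‖(B ^ k) v - c • u 0‖) ≤ (E 0 / E 1) ^ k * ⨅ c : ℝ, ‖v - c • u 0‖ := by
  have hE : ∀ i, 0 < E i := fun i => lt_of_lt_of_le hpos (hmono (Nat.zero_le i))
  set r : ℝ := E 0 / E 1 with hr
  have hrpos : 0 < r := div_pos hpos (hE 1)
  -- density
  have hdense : Dense (Submodule.span ℝ (Set.range u) : Set H) :=
    Submodule.dense_iff_topologicalClosure_eq_top.mpr hcomplete
  -- intertwining of inner products
  have hkey : ∀ i w, ⟪u i, B w⟫ = (E 0 / E i) * ⟪u i, w⟫ := by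
    intro i w
    have h : (innerSL ℝ (u i)).comp B = (E 0 / E i) • innerSL ℝ (u i) := by
      refine ContinuousLinearMap.ext_on hdense ?_
      rintro x ⟨j, rfl⟩
      by_cases hij : i = j
      · subst hij
        simp [hB i, inner_smul_right]
      · simp [hB j, inner_smul_right, horth i j hij]
    have := DFunLike.congr_fun h w
    simpa using this
  -- the orthonormal basis
  set b : ℕ → H := fun i => (Real.sqrt (E i))⁻¹ • u i with hbdef
  have hsqrt : ∀ i, 0 < Real.sqrt (E i) := fun i => Real.sqrt_pos.mpr (hE i)
  have hbinner : ∀ i j, ⟪b i, b j⟫ =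
      (Real.sqrt (E i))⁻¹ * ((Real.sqrt (E j))⁻¹ * ⟪u i, u j⟫) := by
    intro i j
    simp only [hbdef, real_inner_smul_left, real_inner_smul_right]
    ring
  have hon : Orthonormal ℝ b := by
    rw [orthonormal_iff_ite]
    intro i j
    by_cases hij : i = j
    · subst hij
      rw [hbinner, hnorm, if_pos rfl, ← Real.mul_self_sqrt (hE i).le]
      field_simp
      rw [Real.sqrt_sq (hsqrt i).le]
      exact div_self (pow_ne_zero 2 (hsqrt i).ne')
    · rw [hbinner, horth i j hij]
      simp [hij]
  have hspan : Submodule.span ℝ (Set.range b) = Submodule.span ℝ (Set.range u) := by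
    apply le_antisymm
    · rw [Submodule.span_le]
      rintro x ⟨i, rfl⟩
      exact Submodule.smul_mem _ _ (Submodule.subset_span ⟨i, rfl⟩)
    · rw [Submodule.span_le]
      rintro x ⟨i, rfl⟩
      have : u i = Real.sqrt (E i) • b i := by
        rw [hbdef]; rw [smul_smul]
        rw [mul_inv_cancel₀ (hsqrt i).ne']; simp
      rw [this]
      exact Submodule.smul_mem _ _ (Submodule.subset_span ⟨i, rfl⟩)
  have hsp : ⊤ ≤ (Submodule.span ℝ (Set.range b)).topologicalClosure := by
    rw [hspan, hcomplete]
  let bb : HilbertBasis ℕ ℝ H := HilbertBasis.mk hon hsp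
  have hbb : ∀ i, bb i = b i := fun i => by
    have := HilbertBasis.coe_mk hon hsp
    exact congrFun this i
  have hkeyb : ∀ i w, ⟪b i, B w⟫ = (E 0 / E i) * ⟪b i, w⟫ := by
    intro i w
    simp only [hbdef, inner_smul_left]
    rw [hkey i w]; ring
  -- key contraction estimate
  have hcontr : ∀ w : H, ⟪u 0, w⟫ = 0 → ⟪u 0, B w⟫ = 0 ∧ ‖B w‖ ≤ r * ‖w‖ := by
    intro w hw
    constructor
    · rw [hkey 0 w, hw, mul_zero]
    · have hterm : ∀ i, ⟪B w, bb i⟫ * ⟪bb i, B w⟫ ≤ r ^ 2 * (⟪w, bb i⟫ * ⟪bb i, w⟫) := by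
        intro i
        have e1 : ⟪bb i, B w⟫ = (E 0 / E i) * ⟪bb i, w⟫ := by
          rw [hbb i]; exact hkeyb i w
        have e2 : ⟪B w, bb i⟫ = ⟪bb i, B w⟫ := real_inner_comm _ _
        have e3 : ⟪w, bb i⟫ = ⟪bb i, w⟫ := real_inner_comm _ _
        rw [e2, e3, e1]
        rcases Nat.eq_zero_or_pos i with h0 | h1
        · subst h0
          have : ⟪bb 0, w⟫ = 0 := by
            rw [hbb 0]
            simp [hbdef, real_inner_smul_left, hw]
          rw [this]; simp [sq_nonneg]
        · have h1' : (1 : ℕ) ≤ i := h1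
          have hle : E 0 / E i ≤ r := by
            rw [hr]
            exact div_le_div_of_nonneg_left hpos.le (hE 1) (hmono h1')
          have hge : 0 < E 0 / E i := div_pos hpos (hE i)
          nlinarith [mul_self_nonneg ⟪bb i, w⟫, mul_self_nonneg (⟪bb i, w⟫ * (E 0 / E i - r))]
      have hsum1 : Summable fun i => ⟪B w, bb i⟫ * ⟪bb i, B w⟫ :=
        bb.summable_inner_mul_inner (B w) (B w)
      have hsum2 : Summable fun i => r ^ 2 * (⟪w, bb i⟫ * ⟪bb i, w⟫) :=
        (bb.summable_inner_mul_inner w w).mul_left _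
      have htsum : (∑' i, ⟪B w, bb i⟫ * ⟪bb i, B w⟫)
          ≤ ∑' i, r ^ 2 * (⟪w, bb i⟫ * ⟪bb i, w⟫) :=
        Summable.tsum_le_tsum hterm hsum1 hsum2
      rw [bb.tsum_inner_mul_inner, tsum_mul_left, bb.tsum_inner_mul_inner] at htsum
      rw [real_inner_self_eq_norm_sq, real_inner_self_eq_norm_sq] at htsum
      have : ‖B w‖ ^ 2 ≤ (r * ‖w‖) ^ 2 := by rw [mul_pow]; exact htsum
      exact sqle (by positivity) this (norm_nonneg _)
  -- iterate
  have hiter : ∀ (n : ℕ) (w : H), ⟪u 0, w⟫ = 0 →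
      ⟪u 0, (B ^ n) w⟫ = 0 ∧ ‖(B ^ n) w‖ ≤ r ^ n * ‖w‖ := by
    intro n
    induction n with
    | zero => intro w hw; simpa using hw
    | succ n ih =>
      intro w hw
      obtain ⟨h1, h2⟩ := hcontr w hw
      obtain ⟨h3, h4⟩ := ih (B w) h1
      have heq : (B ^ (n + 1)) w = (B ^ n) (B w) := by
        rw [pow_succ]; rfl
      rw [heq]
      refine ⟨h3, h4.trans ?_⟩
      rw [pow_succ, mul_assoc]
      exact mul_le_mul_of_nonneg_left h2 (by positivity)
  -- projection setup
  set S : Submodule ℝ H := ℝ ∙ u 0 with hS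
  haveI : CompleteSpace S := by
    have : FiniteDimensional ℝ S := by
      apply FiniteDimensional.span_of_finite
      exact Set.finite_singleton _
    infer_instance
  set q : H := (S.orthogonalProjection v : H) with hq
  set w : H := v - q with hwdef
  have hu0S : u 0 ∈ S := Submodule.mem_span_singleton_self (u 0)
  have hqS : q ∈ S := by rw [hq]; exact (S.orthogonalProjection v).2
  have hwmem : w ∈ Sᗮ := Submodule.sub_starProjection_mem_orthogonal (K := S) v
  have hwu : ⟪u 0, w⟫ = 0 :=
    (Submodule.mem_orthogonal S w).mp hwmem (u 0) hu0S
  obtain ⟨c₁, hc₁⟩ := Submodule.mem_span_singleton.mp hqS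
  -- lower bound: ‖w‖ ≤ ‖v - c • u 0‖ for all c
  have hlow : ∀ c : ℝ, ‖w‖ ≤ ‖v - c • u 0‖ := by
    intro c
    have hdecomp : v - c • u 0 = w + (q - c • u 0) := by
      rw [hwdef]; abel
    have hmem : q - c • u 0 ∈ S :=
      Submodule.sub_mem _ hqS (Submodule.smul_mem _ _ hu0S)
    have hinner : ⟪w, q - c • u 0⟫ = 0 := by
      rw [real_inner_comm]
      exact (Submodule.mem_orthogonal S w).mp hwmem _ hmem
    have : ‖v - c • u 0‖ ^ 2 = ‖w‖ ^ 2 + ‖q - c • u 0‖ ^ 2 := by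
      rw [hdecomp, norm_add_sq_real, hinner]; ring
    have h2 : ‖w‖ ^ 2 ≤ ‖v - c • u 0‖ ^ 2 := by nlinarith [sq_nonneg ‖q - c • u 0‖]
    exact sqle (norm_nonneg _) h2 (norm_nonneg _)
  have hbdd : BddBelow (Set.range fun c : ℝ => ‖(B ^ k) v - c • u 0‖) := by
    refine ⟨0, ?_⟩; rintro x ⟨c, rfl⟩; exact norm_nonneg _
  -- B fixes q
  have hBu0 : B (u 0) = u 0 := by rw [hB 0, div_self (hE 0).ne']; simp
  have hBq : ∀ n : ℕ, (B ^ n) q = q := by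
    intro n
    induction n with
    | zero => simp
    | succ n ih =>
      have : (B ^ (n+1)) q = (B ^ n) (B q) := by rw [pow_succ]; rfl
      rw [this]
      have : B q = q := by
        rw [← hc₁, map_smul, hBu0]
        
      rw [this, ih]
  -- main estimate
  have heq2 : (B ^ k) v - c₁ • u 0 = (B ^ k) w := by
    rw [hwdef, map_sub, hBq k, hc₁]
  calc (⨅ c : ℝ, ‖(B ^ k) v - c • u 0‖) ≤ ‖(B ^ k) v - c₁ • u 0‖ := ciInf_le hbdd c₁
    _ = ‖(B ^ k) w‖ := by rw [heq2]
    _ ≤ r ^ k * ‖w‖ := (hiter k w hwu).2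
    _ ≤ r ^ k * ⨅ c : ℝ, ‖v - c • u 0‖ := by
        apply mul_le_mul_of_nonneg_left _ (by positivity)
        exact le_ciInf hlow
end

section
/- Let H be a real Hilbert space with inner product a and norm |||·|||. Let (u_i)_{i≥1} be a complete orthogonal family with a(u_i,u_i) = E_i, 0 < E_1 ≤ E_2 ≤ …, and let B : H → H be the bounded linear operator with B u_i = (E_1/E_i) u_i. Let P̂ : H → H be a linear operator with |||v − P̂ v||| ≤ γ |||v||| for all v ∈ H. For ṽ ∈ H define w := ṽ + P̂ (B ṽ − ṽ). Then min_{c∈ℝ} |||w − c u_1||| ≤ (E_1/E_2 + γ) · min_{c∈ℝ} |||ṽ − c u_1|||, i.e., each step of the preconditioned inverse iteration reduces the distance to the ground-state span by the factor E_1/E_2 + γ. (Section 4.2 of the paper.) -/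
open scoped RealInnerProductSpace

lemma aux_bound {H : Type*} [NormedAddCommGroup H] [InnerProductSpace ℝ H]
    (f : ℕ → H) (hf : Orthonormal ℝ f) (T : H →L[ℝ] H) (μ : ℕ → ℝ)
    (hT : ∀ i, T (f i) = μ i • f i) (M : ℝ) (hμ : ∀ i, |μ i| ≤ M)
    {x : H} (hx : x ∈ (Submodule.span ℝ (Set.range f)).topologicalClosure) :
    ‖T x‖ ≤ M * ‖x‖ := by
  have hM : 0 ≤ M := le_trans (abs_nonneg _) (hμ 0)
  have hclosed : IsClosed {y : H | ‖T y‖ ≤ M * ‖y‖} :=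
    isClosed_le (continuous_norm.comp T.continuous) (continuous_const.mul continuous_norm)
  have hspan : (Submodule.span ℝ (Set.range f) : Set H) ⊆ {y : H | ‖T y‖ ≤ M * ‖y‖} := by
    intro y hy
    rw [SetLike.mem_coe, Finsupp.mem_span_range_iff_exists_finsupp] at hy
    obtain ⟨c, rfl⟩ := hy
    rw [Finsupp.sum]
    have hTy : T (∑ i ∈ c.support, c i • f i) = ∑ i ∈ c.support, (c i * μ i) • f i := by
      rw [map_sum]
      exact Finset.sum_congr rfl fun i _ => by rw [map_smul, hT i, smul_smul]
    have hn1 : ‖∑ i ∈ c.support, (c i * μ i) • f i‖ ^ 2 = ∑ i ∈ c.support, (c i * μ i) ^ 2 := by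
      rw [← real_inner_self_eq_norm_sq, hf.inner_sum]; simp [sq]
    have hn2 : ‖∑ i ∈ c.support, c i • f i‖ ^ 2 = ∑ i ∈ c.support, (c i) ^ 2 := by
      rw [← real_inner_self_eq_norm_sq, hf.inner_sum]; simp [sq]
    simp only [Set.mem_setOf_eq, hTy]
    have hsq : ‖∑ i ∈ c.support, (c i * μ i) • f i‖ ^ 2
        ≤ (M * ‖∑ i ∈ c.support, c i • f i‖) ^ 2 := by
      rw [hn1, mul_pow, hn2, Finset.mul_sum]
      refine Finset.sum_le_sum fun i _ => ?_
      calc (c i * μ i) ^ 2 = c i ^ 2 * μ i ^ 2 := by ring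
        _ ≤ c i ^ 2 * M ^ 2 :=
          mul_le_mul_of_nonneg_left
            (sq_le_sq' (neg_le_of_abs_le (hμ i)) (le_of_abs_le (hμ i))) (sq_nonneg _)
        _ = M ^ 2 * c i ^ 2 := by ring
    exact (pow_le_pow_iff_left₀ (norm_nonneg _) (by positivity) two_ne_zero).mp hsq
  have hx' : x ∈ closure (Submodule.span ℝ (Set.range f) : Set H) := by
    rw [← Submodule.topologicalClosure_coe]; exact hx
  exact closure_minimal hspan hclosed hx'

/-- Section 4.2 of the paper: one step of the preconditioned inverse
iteration. With a complete orthogonal family `(u i)` with `a(uᵢ,uᵢ) = Eᵢ`,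
`0 < E₀ ≤ E₁ ≤ ⋯` (0-based indexing), `B uᵢ = (E₀/Eᵢ) uᵢ`, and a linear preconditioner
`P̂` with `|||v - P̂ v||| ≤ γ |||v|||` for all `v`, the vector `w = ṽ + P̂(B ṽ - ṽ)`
satisfies `min_c |||w - c u₀||| ≤ (E₀/E₁ + γ) · min_c |||ṽ - c u₀|||`. -/
theorem statement9 {H : Type*} [NormedAddCommGroup H] [InnerProductSpace ℝ H]
    [CompleteSpace H]
    (u : ℕ → H) (E : ℕ → ℝ) (hpos : 0 < E 0) (hmono : Monotone E)
    (hnorm : ∀ i, ⟪u i, u i⟫ = E i)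
    (horth : ∀ i j, i ≠ j → ⟪u i, u j⟫ = 0)
    (hcomplete : (Submodule.span ℝ (Set.range u)).topologicalClosure = ⊤)
    (B : H →L[ℝ] H) (hB : ∀ i, B (u i) = (E 0 / E i) • u i)
    (Phat : H →ₗ[ℝ] H) (γ : ℝ) (hP : ∀ v : H, ‖v - Phat v‖ ≤ γ * ‖v‖)
    (vt : H) :
    (⨅ c : ℝ, ‖vt + Phat (B vt - vt) - c • u 0‖) ≤
      (E 0 / E 1 + γ) * ⨅ c : ℝ, ‖vt - c • u 0‖ := by
  have hE : ∀ i, 0 < E i := fun i => lt_of_lt_of_le hpos (hmono (Nat.zero_le i))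
  -- the normalized family
  set f : ℕ → H := fun i => (Real.sqrt (E (i + 1)))⁻¹ • u (i + 1) with hf_def
  have hsqrt : ∀ i, (0:ℝ) < Real.sqrt (E i) := fun i => Real.sqrt_pos.mpr (hE i)
  have hf : Orthonormal ℝ f := by
    rw [orthonormal_iff_ite]
    intro i j
    simp only [hf_def, real_inner_smul_left, real_inner_smul_right]
    by_cases hij : i = j
    · subst hij
      rw [hnorm, if_pos rfl, ← Real.mul_self_sqrt (hE (i+1)).le]
      have hs := (hsqrt (i+1)).ne'
      field_simp
      rw [Real.sqrt_sq (hsqrt (i+1)).le]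
    · rw [horth _ _ (by omega), if_neg hij]; ring
  have hu_f : ∀ i, u (i + 1) = Real.sqrt (E (i + 1)) • f i := by
    intro i
    rw [hf_def, smul_smul, mul_inv_cancel₀ (hsqrt (i+1)).ne', one_smul]
  set K := (Submodule.span ℝ (Set.range f)).topologicalClosure with hK_def
  -- u 0 is orthogonal to K
  have hu0K : K ≤ (ℝ ∙ u 0)ᗮ := by
    apply Submodule.topologicalClosure_minimal
    · rw [Submodule.span_le]
      rintro - ⟨i, rfl⟩
      rw [SetLike.mem_coe, Submodule.mem_orthogonal_singleton_iff_inner_right]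
      simp [hf_def, real_inner_smul_right, horth 0 (i+1) (by omega)]
    · exact Submodule.isClosed_orthogonal _
  -- decompose vt
  set cs : ℝ := ⟪u 0, vt⟫ / E 0 with hcs_def
  set r : H := vt - cs • u 0 with hr_def
  have hr0 : ⟪u 0, r⟫ = 0 := by
    simp [hr_def, inner_sub_right, real_inner_smul_right, hcs_def, hnorm 0,
      div_mul_cancel₀ _ hpos.ne']
    rw [← real_inner_self_eq_norm_sq, hnorm 0, div_mul_cancel₀ _ hpos.ne', sub_self]
  -- r belongs to K
  haveI : CompleteSpace K := (Submodule.span ℝ (Set.range f)).isClosed_topologicalClosure.completeSpace_coe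
  have hrK : r ∈ K := by
    set q : H := r - K.orthogonalProjectionOnto r with hq_def
    have hqK : q ∈ Kᗮ := K.sub_starProjection_mem_orthogonal r
    have hqi : ∀ i, ⟪u i, q⟫ = 0 := by
      intro i
      cases i with
      | zero =>
        rw [hq_def, inner_sub_right, hr0,
          (Submodule.mem_orthogonal _ _).mp (hu0K (K.orthogonalProjectionOnto r).2) (u 0)
            (Submodule.mem_span_singleton_self _), sub_zero]
      | succ n =>
        have hmem : u (n + 1) ∈ K := by
          rw [hu_f n]
          exact K.smul_mem _ (Submodule.le_topologicalClosure _
            (Submodule.subset_span ⟨n, rfl⟩))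
        exact ((Submodule.mem_orthogonal K q).mp hqK _ hmem)
    have hq_orth : q ∈ (Submodule.span ℝ (Set.range u))ᗮ := by
      have h1 : Submodule.span ℝ (Set.range u) ≤ (ℝ ∙ q)ᗮ := by
        rw [Submodule.span_le]
        rintro - ⟨i, rfl⟩
        rw [SetLike.mem_coe, Submodule.mem_orthogonal_singleton_iff_inner_left]
        exact hqi i
      exact Submodule.orthogonal_le h1
        (Submodule.le_orthogonal_orthogonal _ (Submodule.mem_span_singleton_self q))
    rw [Submodule.topologicalClosure_eq_top_iff.mp hcomplete, Submodule.mem_bot] at hq_orth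
    have : r = (K.orthogonalProjectionOnto r : H) := by
      have := sub_eq_zero.mp hq_orth; exact this
    rw [this]; exact (K.orthogonalProjectionOnto r).2
  -- spectral bounds
  have hBf : ∀ i, B (f i) = (E 0 / E (i + 1)) • f i := by
    intro i
    simp only [hf_def, map_smul, hB (i+1), smul_smul, mul_comm]
  have hμ1 : ∀ i, |E 0 / E (i + 1)| ≤ E 0 / E 1 := by
    intro i
    rw [abs_of_pos (div_pos hpos (hE (i+1)))]
    exact div_le_div_of_nonneg_left hpos.le (hE 1) (hmono (by omega))
  have hBr : ‖B r‖ ≤ (E 0 / E 1) * ‖r‖ :=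
    aux_bound f hf B (fun i => E 0 / E (i + 1)) hBf (E 0 / E 1) hμ1 hrK
  have hTf : ∀ i, (B - ContinuousLinearMap.id ℝ H) (f i) = (E 0 / E (i + 1) - 1) • f i := by
    intro i
    simp [hBf i, sub_smul]
  have hμ2 : ∀ i, |E 0 / E (i + 1) - 1| ≤ (1:ℝ) := by
    intro i
    rw [abs_le]
    have h1 : E 0 / E (i + 1) ≤ 1 := (div_le_one (hE (i+1))).mpr (hmono (by omega))
    have h2 : 0 < E 0 / E (i + 1) := div_pos hpos (hE (i+1))
    constructor <;> linarith
  have hBrr : ‖B r - r‖ ≤ ‖r‖ := by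
    have := aux_bound f hf (B - ContinuousLinearMap.id ℝ H)
      (fun i => E 0 / E (i + 1) - 1) hTf 1 hμ2 hrK
    simpa using this
  -- γ ≥ 0
  have hu0 : u 0 ≠ 0 := by
    intro h
    have h0 := hnorm 0
    rw [h, inner_zero_left] at h0
    exact hpos.ne' h0.symm
  have hγ : 0 ≤ γ := by
    have h1 := hP (u 0)
    have h2 : 0 < ‖u 0‖ := norm_pos_iff.mpr hu0
    nlinarith [norm_nonneg (u 0 - Phat (u 0))]
  -- the pointwise identity
  have hBvt : B vt - vt = B r - r := by
    have : B (cs • u 0) = cs • u 0 := by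
      rw [map_smul, hB 0, div_self hpos.ne', one_smul]
    rw [hr_def, map_sub, this]
    abel
  have hw : vt + Phat (B vt - vt) - cs • u 0
      = B r - ((B r - r) - Phat (B r - r)) := by
    rw [hBvt, hr_def]
    abel
  -- put it together
  have hwest : ‖vt + Phat (B vt - vt) - cs • u 0‖ ≤ (E 0 / E 1 + γ) * ‖r‖ := by
    rw [hw]
    calc ‖B r - ((B r - r) - Phat (B r - r))‖
        ≤ ‖B r‖ + ‖(B r - r) - Phat (B r - r)‖ := norm_sub_le _ _
      _ ≤ (E 0 / E 1) * ‖r‖ + γ * ‖B r - r‖ := add_le_add hBr (hP _)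
      _ ≤ (E 0 / E 1) * ‖r‖ + γ * ‖r‖ := by
          exact add_le_add_right (mul_le_mul_of_nonneg_left hBrr hγ) _
      _ = (E 0 / E 1 + γ) * ‖r‖ := by ring
  have hr_le : ∀ c : ℝ, ‖r‖ ≤ ‖vt - c • u 0‖ := by
    intro c
    have hdec : vt - c • u 0 = r + (cs - c) • u 0 := by rw [hr_def]; rw [sub_smul]; abel
    have hinner : ⟪r, (cs - c) • u 0⟫ = 0 := by
      rw [real_inner_smul_right, real_inner_comm, hr0, mul_zero]
    have hsq : ‖r‖ ^ 2 ≤ ‖vt - c • u 0‖ ^ 2 := by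
      rw [hdec, ← real_inner_self_eq_norm_sq, ← real_inner_self_eq_norm_sq]
      have hinner' : ⟪(cs - c) • u 0, r⟫ = 0 := by rw [real_inner_comm]; exact hinner
      rw [inner_add_add_self, hinner, hinner']
      have : 0 ≤ ⟪(cs - c) • u 0, (cs - c) • u 0⟫ := real_inner_self_nonneg
      linarith
    exact (pow_le_pow_iff_left₀ (norm_nonneg _) (norm_nonneg _) two_ne_zero).mp hsq
  have hbdd : BddBelow (Set.range fun c : ℝ => ‖vt + Phat (B vt - vt) - c • u 0‖) :=
    ⟨0, by rintro - ⟨c, rfl⟩; exact norm_nonneg _⟩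
  calc (⨅ c : ℝ, ‖vt + Phat (B vt - vt) - c • u 0‖)
      ≤ ‖vt + Phat (B vt - vt) - cs • u 0‖ := ciInf_le hbdd cs
    _ ≤ (E 0 / E 1 + γ) * ‖r‖ := hwest
    _ ≤ (E 0 / E 1 + γ) * ⨅ c : ℝ, ‖vt - c • u 0‖ := by
        have hE01 : 0 ≤ E 0 / E 1 := (div_pos hpos (hE 1)).le
        apply mul_le_mul_of_nonneg_left _ (by linarith)
        exact le_ciInf hr_le
end

section
/- Let H be a real Hilbert space with inner product a and norm |||·|||, let (u_i)_{i≥1} be a complete orthogonal family with a(u_i,u_i) = E_i and 0 < E_1 ≤ E_2 ≤ …, and let B : H → H be the bounded linear operator with B u_i = (E_1/E_i) u_i. Fix K ≥ 1 and suppose w ∈ H satisfies a(w, u_1) = E_1 and a(w, u_i) = 0 for all 2 ≤ i ≤ K (i.e., w = u_1 + a component in the closed span of {u_i : i > K}). Then for every k ∈ ℕ: |||B^k w − u_1||| ≤ (E_1/E_{K+1})^k · |||w − u_1|||. (Convergence of the block inverse iteration, Section 4.3 of the paper.) -/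
open scoped RealInnerProductSpace

lemma lp_norm_le_aux {f g : lp (fun _ : ℕ => ℝ) 2} {c : ℝ} (hc : 0 ≤ c)
    (h : ∀ i, |f i| ≤ c * |g i|) : ‖f‖ ≤ c * ‖g‖ := by
  have hf : (⟪f, f⟫ : ℝ) = ∑' i, f i * f i := by
    rw [lp.inner_eq_tsum]; rfl
  have hg : (⟪g, g⟫ : ℝ) = ∑' i, g i * g i := by
    rw [lp.inner_eq_tsum]; rfl
  have hsf : Summable fun i => f i * f i := lp.summable_inner f f
  have hsg : Summable fun i => g i * g i := lp.summable_inner g g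
  have hpt : ∀ i, f i * f i ≤ c ^ 2 * (g i * g i) := by
    intro i
    have := h i
    nlinarith [abs_nonneg (f i), abs_nonneg (g i), sq_abs (f i), sq_abs (g i)]
  have hsum : ∑' i, f i * f i ≤ c ^ 2 * ∑' i, g i * g i := by
    rw [← tsum_mul_left]
    exact Summable.tsum_le_tsum hpt hsf (hsg.mul_left _)
  have h1 : ‖f‖ ^ 2 ≤ (c * ‖g‖) ^ 2 := by
    have e1 : (⟪f, f⟫ : ℝ) = ‖f‖ ^ 2 := real_inner_self_eq_norm_sq f
    have e2 : (⟪g, g⟫ : ℝ) = ‖g‖ ^ 2 := real_inner_self_eq_norm_sq g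
    rw [← e1]; rw [hf]
    calc ∑' i, f i * f i ≤ c ^ 2 * ∑' i, g i * g i := hsum
    _ = (c * ‖g‖) ^ 2 := by rw [← hg, e2]; ring
  nlinarith [norm_nonneg f, mul_nonneg hc (norm_nonneg g)]

/-- Section 4.3 of the paper: convergence of the block inverse
iteration. With a complete orthogonal family `(u i)` with `a(uᵢ,uᵢ) = Eᵢ`,
`0 < E₀ ≤ E₁ ≤ ⋯` (0-based indexing, so `E K` is the paper's `E_{K+1}`), and
`B uᵢ = (E₀/Eᵢ) uᵢ`, if `w` satisfies `a(w, u₀) = E₀` and `a(w, uᵢ) = 0` for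
`1 ≤ i < K` (i.e. `w = u₀ +` a component in the closed span of `{uᵢ : i ≥ K}`), then
`|||B^k w - u₀||| ≤ (E₀/E_K)^k |||w - u₀|||` for all `k`. -/
theorem statement10 {H : Type*} [NormedAddCommGroup H] [InnerProductSpace ℝ H]
    [CompleteSpace H]
    (u : ℕ → H) (E : ℕ → ℝ) (hpos : 0 < E 0) (hmono : Monotone E)
    (hnorm : ∀ i, ⟪u i, u i⟫ = E i)
    (horth : ∀ i j, i ≠ j → ⟪u i, u j⟫ = 0)
    (hcomplete : (Submodule.span ℝ (Set.range u)).topologicalClosure = ⊤)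
    (B : H →L[ℝ] H) (hB : ∀ i, B (u i) = (E 0 / E i) • u i)
    (K : ℕ) (hK : 1 ≤ K)
    (w : H) (hw1 : ⟪w, u 0⟫ = E 0)
    (hw2 : ∀ i, 1 ≤ i → i < K → ⟪w, u i⟫ = 0) :
    ∀ k : ℕ, ‖(B ^ k) w - u 0‖ ≤ (E 0 / E K) ^ k * ‖w - u 0‖ := by
  have hEpos : ∀ i, 0 < E i := fun i => hpos.trans_le (hmono i.zero_le)
  set c : ℝ := E 0 / E K with hc
  have hc0 : 0 ≤ c := div_nonneg hpos.le (hEpos K).le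
  set e : ℕ → H := fun i => (Real.sqrt (E i))⁻¹ • u i with he
  have hsq : ∀ i, Real.sqrt (E i) ≠ 0 := fun i => Real.sqrt_ne_zero'.mpr (hEpos i)
  have hon : Orthonormal ℝ e := by
    rw [orthonormal_iff_ite]
    intro i j
    simp only [he, real_inner_smul_left, real_inner_smul_right]
    by_cases h : i = j
    · subst h
      rw [hnorm i, if_pos rfl, ← Real.mul_self_sqrt (hEpos i).le]
      field_simp
      rw [Real.sqrt_sq (Real.sqrt_nonneg _)]
      exact div_self (pow_ne_zero 2 (hsq i))
    · rw [horth i j h, if_neg h]; ring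
  have hspan : Submodule.span ℝ (Set.range e) = Submodule.span ℝ (Set.range u) := by
    apply le_antisymm
    · rw [Submodule.span_le]; rintro _ ⟨i, rfl⟩
      exact Submodule.smul_mem _ _ (Submodule.subset_span ⟨i, rfl⟩)
    · rw [Submodule.span_le]; rintro _ ⟨i, rfl⟩
      have hui : u i = Real.sqrt (E i) • e i := by
        simp [he, smul_smul, mul_inv_cancel₀ (hsq i)]
      rw [hui]
      exact Submodule.smul_mem _ _ (Submodule.subset_span ⟨i, rfl⟩)
  have hsp : ⊤ ≤ (Submodule.span ℝ (Set.range e)).topologicalClosure := by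
    rw [hspan, hcomplete]
  let b : HilbertBasis ℕ ℝ H := HilbertBasis.mk hon hsp
  have hb : ∀ i, b i = e i := fun i => congrFun (HilbertBasis.coe_mk hon hsp) i
  have hdense : Dense (↑(Submodule.span ℝ (Set.range u)) : Set H) :=
    Submodule.dense_iff_topologicalClosure_eq_top.2 hcomplete
  have hBinner : ∀ (x : H) i, ⟪u i, B x⟫ = (E 0 / E i) * ⟪u i, x⟫ := by
    intro x i
    have heq : (innerSL ℝ (u i)).comp B = (E 0 / E i) • innerSL ℝ (u i) := by
      apply ContinuousLinearMap.ext_on hdense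
      rintro _ ⟨j, rfl⟩
      simp only [ContinuousLinearMap.comp_apply, ContinuousLinearMap.smul_apply, innerSL_apply_apply,
        hB j, real_inner_smul_right, smul_eq_mul]
      by_cases h : i = j
      · subst h; ring
      · rw [horth i j h]; ring
    have := DFunLike.congr_fun heq x
    simpa using this
  have hrepr : ∀ (x : H) i, b.repr (B x) i = (E 0 / E i) * b.repr x i := by
    intro x i
    rw [b.repr_apply_apply, b.repr_apply_apply, hb i]
    simp only [he, real_inner_smul_left]
    rw [hBinner]
    ring
  have hreprzero : ∀ (x : H), (∀ i, i < K → ⟪u i, x⟫ = 0) → ∀ i, i < K → b.repr x i = 0 := by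
    intro x hx i hi
    rw [b.repr_apply_apply, hb i]
    simp only [he, real_inner_smul_left]
    rw [hx i hi, mul_zero]
  have key : ∀ x : H, (∀ i, i < K → ⟪u i, x⟫ = 0) → ‖B x‖ ≤ c * ‖x‖ := by
    intro x hx
    have h1 : ∀ i, |b.repr (B x) i| ≤ c * |b.repr x i| := by
      intro i
      rcases lt_or_ge i K with h | h
      · rw [hrepr, hreprzero x hx i h]; simp
      · rw [hrepr, abs_mul]
        have hle : E 0 / E i ≤ c := by
          rw [hc]
          exact div_le_div_of_nonneg_left hpos.le (hEpos K) (hmono h)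
        have : |E 0 / E i| = E 0 / E i := abs_of_nonneg (div_nonneg hpos.le (hEpos i).le)
        rw [this]
        exact mul_le_mul_of_nonneg_right hle (abs_nonneg _)
    calc ‖B x‖ = ‖b.repr (B x)‖ := (b.repr.norm_map _).symm
    _ ≤ c * ‖b.repr x‖ := lp_norm_le_aux hc0 h1
    _ = c * ‖x‖ := by rw [b.repr.norm_map]
  set v := w - u 0 with hv
  have hvorth : ∀ i, i < K → ⟪u i, v⟫ = 0 := by
    intro i hi
    rw [hv, inner_sub_right]
    rcases Nat.eq_zero_or_pos i with h | h
    · subst h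
      rw [real_inner_comm w (u 0), hw1, hnorm 0, sub_self]
    · rw [real_inner_comm w (u i), hw2 i h hi, horth i 0 (Nat.pos_iff_ne_zero.mp h), sub_self]
  have hBu0 : ∀ k, (B ^ k) (u 0) = u 0 := by
    intro k
    induction k with
    | zero => simp
    | succ n ih =>
      rw [pow_succ, ContinuousLinearMap.mul_apply, hB 0, div_self (hEpos 0).ne', one_smul, ih]
  have main : ∀ k, (∀ i, i < K → ⟪u i, (B ^ k) v⟫ = 0) ∧ ‖(B ^ k) v‖ ≤ c ^ k * ‖v‖ := by
    intro k
    induction k with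
    | zero => simpa using hvorth
    | succ n ih =>
      have hstep : (B ^ (n + 1)) v = B ((B ^ n) v) := by
        rw [pow_succ', ContinuousLinearMap.mul_apply]
      constructor
      · intro i hi
        rw [hstep, hBinner, ih.1 i hi, mul_zero]
      · rw [hstep]
        calc ‖B ((B ^ n) v)‖ ≤ c * ‖(B ^ n) v‖ := key _ ih.1
        _ ≤ c * (c ^ n * ‖v‖) := mul_le_mul_of_nonneg_left ih.2 hc0
        _ = c ^ (n + 1) * ‖v‖ := by ring
  intro k
  have heq : (B ^ k) w - u 0 = (B ^ k) v := by
    rw [hv, map_sub, hBu0]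
  rw [heq]
  exact (main k).2
end

section
/- Let H be a normed real vector space and let B, P̂ : H → H be continuous linear operators with ‖B v‖ ≤ ‖v‖ and ‖v − P̂ v‖ ≤ γ ‖v‖ for all v ∈ H. Given v⁽⁰⁾ ∈ H, define the exact iterates v⁽ᵏ⁾ := B^k v⁽⁰⁾ and the inexact iterates ṽ⁽⁰⁾ := v⁽⁰⁾, ṽ⁽ᵏ⁾ := ṽ⁽ᵏ⁻¹⁾ + P̂ (B ṽ⁽ᵏ⁻¹⁾ − ṽ⁽ᵏ⁻¹⁾). Then for every k ∈ ℕ: ‖v⁽ᵏ⁾ − ṽ⁽ᵏ⁾‖ ≤ 2γ ‖v⁽⁰⁾‖ · Σ_{ν=0}^{k−1} (1 + 2γ)^ν. (Key error-propagation estimate in the proof of Theorem 4.3 of the paper.) -/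
/-!
Write `eₖ := ‖Bᵏ v⁽⁰⁾ - ṽ⁽ᵏ⁾‖`. Since `Bᵏ⁺¹ v⁽⁰⁾ - ṽ⁽ᵏ⁺¹⁾ = B (Bᵏ v⁽⁰⁾ - ṽ⁽ᵏ⁾) + (w - P̂ w)` with
`w = B ṽ⁽ᵏ⁾ - ṽ⁽ᵏ⁾`, and `‖w‖ ≤ 2 eₖ + 2 ‖v⁽⁰⁾‖` because `‖B - Id‖ ≤ 2`, the errors obey
`eₖ₊₁ ≤ (1 + 2γ) eₖ + 2γ ‖v⁽⁰⁾‖` with `e₀ = 0`; unrolling this recursion gives the geometric sum.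
-/

open Finset

theorem le_mul_geom_sum_of_le_mul_add {e : ℕ → ℝ} {a b : ℝ} (ha : 0 ≤ a) (h0 : e 0 ≤ 0)
    (hstep : ∀ k, e (k + 1) ≤ a * e k + b) (k : ℕ) : e k ≤ b * ∑ ν ∈ range k, a ^ ν := by
  induction k with
  | zero => simpa using h0
  | succ k ih =>
    calc e (k + 1) ≤ a * e k + b := hstep k
      _ ≤ a * (b * ∑ ν ∈ range k, a ^ ν) + b := by gcongr
      _ = b * ∑ ν ∈ range (k + 1), a ^ ν := by rw [geom_sum_succ]; ring

theorem nonneg_of_forall_norm_sub_le_mul_norm {H : Type*} [NormedAddCommGroup H] [Nontrivial H]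
    {f : H → H} {γ : ℝ} (hf : ∀ v, ‖v - f v‖ ≤ γ * ‖v‖) : 0 ≤ γ := by
  obtain ⟨v, hv⟩ := exists_ne (0 : H)
  exact nonneg_of_mul_nonneg_left ((norm_nonneg _).trans (hf v)) (norm_pos_iff.2 hv)

section InexactIteration

variable {𝕜 H : Type*} [NormedField 𝕜] [NormedAddCommGroup H] [NormedSpace 𝕜 H]
  {B P : H →L[𝕜] H}

theorem norm_pow_apply_le_of_forall_norm_apply_le (hB : ∀ v, ‖B v‖ ≤ ‖v‖) (k : ℕ) (v : H) :
    ‖(B ^ k) v‖ ≤ ‖v‖ := by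
  induction k with
  | zero => simp
  | succ k ih =>
    rw [pow_succ', mul_apply_eq_comp]
    exact (hB _).trans ih

theorem norm_apply_sub_inexact_step_le {γ : ℝ} (hB : ∀ v, ‖B v‖ ≤ ‖v‖)
    (hP : ∀ v, ‖v - P v‖ ≤ γ * ‖v‖) (hγ : 0 ≤ γ) (x y : H) :
    ‖B x - (y + P (B y - y))‖ ≤ (1 + 2 * γ) * ‖x - y‖ + 2 * γ * ‖x‖ := by
  set w := B y - y
  have hw : ‖w‖ ≤ 2 * ‖x - y‖ + 2 * ‖x‖ := by
    have hsplit : w = B (y - x) + (B x - x) + (x - y) := by simp only [w, map_sub]; abel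
    have hBx : ‖B x - x‖ ≤ 2 * ‖x‖ := by linarith [norm_sub_le (B x) x, hB x]
    have hByx : ‖B (y - x)‖ ≤ ‖x - y‖ := (hB _).trans_eq (norm_sub_rev _ _)
    rw [hsplit]
    linarith [norm_add₃_le (a := B (y - x)) (b := B x - x) (c := x - y)]
  have hdecomp : B x - (y + P w) = B (x - y) + (w - P w) := by
    simp only [w, map_sub]; abel
  calc ‖B x - (y + P w)‖ ≤ ‖B (x - y)‖ + ‖w - P w‖ := by rw [hdecomp]; exact norm_add_le _ _
    _ ≤ ‖x - y‖ + γ * (2 * ‖x - y‖ + 2 * ‖x‖) := by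
        gcongr
        · exact hB _
        · exact (hP w).trans (by gcongr)
    _ = (1 + 2 * γ) * ‖x - y‖ + 2 * γ * ‖x‖ := by ring

end InexactIteration

/-- key error-propagation estimate in the proof of Theorem 4.3 of the
paper: for continuous linear operators `B, P̂` on a normed real vector space with
`‖B v‖ ≤ ‖v‖` and `‖v - P̂ v‖ ≤ γ ‖v‖`, the exact iterates `v⁽ᵏ⁾ = B^k v⁽⁰⁾` and the
inexact iterates `ṽ⁽⁰⁾ = v⁽⁰⁾`, `ṽ⁽ᵏ⁾ = ṽ⁽ᵏ⁻¹⁾ + P̂(B ṽ⁽ᵏ⁻¹⁾ - ṽ⁽ᵏ⁻¹⁾)` satisfy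
`‖v⁽ᵏ⁾ - ṽ⁽ᵏ⁾‖ ≤ 2γ ‖v⁽⁰⁾‖ Σ_{ν=0}^{k-1} (1 + 2γ)^ν`. -/
theorem statement11 {H : Type*} [NormedAddCommGroup H] [NormedSpace ℝ H]
    (B Phat : H →L[ℝ] H) (γ : ℝ)
    (hB : ∀ v : H, ‖B v‖ ≤ ‖v‖)
    (hP : ∀ v : H, ‖v - Phat v‖ ≤ γ * ‖v‖)
    (v0 : H) (tv : ℕ → H) (h0 : tv 0 = v0)
    (hrec : ∀ k : ℕ, tv (k + 1) = tv k + Phat (B (tv k) - tv k)) :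
    ∀ k : ℕ, ‖(B ^ k) v0 - tv k‖ ≤
      2 * γ * ‖v0‖ * ∑ ν ∈ Finset.range k, (1 + 2 * γ) ^ ν := by
  rcases subsingleton_or_nontrivial H with hH | hH
  · simp [Subsingleton.elim _ (0 : H)]
  have hγ : 0 ≤ γ := nonneg_of_forall_norm_sub_le_mul_norm hP
  refine le_mul_geom_sum_of_le_mul_add (e := fun k ↦ ‖(B ^ k) v0 - tv k‖) (by linarith)
    (by simp [h0]) fun n ↦ ?_
  calc ‖(B ^ (n + 1)) v0 - tv (n + 1)‖
      = ‖B ((B ^ n) v0) - (tv n + Phat (B (tv n) - tv n))‖ := by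
        rw [hrec, pow_succ', mul_apply_eq_comp]
    _ ≤ (1 + 2 * γ) * ‖(B ^ n) v0 - tv n‖ + 2 * γ * ‖(B ^ n) v0‖ :=
        norm_apply_sub_inexact_step_le hB hP hγ _ _
    _ ≤ (1 + 2 * γ) * ‖(B ^ n) v0 - tv n‖ + 2 * γ * ‖v0‖ := by
        gcongr; exact norm_pow_apply_le_of_forall_norm_apply_le hB n v0
end

section
/- Suppose there exist N pairwise disjoint open cubes Q_1, …, Q_N ⊆ [0,1)^d, each of side length s, such that V = α almost everywhere on each Q_j. Then for every integer ℓ ≥ 1 the min-max values of the Schrödinger form satisfy μ_{Nℓ} ≤ α + π² (ℓ² + d − 1)/s². (Upper eigenvalue bound of Section 5.1.1 of the paper, also used in Sections 5.2.3 and 5.3.3 with ℓ = 1 and s = εL.) -/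
open MeasureTheory Real
open scoped BigOperators RealInnerProductSpace

noncomputable section

/-- The set of periodic Lipschitz functions on `ℝ^d`. -/
def PeriodicLipschitz (d : ℕ) : Set ((Fin d → ℝ) → ℝ) :=
  {v | ZPeriodic v ∧ ∃ K : NNReal, LipschitzWith K v}

/-- The `m`-th Courant min-max value `μ_m` of the Schrödinger form: the infimum over
`m`-dimensional subspaces `W` of the space of periodic Lipschitz functions of
`sup {|||v|||²/‖v‖² : v ∈ W, v ≠ 0}`, expressed as the infimum of all upper bounds `M`
of the Rayleigh quotient on some such subspace. -/
def minmaxVal (d : ℕ) (V : (Fin d → ℝ) → ℝ) (m : ℕ) : ℝ :=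
  sInf {M : ℝ | ∃ W : Submodule ℝ ((Fin d → ℝ) → ℝ),
    (W : Set ((Fin d → ℝ) → ℝ)) ⊆ PeriodicLipschitz d ∧
    Module.finrank ℝ W = m ∧
    ∀ v ∈ W, v ≠ 0 → energySq V v ≤ M * l2sq v}


open Set

namespace St15

/-- clamped linear ramp -/
def ramp (a w t : ℝ) : ℝ := min 1 (max 0 ((t - a) / w))

/-- 1-D bump: `sin (π · ramp)` -/
def bump (a w t : ℝ) : ℝ := Real.sin (π * ramp a w t)

/-- the a.e.-derivative of `bump` -/
def bder (a w t : ℝ) : ℝ :=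
  (Set.Ioo a (a + w)).indicator (fun u => (π / w) * Real.cos (π * ((u - a) / w))) t

variable {a w t : ℝ}

lemma ramp_mem_Icc : ramp a w t ∈ Icc (0:ℝ) 1 := by
  constructor
  · exact le_min zero_le_one (le_max_left _ _)
  · exact min_le_left _ _

lemma bump_nonneg : 0 ≤ bump a w t :=
  Real.sin_nonneg_of_nonneg_of_le_pi
    (mul_nonneg pi_pos.le ramp_mem_Icc.1)
    (by
      have h := ramp_mem_Icc (a := a) (w := w) (t := t)
      nlinarith [h.1, h.2, pi_pos])

lemma bump_le_one : bump a w t ≤ 1 := Real.sin_le_one _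

lemma ramp_eq_of_le (hw : 0 < w) (h : t ≤ a) : ramp a w t = 0 := by
  unfold ramp
  rw [max_eq_left (by
    apply div_nonpos_of_nonpos_of_nonneg (by linarith) hw.le), min_eq_right zero_le_one]

lemma ramp_eq_of_ge (hw : 0 < w) (h : a + w ≤ t) : ramp a w t = 1 := by
  unfold ramp
  rw [max_eq_right, min_eq_left]
  · rw [le_div_iff₀ hw]; linarith
  · apply div_nonneg (by linarith) hw.le

lemma ramp_eq_self (hw : 0 < w) (h1 : a ≤ t) (h2 : t ≤ a + w) :
    ramp a w t = (t - a) / w := by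
  unfold ramp
  rw [max_eq_right (div_nonneg (by linarith) hw.le), min_eq_right]
  rw [div_le_one hw]; linarith

lemma bump_eq_zero_of_le (hw : 0 < w) (h : t ≤ a) : bump a w t = 0 := by
  rw [bump, ramp_eq_of_le hw h, mul_zero, Real.sin_zero]

lemma bump_eq_zero_of_ge (hw : 0 < w) (h : a + w ≤ t) : bump a w t = 0 := by
  rw [bump, ramp_eq_of_ge hw h, mul_one, Real.sin_pi]

lemma mem_Ioo_of_bump_ne_zero (hw : 0 < w) (h : bump a w t ≠ 0) :
    t ∈ Ioo a (a + w) := by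
  by_contra hc
  rw [mem_Ioo, not_and_or, not_lt, not_lt] at hc
  rcases hc with hc | hc
  · exact h (bump_eq_zero_of_le hw hc)
  · exact h (bump_eq_zero_of_ge hw hc)

lemma mem_Ioo_of_bder_ne_zero (h : bder a w t ≠ 0) : t ∈ Ioo a (a + w) := by
  by_contra hc
  exact h (Set.indicator_of_notMem hc _)

lemma bump_center (hw : 0 < w) : bump a w (a + w / 2) = 1 := by
  rw [bump, ramp_eq_self hw (by linarith) (by linarith)]
  have : (a + w / 2 - a) / w = 1 / 2 := by field_simp; ring
  rw [this]
  rw [show π * (1/2) = π / 2 by ring, Real.sin_pi_div_two]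

/-- bump is Lipschitz with constant `π/w` -/
lemma abs_bump_sub_bump_le (hw : 0 < w) (x y : ℝ) :
    |bump a w x - bump a w y| ≤ π / w * |x - y| := by
  have hsin : ∀ u v : ℝ, |Real.sin u - Real.sin v| ≤ |u - v| := by
    intro u v
    rw [Real.sin_sub_sin]
    calc |2 * Real.sin ((u - v)/2) * Real.cos ((u + v)/2)|
        = 2 * |Real.sin ((u - v)/2)| * |Real.cos ((u + v)/2)| := by
          rw [abs_mul, abs_mul]; simp [abs_of_nonneg, two_pos.le]
      _ ≤ 2 * |(u - v)/2| * 1 := by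
          apply mul_le_mul (by
            apply mul_le_mul_of_nonneg_left (Real.abs_sin_le_abs) two_pos.le)
            (Real.abs_cos_le_one _) (abs_nonneg _) (by positivity)
      _ = |u - v| := by rw [abs_div]; simp [abs_of_nonneg]; ring
  calc |bump a w x - bump a w y| ≤ |π * ramp a w x - π * ramp a w y| := hsin _ _
    _ = π * |ramp a w x - ramp a w y| := by
        rw [← mul_sub, abs_mul, abs_of_nonneg pi_pos.le]
    _ ≤ π * (|x - y| / w) := by
        apply mul_le_mul_of_nonneg_left _ pi_pos.le
        have h1 : |ramp a w x - ramp a w y| ≤ |max 0 ((x - a)/w) - max 0 ((y - a)/w)| := by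
          unfold ramp
          simpa [min_comm] using abs_min_sub_min_le_max (1:ℝ) (max 0 ((x - a)/w)) 1
            (max 0 ((y - a)/w))
        have h2 : |max 0 ((x - a)/w) - max 0 ((y - a)/w)| ≤ |(x - a)/w - (y - a)/w| := by
          simpa [max_comm] using abs_max_sub_max_le_abs ((x - a)/w) ((y - a)/w) 0
        have h3 : |(x - a)/w - (y - a)/w| = |x - y| / w := by
          rw [div_sub_div_same, abs_div, abs_of_nonneg hw.le]
          ring_nf
        rw [← h3]; exact h1.trans h2
    _ = π / w * |x - y| := by ring


/-- the reference smooth function -/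
def sref (a w t : ℝ) : ℝ := Real.sin (π * ((t - a) / w))

lemma hasDerivAt_sref (hw : 0 < w) (t : ℝ) :
    HasDerivAt (sref a w) (π / w * Real.cos (π * ((t - a) / w))) t := by
  have h1 : HasDerivAt (fun u : ℝ => π * ((u - a) / w)) (π / w) t := by
    have : HasDerivAt (fun u : ℝ => u - a) 1 t := (hasDerivAt_id t).sub_const a
    have h2 := (this.div_const w).const_mul π
    rw [← mul_div_assoc, mul_one] at h2
    exact h2
  have := (Real.hasDerivAt_sin (π * ((t - a) / w))).comp t h1
  show HasDerivAt (fun u => Real.sin (π * ((u - a) / w))) _ t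
  exact this.congr_deriv (by ring)

lemma bump_eq_sref_on_Icc (hw : 0 < w) (h1 : a ≤ t) (h2 : t ≤ a + w) :
    bump a w t = sref a w t := by
  rw [bump, ramp_eq_self hw h1 h2, sref]

lemma hasDerivAt_bump_of_mem (hw : 0 < w) (h : t ∈ Ioo a (a + w)) :
    HasDerivAt (bump a w) (bder a w t) t := by
  have heq : bump a w =ᶠ[nhds t] sref a w := by
    filter_upwards [Ioo_mem_nhds h.1 h.2] with u hu
    exact bump_eq_sref_on_Icc hw hu.1.le hu.2.le
  rw [bder, Set.indicator_of_mem h]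
  exact (hasDerivAt_sref hw t).congr_of_eventuallyEq heq

lemma hasDerivAt_bump_of_not_mem (hw : 0 < w) (h : t ∉ Icc a (a + w)) :
    HasDerivAt (bump a w) (bder a w t) t := by
  rw [mem_Icc, not_and_or, not_le, not_le] at h
  have hz : bder a w t = 0 := by
    apply Set.indicator_of_notMem
    rw [mem_Ioo, not_and_or, not_lt, not_lt]
    rcases h with h | h
    · exact Or.inl h.le
    · exact Or.inr h.le
  rw [hz]
  have heq : bump a w =ᶠ[nhds t] fun _ => (0:ℝ) := by
    rcases h with h | h
    · filter_upwards [Iio_mem_nhds h] with u hu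
      exact bump_eq_zero_of_le hw (le_of_lt hu)
    · filter_upwards [Ioi_mem_nhds h] with u hu
      exact bump_eq_zero_of_ge hw (le_of_lt hu)
  exact (hasDerivAt_const t 0).congr_of_eventuallyEq heq

lemma hasDerivAt_bump (hw : 0 < w) (h1 : t ≠ a) (h2 : t ≠ a + w) :
    HasDerivAt (bump a w) (bder a w t) t := by
  by_cases hm : t ∈ Ioo a (a + w)
  · exact hasDerivAt_bump_of_mem hw hm
  · apply hasDerivAt_bump_of_not_mem hw
    rw [mem_Ioo, not_and_or, not_lt, not_lt] at hm
    rw [mem_Icc, not_and_or, not_le, not_le]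
    rcases hm with h | h
    · exact Or.inl (lt_of_le_of_ne h h1)
    · exact Or.inr (lt_of_le_of_ne h (Ne.symm h2))

/-- integral of `bump²` over ℝ -/
lemma integral_bump_sq (hw : 0 < w) : ∫ t, (bump a w t) ^ 2 = w / 2 := by
  have hsupp : ∀ t, t ∉ Ioc a (a + w) → (bump a w t) ^ 2 = 0 := by
    intro t ht
    rw [mem_Ioc, not_and_or, not_lt, not_le] at ht
    rcases ht with h | h
    · rw [bump_eq_zero_of_le hw h]; ring
    · rw [bump_eq_zero_of_ge hw h.le]; ring
  rw [← setIntegral_eq_integral_of_forall_compl_eq_zero hsupp,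
    ← intervalIntegral.integral_of_le (by linarith : a ≤ a + w)]
  have hcong : ∫ t in a..(a + w), (bump a w t) ^ 2
      = ∫ t in a..(a + w), (sref a w t) ^ 2 := by
    apply intervalIntegral.integral_congr
    intro t ht
    rw [Set.uIcc_of_le (by linarith : a ≤ a + w)] at ht
    simp only [bump_eq_sref_on_Icc hw ht.1 ht.2]
  rw [hcong]
  have : ∀ t, (sref a w t) ^ 2 = (fun u => Real.sin ((π/w) * u) ^ 2) (t - a) := by
    intro t; simp only [sref]; ring_nf
  simp_rw [this]
  rw [intervalIntegral.integral_comp_sub_right (fun u => Real.sin ((π/w) * u) ^ 2) a]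
  simp only [sub_self, add_sub_cancel_left]
  rw [intervalIntegral.integral_comp_mul_left (fun u => Real.sin u ^ 2)
    (ne_of_gt (by positivity : (0:ℝ) < π / w))]
  rw [mul_zero, integral_sin_sq]
  have hpw : π / w * w = π := by field_simp
  rw [hpw]
  simp [Real.sin_pi, Real.sin_zero]
  field_simp

/-- integral of `bder²` over ℝ -/
lemma integral_bder_sq (hw : 0 < w) : ∫ t, (bder a w t) ^ 2 = π ^ 2 / (2 * w) := by
  have h1 : ∀ t, (bder a w t) ^ 2
      = (Set.Ioo a (a+w)).indicator (fun u => ((π / w) * Real.cos (π * ((u - a) / w))) ^ 2) t := by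
    intro t
    by_cases ht : t ∈ Ioo a (a + w)
    · rw [bder, Set.indicator_of_mem ht, Set.indicator_of_mem ht]
    · rw [bder, Set.indicator_of_notMem ht, Set.indicator_of_notMem ht]; ring
  simp_rw [h1]
  rw [integral_indicator measurableSet_Ioo, ← integral_Ioc_eq_integral_Ioo,
    ← intervalIntegral.integral_of_le (by linarith : a ≤ a + w)]
  have : ∀ t, ((π / w) * Real.cos (π * ((t - a) / w))) ^ 2
      = (fun u => (π/w)^2 * Real.cos ((π/w) * u) ^ 2) (t - a) := by
    intro t; ring_nf
  simp_rw [this]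
  rw [intervalIntegral.integral_comp_sub_right (fun u => (π/w)^2 * Real.cos ((π/w) * u) ^ 2) a]
  simp only [sub_self, add_sub_cancel_left]
  rw [intervalIntegral.integral_const_mul]
  rw [intervalIntegral.integral_comp_mul_left (fun u => Real.cos u ^ 2)
    (ne_of_gt (by positivity : (0:ℝ) < π / w))]
  rw [mul_zero, integral_cos_sq]
  have hpw : π / w * w = π := by field_simp
  rw [hpw]
  simp [Real.sin_pi, Real.sin_zero, Real.cos_pi]
  field_simp

lemma continuous_bump : Continuous (bump a w) := by
  apply Real.continuous_sin.comp
  apply continuous_const.mul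
  exact continuous_const.min ((continuous_const.max ((continuous_id.sub continuous_const).div_const w)))

lemma integrable_bump_sq (hw : 0 < w) : Integrable (fun t => (bump a w t) ^ 2) := by
  apply Continuous.integrable_of_hasCompactSupport (continuous_bump.pow 2)
  apply HasCompactSupport.intro (isCompact_Icc (a := a) (b := a + w))
  intro t ht
  rw [mem_Icc, not_and_or, not_le, not_le] at ht
  rcases ht with h | h
  · rw [Pi.pow_apply, bump_eq_zero_of_le hw h.le]; ring
  · rw [Pi.pow_apply, bump_eq_zero_of_ge hw h.le]; ring

lemma integrable_bder_sq (hw : 0 < w) : Integrable (fun t => (bder a w t) ^ 2) := by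
  have h1 : ∀ t, (bder a w t) ^ 2
      = (Set.Ioo a (a+w)).indicator (fun u => ((π / w) * Real.cos (π * ((u - a) / w))) ^ 2) t := by
    intro t
    by_cases ht : t ∈ Ioo a (a + w)
    · rw [bder, Set.indicator_of_mem ht, Set.indicator_of_mem ht]
    · rw [bder, Set.indicator_of_notMem ht, Set.indicator_of_notMem ht]; ring
  simp_rw [h1]
  rw [integrable_indicator_iff measurableSet_Ioo]
  have : IntegrableOn (fun u => ((π / w) * Real.cos (π * ((u - a) / w))) ^ 2) (Icc a (a+w)) :=
    Continuous.integrableOn_Icc (by continuity)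
  exact this.mono_set Ioo_subset_Icc_self


/-- product bump -/
def pb (a w : Fin d → ℝ) (x : Fin d → ℝ) : ℝ := ∏ i, bump (a i) (w i) (x i)

/-- open slab, the support of `pb` -/
def slab (a w : Fin d → ℝ) : Set (Fin d → ℝ) := {x | ∀ i, x i ∈ Ioo (a i) (a i + w i)}

/-- squared gradient of `pb` -/
def gsq (a w : Fin d → ℝ) (x : Fin d → ℝ) : ℝ :=
  ∑ i, (bder (a i) (w i) (x i))^2 * ∏ j ∈ Finset.univ.erase i, (bump (a j) (w j) (x j))^2

/-- total derivative of `pb` -/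
def pbD (a w : Fin d → ℝ) (x : Fin d → ℝ) : (Fin d → ℝ) →L[ℝ] ℝ :=
  ∑ i, (∏ j ∈ Finset.univ.erase i, bump (a j) (w j) (x j)) •
    (bder (a i) (w i) (x i) • ContinuousLinearMap.proj i)

variable {a w : Fin d → ℝ} {x : Fin d → ℝ}

lemma mem_slab_of_pb_ne_zero (hw : ∀ i, 0 < w i) (h : pb a w x ≠ 0) : x ∈ slab a w := by
  intro i
  rcases Finset.prod_ne_zero_iff.1 h i (Finset.mem_univ i) with h'
  exact mem_Ioo_of_bump_ne_zero (hw i) h'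

lemma hasFDerivAt_pb (hw : ∀ i, 0 < w i)
    (hx : ∀ i, x i ≠ a i ∧ x i ≠ a i + w i) :
    HasFDerivAt (pb a w) (pbD a w x) x := by
  have h : ∀ i ∈ Finset.univ, HasFDerivAt (fun y : Fin d → ℝ => bump (a i) (w i) (y i))
      (bder (a i) (w i) (x i) • ContinuousLinearMap.proj (R := ℝ) (φ := fun _ : Fin d => ℝ) i) x := by
    intro i _
    have hproj : HasFDerivAt (fun y : Fin d → ℝ => y i)
        (ContinuousLinearMap.proj (R := ℝ) (φ := fun _ : Fin d => ℝ) i) x :=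
      (ContinuousLinearMap.proj (R := ℝ) (φ := fun _ : Fin d => ℝ) i).hasFDerivAt
    exact (hasDerivAt_bump (hw i) (hx i).1 (hx i).2).comp_hasFDerivAt (h₂ := bump (a i) (w i))
      (f := fun y : Fin d → ℝ => y i) x hproj
  exact HasFDerivAt.finset_prod h

lemma pbD_apply_single (i : Fin d) :
    pbD a w x (Pi.single i 1)
      = bder (a i) (w i) (x i) * ∏ j ∈ Finset.univ.erase i, bump (a j) (w j) (x j) := by
  rw [pbD, ContinuousLinearMap.sum_apply]
  rw [Finset.sum_eq_single i]
  · simp [ContinuousLinearMap.smul_apply, ContinuousLinearMap.proj_apply, mul_comm]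
  · intro m _ hmi
    simp [ContinuousLinearMap.smul_apply, ContinuousLinearMap.proj_apply,
      Pi.single_eq_of_ne hmi]
  · intro h; exact absurd (Finset.mem_univ i) h

lemma pbD_apply_eq_zero_of_not_mem (hw : ∀ i, 0 < w i) (hx : x ∉ slab a w) (i : Fin d) :
    pbD a w x (Pi.single i 1) = 0 := by
  rw [pbD_apply_single]
  rw [slab, mem_setOf_eq] at hx
  push_neg at hx
  obtain ⟨m, hm⟩ := hx
  by_cases hmi : m = i
  · subst hmi
    have : bder (a m) (w m) (x m) = 0 := by
      by_contra hne
      exact hm (mem_Ioo_of_bder_ne_zero hne)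
    rw [this, zero_mul]
  · have : bump (a m) (w m) (x m) = 0 := by
      by_contra hne
      exact hm (mem_Ioo_of_bump_ne_zero (hw m) hne)
    rw [Finset.prod_eq_zero (Finset.mem_erase.2 ⟨hmi, Finset.mem_univ m⟩) this, mul_zero]

lemma pb_eq_zero_of_not_mem (hw : ∀ i, 0 < w i) (hx : x ∉ slab a w) : pb a w x = 0 := by
  by_contra hne
  exact hx (mem_slab_of_pb_ne_zero hw hne)

lemma integral_pb_sq (hw : ∀ i, 0 < w i) :
    ∫ x : Fin d → ℝ, (pb a w x) ^ 2 = ∏ i, (w i / 2) := by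
  have : ∀ x : Fin d → ℝ, (pb a w x) ^ 2 = ∏ i, (bump (a i) (w i) (x i)) ^ 2 := by
    intro x; rw [pb, ← Finset.prod_pow]
  simp_rw [this]
  rw [MeasureTheory.integral_fintype_prod_volume_eq_prod (𝕜 := ℝ)
    (fun i t => (bump (a i) (w i) t) ^ 2)]
  exact Finset.prod_congr rfl fun i _ => integral_bump_sq (hw i)

lemma integrable_pb_sq (hw : ∀ i, 0 < w i) :
    Integrable (fun x : Fin d → ℝ => (pb a w x) ^ 2) := by
  have : ∀ x : Fin d → ℝ, (pb a w x) ^ 2 = ∏ i, (bump (a i) (w i) (x i)) ^ 2 := by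
    intro x; rw [pb, ← Finset.prod_pow]
  simp_rw [this]
  exact MeasureTheory.Integrable.fintype_prod_dep (fun i => integrable_bump_sq (hw i))

/-- the summand of `gsq` as a full product -/
lemma gsq_summand_as_prod (i : Fin d) (x : Fin d → ℝ) :
    (bder (a i) (w i) (x i))^2 * ∏ j ∈ Finset.univ.erase i, (bump (a j) (w j) (x j))^2
      = ∏ m, (if m = i then (bder (a m) (w m) (x m))^2 else (bump (a m) (w m) (x m))^2) := by
  rw [← Finset.mul_prod_erase Finset.univ _ (Finset.mem_univ i), if_pos rfl]
  congr 1
  apply Finset.prod_congr rfl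
  intro j hj
  rw [if_neg (Finset.mem_erase.1 hj).1]

lemma integrable_gsq_summand (hw : ∀ i, 0 < w i) (i : Fin d) :
    Integrable (fun x : Fin d → ℝ =>
      (bder (a i) (w i) (x i))^2 * ∏ j ∈ Finset.univ.erase i, (bump (a j) (w j) (x j))^2) := by
  simp_rw [gsq_summand_as_prod]
  apply MeasureTheory.Integrable.fintype_prod_dep (𝕜 := ℝ)
    (f := fun m t => if m = i then (bder (a m) (w m) t)^2 else (bump (a m) (w m) t)^2)
  intro m
  by_cases hmi : m = i
  · simpa [hmi] using integrable_bder_sq (hw i)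
  · simpa [hmi] using integrable_bump_sq (hw m)

lemma integrable_gsq (hw : ∀ i, 0 < w i) : Integrable (gsq a w) := by
  unfold gsq
  exact MeasureTheory.integrable_finset_sum _ (fun i _ => integrable_gsq_summand hw i)

lemma integral_gsq (hw : ∀ i, 0 < w i) :
    ∫ x : Fin d → ℝ, gsq a w x
      = ∑ i, π ^ 2 / (2 * w i) * ∏ j ∈ Finset.univ.erase i, (w j / 2) := by
  unfold gsq
  rw [MeasureTheory.integral_finset_sum _ (fun i _ => integrable_gsq_summand hw i)]
  apply Finset.sum_congr rfl
  intro i _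
  simp_rw [gsq_summand_as_prod]
  rw [MeasureTheory.integral_fintype_prod_volume_eq_prod (𝕜 := ℝ)
    (fun m t => if m = i then (bder (a m) (w m) t)^2 else (bump (a m) (w m) t)^2)]
  rw [← Finset.mul_prod_erase Finset.univ _ (Finset.mem_univ i)]
  congr 1
  · simp only [eq_self_iff_true, if_true]
    exact integral_bder_sq (hw i)
  · apply Finset.prod_congr rfl
    intro j hj
    simp only [(Finset.mem_erase.1 hj).1, if_false]
    exact integral_bump_sq (hw j)


/-- periodized 1-D bump -/
def bumpP (a w t : ℝ) : ℝ := bump a w (Int.fract t)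

variable {a w : ℝ}

lemma abs_bumpP_le_one {t : ℝ} : |bumpP a w t| ≤ 1 := by
  rw [bumpP, abs_of_nonneg bump_nonneg]; exact bump_le_one

lemma abs_bumpP_sub_le_aux (hw : 0 < w) (h0 : 0 ≤ a) (h1 : a + w ≤ 1) {x y : ℝ}
    (hxy : x ≤ y) : |bumpP a w x - bumpP a w y| ≤ π / w * |x - y| := by
  have hK : 0 ≤ π / w := by positivity
  by_cases hf : (⌊x⌋ : ℤ) = ⌊y⌋
  · have : Int.fract x - Int.fract y = x - y := by
      rw [Int.fract, Int.fract, hf]; ring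
    calc |bumpP a w x - bumpP a w y| ≤ π / w * |Int.fract x - Int.fract y| :=
          abs_bump_sub_bump_le hw _ _
      _ = π / w * |x - y| := by rw [this]
  · have hlt : ⌊x⌋ < ⌊y⌋ := lt_of_le_of_ne (Int.floor_le_floor hxy) hf
    have hfl : (⌊x⌋ : ℝ) + 1 ≤ (⌊y⌋ : ℝ) := by exact_mod_cast Int.add_one_le_of_lt hlt
    have hb1 : bump a w 1 = 0 := bump_eq_zero_of_ge hw h1
    have hb0 : bump a w 0 = 0 := bump_eq_zero_of_le hw h0
    have e1 : |bumpP a w x| ≤ π / w * (1 - Int.fract x) := by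
      have := abs_bump_sub_bump_le (a := a) hw (Int.fract x) 1
      rw [hb1, sub_zero] at this
      calc |bumpP a w x| ≤ π / w * |Int.fract x - 1| := this
        _ = π / w * (1 - Int.fract x) := by
            rw [abs_of_nonpos (by linarith [Int.fract_lt_one x])]; ring_nf
    have e2 : |bumpP a w y| ≤ π / w * Int.fract y := by
      have := abs_bump_sub_bump_le (a := a) hw (Int.fract y) 0
      rw [hb0, sub_zero] at this
      calc |bumpP a w y| ≤ π / w * |Int.fract y - 0| := this
        _ = π / w * Int.fract y := by
            rw [sub_zero, abs_of_nonneg (Int.fract_nonneg y)]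
    have key : (1 - Int.fract x) + Int.fract y ≤ y - x := by
      rw [Int.fract, Int.fract]
      have := hfl
      linarith
    calc |bumpP a w x - bumpP a w y| ≤ |bumpP a w x| + |bumpP a w y| := abs_sub _ _
      _ ≤ π / w * (1 - Int.fract x) + π / w * Int.fract y := add_le_add e1 e2
      _ = π / w * ((1 - Int.fract x) + Int.fract y) := by ring
      _ ≤ π / w * (y - x) := by
          apply mul_le_mul_of_nonneg_left key hK
      _ = π / w * |x - y| := by rw [abs_sub_comm, abs_of_nonneg (by linarith)]

lemma abs_bumpP_sub_le (hw : 0 < w) (h0 : 0 ≤ a) (h1 : a + w ≤ 1) (x y : ℝ) :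
    |bumpP a w x - bumpP a w y| ≤ π / w * |x - y| := by
  rcases le_total x y with h | h
  · exact abs_bumpP_sub_le_aux hw h0 h1 h
  · rw [abs_sub_comm, abs_sub_comm x y]
    exact abs_bumpP_sub_le_aux hw h0 h1 h

/-- product difference estimate for `[-1,1]`-valued factors -/
lemma abs_prod_sub_prod_le {ι : Type*} [DecidableEq ι] (s : Finset ι) (u v : ι → ℝ)
    (hu : ∀ i, |u i| ≤ 1) (hv : ∀ i, |v i| ≤ 1) :
    |∏ i ∈ s, u i - ∏ i ∈ s, v i| ≤ ∑ i ∈ s, |u i - v i| := by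
  induction s using Finset.induction_on with
  | empty => simp
  | insert c s' hns ih =>
    rw [Finset.prod_insert hns, Finset.prod_insert hns, Finset.sum_insert hns]
    have hvp : |∏ i ∈ s', v i| ≤ 1 := by
      rw [Finset.abs_prod]
      apply Finset.prod_le_one (fun i _ => abs_nonneg _) (fun i _ => hv i)
    calc |u c * ∏ i ∈ s', u i - v c * ∏ i ∈ s', v i|
        = |u c * (∏ i ∈ s', u i - ∏ i ∈ s', v i) + (u c - v c) * ∏ i ∈ s', v i| := by
          ring_nf
      _ ≤ |u c * (∏ i ∈ s', u i - ∏ i ∈ s', v i)| + |(u c - v c) * ∏ i ∈ s', v i| :=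
          abs_add_le _ _
      _ ≤ 1 * |∏ i ∈ s', u i - ∏ i ∈ s', v i| + |u c - v c| * 1 := by
          rw [abs_mul, abs_mul]
          exact add_le_add (mul_le_mul_of_nonneg_right (hu c) (abs_nonneg _))
            (mul_le_mul_of_nonneg_left hvp (abs_nonneg _))
      _ ≤ |u c - v c| + ∑ i ∈ s', |u i - v i| := by
          rw [one_mul, mul_one, add_comm]
          exact add_le_add le_rfl ih

/-- diagonal square expansion -/
lemma sq_sum_of_pairwise {ι : Type*} [Fintype ι] (g : ι → ℝ)
    (h : ∀ p q : ι, p ≠ q → g p * g q = 0) :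
    (∑ p, g p) ^ 2 = ∑ p, (g p) ^ 2 := by
  rw [sq, Finset.sum_mul_sum]
  apply Finset.sum_congr rfl
  intro p _
  rw [Finset.sum_eq_single p]
  · rw [sq]
  · intro q _ hq
    exact h p q (Ne.symm hq)
  · intro hp; exact absurd (Finset.mem_univ p) hp




/-- sum of squares of partial derivatives -/
lemma sum_sq_pbD_apply {a w x : Fin d → ℝ} :
    ∑ i, (pbD a w x (Pi.single i 1)) ^ 2 = gsq a w x := by
  unfold gsq
  apply Finset.sum_congr rfl
  intro i _
  rw [pbD_apply_single, mul_pow, Finset.prod_pow]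

lemma gsq_eq_zero_of_not_mem {a w x : Fin d → ℝ} (hw : ∀ i, 0 < w i) (hx : x ∉ slab a w) :
    gsq a w x = 0 := by
  rw [slab, mem_setOf_eq] at hx
  push_neg at hx
  obtain ⟨m, hm⟩ := hx
  apply Finset.sum_eq_zero
  intro i _
  by_cases hmi : m = i
  · subst hmi
    have : bder (a m) (w m) (x m) = 0 := by
      by_contra hne; exact hm (mem_Ioo_of_bder_ne_zero hne)
    rw [this]; ring
  · have : bump (a m) (w m) (x m) = 0 := by
      by_contra hne; exact hm (mem_Ioo_of_bump_ne_zero (hw m) hne)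
    rw [Finset.prod_eq_zero (Finset.mem_erase.2 ⟨hmi, Finset.mem_univ m⟩) (by rw [this]; ring),
      mul_zero]

lemma slab_subset_cell {a w : Fin d → ℝ} (h0 : ∀ i, 0 ≤ a i) (h1 : ∀ i, a i + w i ≤ 1) :
    slab a w ⊆ Set.univ.pi fun _ => Set.Ico (0 : ℝ) 1 := by
  intro x hx i _
  have := hx i
  constructor
  · have := h0 i; exact le_of_lt (lt_of_le_of_lt (h0 i) (hx i).1)
  · exact lt_of_lt_of_le (hx i).2 (h1 i)

/-- periodized product bump -/
def pbP (a w : Fin d → ℝ) (x : Fin d → ℝ) : ℝ := pb a w (fun i => Int.fract (x i))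

lemma pbP_eq_pb_of_mem_cell {a w x : Fin d → ℝ} (hx : ∀ i, 0 ≤ x i ∧ x i < 1) :
    pbP a w x = pb a w x := by
  unfold pbP
  congr 1
  funext i
  exact Int.fract_eq_self.2 (hx i)

lemma pbP_periodic {a w : Fin d → ℝ} (x : Fin d → ℝ) (k : Fin d → ℤ) :
    pbP a w (x + fun i => (k i : ℝ)) = pbP a w x := by
  unfold pbP
  congr 1
  funext i
  simp [Int.fract_add_intCast]

lemma pbP_lipschitz {a w : Fin d → ℝ} (hw : ∀ i, 0 < w i) (h0 : ∀ i, 0 ≤ a i)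
    (h1 : ∀ i, a i + w i ≤ 1) :
    LipschitzWith (∑ i, π / w i).toNNReal (pbP a w) := by
  apply LipschitzWith.of_dist_le_mul
  intro x y
  rw [Real.coe_toNNReal _ (Finset.sum_nonneg fun i _ => div_nonneg pi_pos.le (hw i).le)]
  rw [Real.dist_eq]
  have h2 : pbP a w x = ∏ i, bumpP (a i) (w i) (x i) := rfl
  have h3 : pbP a w y = ∏ i, bumpP (a i) (w i) (y i) := rfl
  rw [h2, h3]
  calc |∏ i, bumpP (a i) (w i) (x i) - ∏ i, bumpP (a i) (w i) (y i)|
      ≤ ∑ i, |bumpP (a i) (w i) (x i) - bumpP (a i) (w i) (y i)| :=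
        abs_prod_sub_prod_le Finset.univ _ _ (fun i => abs_bumpP_le_one)
          (fun i => abs_bumpP_le_one)
    _ ≤ ∑ i, π / w i * dist x y := by
        apply Finset.sum_le_sum
        intro i _
        calc |bumpP (a i) (w i) (x i) - bumpP (a i) (w i) (y i)|
            ≤ π / w i * |x i - y i| := abs_bumpP_sub_le (hw i) (h0 i) (h1 i) _ _
          _ ≤ π / w i * dist x y := by
              apply mul_le_mul_of_nonneg_left _ (div_nonneg pi_pos.le (hw i).le)
              rw [← Real.dist_eq]
              exact dist_le_pi_dist x y i
    _ = (∑ i, π / w i) * dist x y := by rw [Finset.sum_mul]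


end St15

open St15

set_option maxHeartbeats 2000000 in
/-- upper eigenvalue bound of Section 5.1.1 of the paper: if there are
`N` pairwise disjoint open cubes `Q_j = z_j + (0,s)^d ⊆ [0,1)^d` with `V = α` a.e. on each
`Q_j`, then `μ_{Nℓ} ≤ α + π² (ℓ² + d - 1)/s²` for every integer `ℓ ≥ 1`. -/
theorem statement15 (d : ℕ) (hd : 1 ≤ d) (ε α β s : ℝ) (V : (Fin d → ℝ) → ℝ)
    (N : ℕ) (z : Fin N → Fin d → ℝ)
    (hε : 0 < ε) (hεN : ∃ n : ℕ, 0 < n ∧ ε * n = 1)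
    (hα : 0 ≤ α) (hαβ : α ≤ β) (hV : IsGridPotential ε α β V)
    (hs : 0 < s)
    (hsub : ∀ j i, 0 ≤ z j i ∧ z j i + s ≤ 1)
    (hdisj : ∀ j j', j ≠ j' →
      Disjoint {x : Fin d → ℝ | ∀ i, z j i < x i ∧ x i < z j i + s}
        {x : Fin d → ℝ | ∀ i, z j' i < x i ∧ x i < z j' i + s})
    (hVα : ∀ j, ∀ᵐ x : Fin d → ℝ, (∀ i, z j i < x i ∧ x i < z j i + s) → V x = α) :
    ∀ ℓ : ℕ, 1 ≤ ℓ →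
      minmaxVal d V (N * ℓ) ≤ α + π ^ 2 * ((ℓ : ℝ) ^ 2 + (d : ℝ) - 1) / s ^ 2 := by
  intro ℓ hℓ
  classical
  set M : ℝ := α + π ^ 2 * ((ℓ : ℝ) ^ 2 + (d : ℝ) - 1) / s ^ 2 with hMdef
  have hdR : (1:ℝ) ≤ (d:ℝ) := by exact_mod_cast hd
  have hℓR : (1:ℝ) ≤ (ℓ:ℝ) := by exact_mod_cast hℓ
  have hℓ0 : (0:ℝ) < (ℓ:ℝ) := by linarith
  have hM0 : 0 ≤ M := by
    have h1 : 0 ≤ π ^ 2 * ((ℓ : ℝ) ^ 2 + (d : ℝ) - 1) / s ^ 2 := by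
      apply div_nonneg (mul_nonneg (sq_nonneg π) (by nlinarith)) (sq_nonneg s)
    rw [hMdef]; linarith
  -- the construction
  set i0 : Fin d := ⟨0, hd⟩ with hi0
  set A : Fin N × Fin ℓ → Fin d → ℝ :=
    fun p i => z p.1 i + if i = i0 then (p.2 : ℝ) * (s / ℓ) else 0 with hAdef
  set Wf : Fin d → ℝ := fun i => if i = i0 then s / ℓ else s with hWdef
  have hW : ∀ i, 0 < Wf i := by
    intro i
    rw [hWdef]
    by_cases h : i = i0 <;> simp [h] <;> positivity
  have hA0 : ∀ p i, 0 ≤ A p i := by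
    intro p i
    rw [hAdef]
    have h1 := (hsub p.1 i).1
    have h3 : (0:ℝ) ≤ (p.2 : ℝ) * (s / ℓ) := by positivity
    by_cases h : i = i0
    · subst h
      simp only [eq_self_iff_true, if_true, if_pos rfl]
      linarith
    · simp only [h, if_false]
      linarith
  have hA1 : ∀ p i, A p i + Wf i ≤ 1 := by
    intro p i
    have h2 := (hsub p.1 i).2
    by_cases h : i = i0
    · subst h
      rw [hAdef, hWdef]
      simp only [eq_self_iff_true, if_true, if_pos rfl]
      have hk : (p.2 : ℝ) + 1 ≤ (ℓ : ℝ) := by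
        have := p.2.2
        exact_mod_cast Nat.succ_le_of_lt this
      have : (p.2 : ℝ) * (s / ℓ) + s / ℓ ≤ s := by
        have hsl : 0 < s / (ℓ:ℝ) := by positivity
        calc (p.2 : ℝ) * (s / ℓ) + s / ℓ = ((p.2 : ℝ) + 1) * (s / ℓ) := by ring
          _ ≤ (ℓ : ℝ) * (s / ℓ) := by
              apply mul_le_mul_of_nonneg_right hk hsl.le
          _ = s := by field_simp
      linarith
    · rw [hAdef, hWdef]
      simp only [h, if_false, add_zero]
      linarith
  have hQ : ∀ p x, x ∈ slab (A p) Wf → ∀ i, z p.1 i < x i ∧ x i < z p.1 i + s := by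
    intro p x hx i
    have h := hx i
    rw [mem_Ioo] at h
    by_cases hi : i = i0
    · rw [hAdef] at h; rw [hWdef] at h
      simp only [hi, if_true] at h
      constructor
      · have : (0:ℝ) ≤ (p.2 : ℝ) * (s / ℓ) := by positivity
        calc z p.1 i ≤ z p.1 i + (p.2 : ℝ) * (s / ℓ) := by linarith
          _ < x i := by rw [hi]; exact h.1
      · have hk : (p.2 : ℝ) + 1 ≤ (ℓ : ℝ) := by
          exact_mod_cast Nat.succ_le_of_lt p.2.2
        have hsl : (0:ℝ) < s / (ℓ:ℝ) := by positivity
        have : (p.2 : ℝ) * (s / ℓ) + s / ℓ ≤ s := by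
          calc (p.2 : ℝ) * (s / ℓ) + s / ℓ = ((p.2 : ℝ) + 1) * (s / ℓ) := by ring
            _ ≤ (ℓ : ℝ) * (s / ℓ) := mul_le_mul_of_nonneg_right hk hsl.le
            _ = s := by field_simp
        calc x i < z p.1 i + (p.2 : ℝ) * (s / ℓ) + s / ℓ := by
              rw [hi]; simpa [add_assoc] using h.2
          _ ≤ z p.1 i + s := by linarith
    · rw [hAdef] at h; rw [hWdef] at h
      simp only [hi, if_false, add_zero] at h
      exact h
  have hdisj2 : ∀ p q : Fin N × Fin ℓ, p ≠ q → ∀ x,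
      x ∈ slab (A p) Wf → x ∈ slab (A q) Wf → False := by
    intro p q hpq x hxp hxq
    by_cases hj : p.1 = q.1
    · -- same cube, different slice
      have hk : p.2 ≠ q.2 := by
        intro hk2
        exact hpq (Prod.ext hj hk2)
      have h1 := hxp i0
      have h2 := hxq i0
      rw [mem_Ioo] at h1 h2
      rw [hAdef] at h1 h2; rw [hWdef] at h1 h2
      simp only [eq_self_iff_true, if_true, if_pos rfl] at h1 h2
      rw [hj] at h1
      have hsl : (0:ℝ) < s / (ℓ:ℝ) := by positivity
      rcases lt_trichotomy (p.2 : ℕ) (q.2 : ℕ) with hlt | heqv | hlt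
      · have hcast : ((p.2:ℕ) : ℝ) + 1 ≤ ((q.2:ℕ) : ℝ) := by exact_mod_cast hlt
        have hmul := mul_le_mul_of_nonneg_right hcast hsl.le
        nlinarith [h1.1, h1.2, h2.1, h2.2]
      · exact hk (Fin.ext heqv)
      · have hcast : ((q.2:ℕ) : ℝ) + 1 ≤ ((p.2:ℕ) : ℝ) := by exact_mod_cast hlt
        have hmul := mul_le_mul_of_nonneg_right hcast hsl.le
        nlinarith [h1.1, h1.2, h2.1, h2.2]
    · exact Set.disjoint_left.1 (hdisj p.1 q.1 hj) (hQ p x hxp) (hQ q x hxq)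
  have hcell : ∀ p : Fin N × Fin ℓ, slab (A p) Wf ⊆ unitCell d :=
    fun p => slab_subset_cell (hA0 p) (hA1 p)
  set FF : Fin N × Fin ℓ → (Fin d → ℝ) → ℝ := fun p => pbP (A p) Wf with hFFdef
  -- each FF p is periodic and Lipschitz
  have hFPL : ∀ p, FF p ∈ PeriodicLipschitz d := by
    intro p
    refine ⟨fun x k => pbP_periodic x k, ⟨(∑ i, π / Wf i).toNNReal, pbP_lipschitz hW (hA0 p) (hA1 p)⟩⟩
  -- the span is contained in the periodic Lipschitz functions
  have hWsub : ((Submodule.span ℝ (Set.range FF) : Submodule ℝ ((Fin d → ℝ) → ℝ)) :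
      Set ((Fin d → ℝ) → ℝ)) ⊆ PeriodicLipschitz d := by
    intro v hv
    rw [SetLike.mem_coe] at hv
    induction hv using Submodule.span_induction with
    | mem x hx =>
      obtain ⟨p, rfl⟩ := hx
      exact hFPL p
    | zero =>
      refine ⟨fun x k => rfl, 0, ?_⟩
      exact LipschitzWith.const' 0
    | add x y hx hy hx' hy' =>
      obtain ⟨hpx, Kx, hKx⟩ := hx'
      obtain ⟨hpy, Ky, hKy⟩ := hy'
      refine ⟨fun x' k => ?_, Kx + Ky, ?_⟩
      · show x (x' + fun i => (k i : ℝ)) + y (x' + fun i => (k i : ℝ)) = x x' + y x'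
        rw [hpx x' k, hpy x' k]
      · exact hKx.add hKy
    | smul c x hx hx' =>
      obtain ⟨hpx, Kx, hKx⟩ := hx'
      refine ⟨fun x' k => ?_, ‖c‖₊ * Kx, ?_⟩
      · show c * x (x' + fun i => (k i : ℝ)) = c * x x'
        rw [hpx x' k]
      · apply LipschitzWith.of_dist_le_mul
        intro a b
        have h1 : dist ((c • x) a) ((c • x) b) = ‖c‖ * dist (x a) (x b) := by
          rw [Pi.smul_apply, Pi.smul_apply, dist_smul₀]
        rw [h1]
        push_cast
        calc ‖c‖ * dist (x a) (x b) ≤ ‖c‖ * ((Kx : ℝ) * dist a b) := by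
              apply mul_le_mul_of_nonneg_left (hKx.dist_le_mul a b) (norm_nonneg c)
          _ = ‖c‖ * (Kx : ℝ) * dist a b := by ring
  -- linear independence
  have hLI : LinearIndependent ℝ FF := by
    rw [Fintype.linearIndependent_iff]
    intro g hg q
    set ctr : Fin d → ℝ := fun i => A q i + Wf i / 2 with hctr
    have hctrIco : ∀ i, 0 ≤ ctr i ∧ ctr i < 1 := by
      intro i
      have h0 := hA0 q i
      have h1 := hA1 q i
      have h2 := hW i
      have h3 : 0 < Wf i / 2 := by positivity
      have h4 : Wf i / 2 < Wf i := by linarith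
      constructor
      · rw [hctr]; dsimp only; exact add_nonneg h0 h3.le
      · rw [hctr]; dsimp only
        exact lt_of_lt_of_le (by linarith : A q i + Wf i / 2 < A q i + Wf i) h1
    have hctrslab : ctr ∈ slab (A q) Wf := by
      intro i
      have h2 := hW i
      constructor
      · show A q i < A q i + Wf i / 2; linarith
      · show A q i + Wf i / 2 < A q i + Wf i; linarith
    have hFq : FF q ctr = 1 := by
      rw [hFFdef]
      dsimp only
      rw [pbP_eq_pb_of_mem_cell hctrIco, pb]
      apply Finset.prod_eq_one
      intro i _
      exact bump_center (hW i)
    have hFp : ∀ p, p ≠ q → FF p ctr = 0 := by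
      intro p hpq
      rw [hFFdef]
      dsimp only
      rw [pbP_eq_pb_of_mem_cell hctrIco]
      apply pb_eq_zero_of_not_mem hW
      intro hmem
      exact hdisj2 p q hpq ctr hmem hctrslab
    have := congrFun hg ctr
    rw [Finset.sum_apply] at this
    simp only [Pi.smul_apply, smul_eq_mul, Pi.zero_apply] at this
    rw [Finset.sum_eq_single q] at this
    · rw [hFq, mul_one] at this
      exact this
    · intro p _ hpq
      rw [hFp p hpq, mul_zero]
    · intro hq; exact absurd (Finset.mem_univ q) hq
  have hrank : Module.finrank ℝ (Submodule.span ℝ (Set.range FF)) = N * ℓ := by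
    rw [finrank_span_eq_card hLI, Fintype.card_prod, Fintype.card_fin, Fintype.card_fin]
  -- cell is measurable
  have hmeas : MeasurableSet (unitCell d) :=
    MeasurableSet.univ_pi fun _ => measurableSet_Ico
  -- key integrals
  set Λ : ℝ := ∏ i, (Wf i / 2) with hΛ
  have hcellG : ∀ p : Fin N × Fin ℓ,
      ∫ x in unitCell d, gsq (A p) Wf x = ∫ x : Fin d → ℝ, gsq (A p) Wf x := by
    intro p
    apply setIntegral_eq_integral_of_forall_compl_eq_zero
    intro x hx
    exact gsq_eq_zero_of_not_mem hW (fun hsl => hx (hcell p hsl))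
  have hcellL : ∀ p : Fin N × Fin ℓ,
      ∫ x in unitCell d, (pb (A p) Wf x) ^ 2 = ∫ x : Fin d → ℝ, (pb (A p) Wf x) ^ 2 := by
    intro p
    apply setIntegral_eq_integral_of_forall_compl_eq_zero
    intro x hx
    rw [pb_eq_zero_of_not_mem hW (fun hsl => hx (hcell p hsl))]
    ring
  -- the numeric identity
  have hnum : (∑ i, π ^ 2 / (2 * Wf i) * ∏ j ∈ Finset.univ.erase i, (Wf j / 2)) + α * Λ
      = M * Λ := by
    have hstep : ∀ i, π ^ 2 / (2 * Wf i) * ∏ j ∈ Finset.univ.erase i, (Wf j / 2)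
        = π ^ 2 / (Wf i) ^ 2 * Λ := by
      intro i
      rw [hΛ, ← Finset.mul_prod_erase Finset.univ (fun j => Wf j / 2) (Finset.mem_univ i)]
      have hWi := (hW i).ne'
      field_simp
    simp_rw [hstep]
    rw [← Finset.sum_mul]
    have hsum : (∑ i, π ^ 2 / (Wf i) ^ 2) = π ^ 2 * ((ℓ : ℝ) ^ 2 + (d : ℝ) - 1) / s ^ 2 := by
      rw [← Finset.add_sum_erase Finset.univ _ (Finset.mem_univ i0)]
      have h1 : π ^ 2 / (Wf i0) ^ 2 = π ^ 2 * (ℓ : ℝ) ^ 2 / s ^ 2 := by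
        rw [hWdef]
        simp only [eq_self_iff_true, if_true, if_pos rfl]
        rw [div_pow, div_div_eq_mul_div]
      have h2 : ∀ i ∈ Finset.univ.erase i0, π ^ 2 / (Wf i) ^ 2 = π ^ 2 / s ^ 2 := by
        intro i hi
        rw [hWdef]
        simp only [(Finset.mem_erase.1 hi).1, if_false]
      rw [h1, Finset.sum_congr rfl h2, Finset.sum_const, Finset.card_erase_of_mem
        (Finset.mem_univ i0), Finset.card_univ, Fintype.card_fin, nsmul_eq_mul]
      have hcast : ((d - 1 : ℕ) : ℝ) = (d : ℝ) - 1 := by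
        rw [Nat.cast_sub hd, Nat.cast_one]
      rw [hcast]
      have hs2 : (s:ℝ) ^ 2 ≠ 0 := by positivity
      field_simp
      ring
    rw [hsum, hMdef]
    ring
  -- the main spectral estimate
  have hmain : ∀ v ∈ Submodule.span ℝ (Set.range FF), energySq V v ≤ M * l2sq v := by
    intro v hv
    rw [Submodule.mem_span_range_iff_exists_fun] at hv
    obtain ⟨c, rfl⟩ := hv
    -- l2 norm
    have hpairpt : ∀ (x : Fin d → ℝ) (p q : Fin N × Fin ℓ), p ≠ q →
        (c p * pb (A p) Wf x) * (c q * pb (A q) Wf x) = 0 := by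
      intro x p q hpq
      by_cases hp : pb (A p) Wf x = 0
      · rw [hp]; ring
      by_cases hq : pb (A q) Wf x = 0
      · rw [hq]; ring
      exact absurd (hdisj2 p q hpq x (mem_slab_of_pb_ne_zero hW hp)
        (mem_slab_of_pb_ne_zero hW hq)) (fun h => h)
    have hl2 : l2sq (∑ p, c p • FF p) = ∑ p, (c p) ^ 2 * Λ := by
      rw [l2sq]
      have heq : ∀ x ∈ unitCell d,
          ((∑ p, c p • FF p) x) ^ 2 = ∑ p, (c p) ^ 2 * (pb (A p) Wf x) ^ 2 := by
        intro x hxc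
        have hx01 : ∀ i, 0 ≤ x i ∧ x i < 1 := by
          intro i
          exact hxc i (Set.mem_univ i)
        have hvx : (∑ p, c p • FF p) x = ∑ p, c p * pb (A p) Wf x := by
          rw [Finset.sum_apply]
          apply Finset.sum_congr rfl
          intro p _
          rw [Pi.smul_apply, smul_eq_mul, hFFdef]
          dsimp only
          rw [pbP_eq_pb_of_mem_cell hx01]
        rw [hvx, sq_sum_of_pairwise _ (hpairpt x)]
        apply Finset.sum_congr rfl
        intro p _
        rw [mul_pow]
      rw [setIntegral_congr_fun hmeas heq]
      rw [integral_finset_sum]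
      · apply Finset.sum_congr rfl
        intro p _
        rw [integral_const_mul, hcellL p, integral_pb_sq hW]
      · intro p _
        exact (((integrable_pb_sq hW).const_mul ((c p)^2)).restrict)
    -- energy
    have hen : energySq V (∑ p, c p • FF p) = ∑ p, (c p) ^ 2 * (M * Λ) := by
      rw [energySq]
      have hae : ∀ᵐ x ∂(volume.restrict (unitCell d)),
          gradSq (∑ p, c p • FF p) x + V x * ((∑ p, c p • FF p) x) ^ 2
            = ∑ p, (c p) ^ 2 * (gsq (A p) Wf x + α * (pb (A p) Wf x) ^ 2) := by
        have hae1 : ∀ᵐ x : Fin d → ℝ,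
            ∀ (p : Fin N × Fin ℓ) (i : Fin d), x i ≠ A p i ∧ x i ≠ A p i + Wf i := by
          rw [ae_all_iff]
          intro p
          rw [ae_all_iff]
          intro i
          apply Filter.Eventually.and
          · rw [MeasureTheory.volume_pi]
            exact MeasureTheory.Measure.ae_eval_ne _ i _
          · rw [MeasureTheory.volume_pi]
            exact MeasureTheory.Measure.ae_eval_ne _ i _
        have hae0 : ∀ᵐ x : Fin d → ℝ, ∀ i : Fin d, x i ≠ 0 := by
          rw [ae_all_iff]
          intro i
          rw [MeasureTheory.volume_pi]
          exact MeasureTheory.Measure.ae_eval_ne _ i _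
        have haeV : ∀ᵐ x : Fin d → ℝ,
            ∀ j : Fin N, (∀ i, z j i < x i ∧ x i < z j i + s) → V x = α := ae_all_iff.2 hVα
        filter_upwards [ae_restrict_of_ae hae1, ae_restrict_of_ae hae0,
          ae_restrict_of_ae haeV, ae_restrict_mem hmeas] with x hx1 hx0 hxV hxc
        -- x lies in the open cell
        have hopen : ∀ i, 0 < x i ∧ x i < 1 := by
          intro i
          have h := hxc i (Set.mem_univ i)
          exact ⟨lt_of_le_of_ne h.1 (Ne.symm (hx0 i)), h.2⟩
        -- derivative of the sum
        have hO : IsOpen (Set.univ.pi fun _ : Fin d => Ioo (0:ℝ) 1) :=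
          isOpen_set_pi Set.finite_univ fun _ _ => isOpen_Ioo
        have hxO : x ∈ (Set.univ.pi fun _ : Fin d => Ioo (0:ℝ) 1) := by
          intro i _
          exact hopen i
        have hev : (∑ p, c p • FF p) =ᶠ[nhds x]
            fun y => ∑ p, c p * pb (A p) Wf y := by
          filter_upwards [hO.mem_nhds hxO] with y hy
          rw [Finset.sum_apply]
          apply Finset.sum_congr rfl
          intro p _
          rw [Pi.smul_apply, smul_eq_mul, hFFdef]
          dsimp only
          rw [pbP_eq_pb_of_mem_cell (fun i => ⟨(hy i (Set.mem_univ i)).1.le, (hy i (Set.mem_univ i)).2⟩)]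
        have hsumD : HasFDerivAt (fun y => ∑ p, c p * pb (A p) Wf y)
            (∑ p, c p • pbD (A p) Wf x) x := by
          apply HasFDerivAt.fun_sum
          intro p _
          exact (hasFDerivAt_pb hW (hx1 p)).const_mul (c p)
        have hvd : HasFDerivAt (∑ p, c p • FF p) (∑ p, c p • pbD (A p) Wf x) x :=
          hsumD.congr_of_eventuallyEq hev
        -- gradient term
        have hgrad : gradSq (∑ p, c p • FF p) x = ∑ p, (c p) ^ 2 * gsq (A p) Wf x := by
          rw [gradSq, hvd.fderiv]
          have happ : ∀ i : Fin d, ((∑ p, c p • pbD (A p) Wf x) (Pi.single i 1))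
              = ∑ p, c p * (pbD (A p) Wf x (Pi.single i 1)) := by
            intro i
            rw [ContinuousLinearMap.sum_apply]
            apply Finset.sum_congr rfl
            intro p _
            rw [ContinuousLinearMap.smul_apply, smul_eq_mul]
          calc ∑ i, ((∑ p, c p • pbD (A p) Wf x) (Pi.single i 1)) ^ 2
              = ∑ i, ∑ p, (c p * (pbD (A p) Wf x (Pi.single i 1))) ^ 2 := by
                apply Finset.sum_congr rfl
                intro i _
                rw [happ i]
                apply sq_sum_of_pairwise
                intro p q hpq
                by_cases hp : pbD (A p) Wf x (Pi.single i 1) = 0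
                · rw [hp]; ring
                by_cases hq : pbD (A q) Wf x (Pi.single i 1) = 0
                · rw [hq]; ring
                exfalso
                have hxp : x ∈ slab (A p) Wf := by
                  by_contra hc
                  exact hp (pbD_apply_eq_zero_of_not_mem hW hc i)
                have hxq : x ∈ slab (A q) Wf := by
                  by_contra hc
                  exact hq (pbD_apply_eq_zero_of_not_mem hW hc i)
                exact hdisj2 p q hpq x hxp hxq
            _ = ∑ p, ∑ i, (c p * (pbD (A p) Wf x (Pi.single i 1))) ^ 2 := Finset.sum_comm
            _ = ∑ p, (c p) ^ 2 * gsq (A p) Wf x := by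
                apply Finset.sum_congr rfl
                intro p _
                rw [← sum_sq_pbD_apply (a := A p) (w := Wf) (x := x), Finset.mul_sum]
                apply Finset.sum_congr rfl
                intro i _
                rw [mul_pow]
        -- value term
        have hvx : (∑ p, c p • FF p) x = ∑ p, c p * pb (A p) Wf x :=
          hev.self_of_nhds
        have hVsq : V x * ((∑ p, c p • FF p) x) ^ 2
            = ∑ p, (c p) ^ 2 * (α * (pb (A p) Wf x) ^ 2) := by
          rw [hvx, sq_sum_of_pairwise _ (hpairpt x), Finset.mul_sum]
          apply Finset.sum_congr rfl
          intro p _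
          by_cases hp : pb (A p) Wf x = 0
          · rw [hp]; ring
          · have hxs : x ∈ slab (A p) Wf := mem_slab_of_pb_ne_zero hW hp
            rw [hxV p.1 (hQ p x hxs), mul_pow]
            ring
        rw [hgrad, hVsq, ← Finset.sum_add_distrib]
        apply Finset.sum_congr rfl
        intro p _
        ring
      rw [integral_congr_ae hae]
      rw [integral_finset_sum]
      · apply Finset.sum_congr rfl
        intro p _
        rw [integral_const_mul]
        congr 1
        rw [integral_add ((integrable_gsq hW).restrict)
          (((integrable_pb_sq hW).const_mul α).restrict)]
        rw [integral_const_mul, hcellG p, hcellL p, integral_gsq hW, integral_pb_sq hW]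
        exact hnum
      · intro p _
        exact (((integrable_gsq hW).add ((integrable_pb_sq hW).const_mul α)).const_mul
          ((c p)^2)).restrict
    rw [hen, hl2, Finset.mul_sum]
    apply le_of_eq
    apply Finset.sum_congr rfl
    intro p _
    ring
  -- conclusion
  show minmaxVal d V (N * ℓ) ≤ M
  rw [minmaxVal]
  by_cases hbdd : BddBelow {M' : ℝ | ∃ W : Submodule ℝ ((Fin d → ℝ) → ℝ),
      (W : Set ((Fin d → ℝ) → ℝ)) ⊆ PeriodicLipschitz d ∧
      Module.finrank ℝ W = N * ℓ ∧
      ∀ v ∈ W, v ≠ 0 → energySq V v ≤ M' * l2sq v}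
  · apply csInf_le hbdd
    exact ⟨Submodule.span ℝ (Set.range FF), hWsub, hrank, fun v hv _ => hmain v hv⟩
  · rw [Real.sInf_of_not_bddBelow hbdd]
    exact hM0

end
end

section
/- Let H be a real Hilbert space with inner product (·,·), and let a(·,·) be a second inner product on H. Let u_1, …, u_K ∈ H be nonzero, pairwise orthogonal with respect to both (·,·) and a(·,·), and suppose a(u_i, u_i) ≤ c₂ (u_i, u_i) for all i. Let W ⊆ H be a closed subspace and let P : H → H be the (·,·)-orthogonal projection onto W. Assume there is c₃ > c₂ such that every nonzero u ∈ H with P u = 0 satisfies a(u, u) ≥ c₃ (u, u). Then P is injective on the span of {u_1, …, u_K}; in particular the vectors P u_1, …, P u_K are linearly independent and the K×K Gram matrix C with entries C_{ij} = (P u_i, P u_j) is invertible (indeed positive definite). (Key claim in the proof of Lemma 5.6 of the paper, guaranteeing an admissible starting subspace for the block iteration.) -/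
open scoped RealInnerProductSpace

lemma sum_smul_inner_self {H : Type*} [NormedAddCommGroup H] [InnerProductSpace ℝ H]
    {K : ℕ} (u : Fin K → H) (horth : ∀ i j, i ≠ j → ⟪u i, u j⟫ = 0) (c : Fin K → ℝ) :
    ⟪∑ i, c i • u i, ∑ i, c i • u i⟫ = ∑ i, c i ^ 2 * ⟪u i, u i⟫ := by
  rw [sum_inner]
  refine Finset.sum_congr rfl fun i _ => ?_
  rw [real_inner_smul_left, inner_sum]
  rw [Finset.sum_eq_single i]
  · rw [real_inner_smul_right]; ring
  · intro j _ hj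
    rw [real_inner_smul_right, horth i j (Ne.symm hj), mul_zero]
  · intro h; exact absurd (Finset.mem_univ i) h

/-- key claim in the proof of Lemma 5.6 of the paper: let `H` be a
real Hilbert space with inner product `(·,·) = ⟪·,·⟫`, `a` a second inner product (the
energy form), and `u₁, …, u_K` nonzero, pairwise orthogonal with respect to both, with
`a(uᵢ,uᵢ) ≤ c₂ (uᵢ,uᵢ)`. Let `W` be a closed subspace and `P` the `(·,·)`-orthogonal
projection onto `W`, and assume that for some `c₃ > c₂` every nonzero `u` with `P u = 0`
satisfies `a(u,u) ≥ c₃ (u,u)`. Then `P` is injective on the span of the `uᵢ`; in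
particular `P u₁, …, P u_K` are linearly independent and the Gram matrix
`C = ((P uᵢ, P uⱼ))ᵢⱼ` is positive definite (hence invertible). -/
theorem statement18 {H : Type*} [NormedAddCommGroup H] [InnerProductSpace ℝ H]
    [CompleteSpace H]
    (a : LinearMap.BilinForm ℝ H)
    (hasymm : ∀ x y : H, a x y = a y x) (hapos : ∀ x : H, x ≠ 0 → 0 < a x x)
    (K : ℕ) (u : Fin K → H) (hu0 : ∀ i, u i ≠ 0)
    (horth : ∀ i j, i ≠ j → ⟪u i, u j⟫ = 0)
    (hortha : ∀ i j, i ≠ j → a (u i) (u j) = 0)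
    (c₂ : ℝ) (hup : ∀ i, a (u i) (u i) ≤ c₂ * ⟪u i, u i⟫)
    (W : Submodule ℝ H) (hW : IsClosed (W : Set H))
    (P : H →L[ℝ] H) (hPmem : ∀ x, P x ∈ W)
    (hPproj : ∀ x : H, ∀ w ∈ W, ⟪P x, w⟫ = ⟪x, w⟫)
    (c₃ : ℝ) (hc : c₂ < c₃)
    (hlow : ∀ x : H, x ≠ 0 → P x = 0 → c₃ * ⟪x, x⟫ ≤ a x x) :
    (∀ x ∈ Submodule.span ℝ (Set.range u), P x = 0 → x = 0) ∧
      LinearIndependent ℝ (fun i => P (u i)) ∧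
      (Matrix.of fun i j : Fin K => ⟪P (u i), P (u j)⟫).PosDef := by
  have ipos : ∀ y : H, y ≠ 0 → (0:ℝ) < ⟪y, y⟫ := fun y hy =>
    lt_of_le_of_ne real_inner_self_nonneg (fun h => hy (inner_self_eq_zero.mp h.symm))
  have key : ∀ x ∈ Submodule.span ℝ (Set.range u), P x = 0 → x = 0 := by
    intro x hx hPx
    by_contra hx0
    obtain ⟨c, rfl⟩ := (Submodule.mem_span_range_iff_exists_fun ℝ).mp hx
    set x := ∑ i, c i • u i with hxdef
    -- a x x = ∑ c i ^2 a(u i)(u i)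
    have hax : a x x = ∑ i, c i ^ 2 * a (u i) (u i) := by
      simp only [hxdef, map_sum, map_smul, LinearMap.sum_apply, LinearMap.smul_apply,
        smul_eq_mul, Finset.mul_sum]
      rw [Finset.sum_comm]
      refine Finset.sum_congr rfl fun i _ => ?_
      rw [Finset.sum_eq_single i]
      · ring
      · intro j _ hj
        rw [hortha i j (Ne.symm hj)]; ring
      · intro h; exact absurd (Finset.mem_univ i) h
    have hix : ⟪x, x⟫ = ∑ i, c i ^ 2 * ⟪u i, u i⟫ := sum_smul_inner_self u horth c
    have hle : a x x ≤ c₂ * ⟪x, x⟫ := by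
      rw [hax, hix, Finset.mul_sum]
      refine Finset.sum_le_sum fun i _ => ?_
      calc c i ^ 2 * a (u i) (u i) ≤ c i ^ 2 * (c₂ * ⟪u i, u i⟫) := by
            exact mul_le_mul_of_nonneg_left (hup i) (sq_nonneg _)
        _ = c₂ * (c i ^ 2 * ⟪u i, u i⟫) := by ring
    have hge : c₃ * ⟪x, x⟫ ≤ a x x := hlow x hx0 hPx
    have hpos : 0 < ⟪x, x⟫ := ipos _ hx0
    nlinarith
  refine ⟨key, ?_, ?_⟩
  · -- linear independence
    rw [Fintype.linearIndependent_iff]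
    intro g hg i
    have hsum : P (∑ i, g i • u i) = 0 := by
      rw [map_sum]
      simpa [ContinuousLinearMap.map_smul] using hg
    have h0 : (∑ i, g i • u i) = 0 :=
      key _ (Submodule.sum_mem _ fun i _ =>
        Submodule.smul_mem _ _ (Submodule.subset_span ⟨i, rfl⟩)) hsum
    -- inner with u i
    have := sum_smul_inner_self u horth g
    rw [h0, inner_zero_left] at this
    by_contra hgi
    have hpos : 0 < ∑ j, g j ^ 2 * ⟪u j, u j⟫ := by
      refine Finset.sum_pos' (fun j _ => mul_nonneg (sq_nonneg _)
        real_inner_self_nonneg) ⟨i, Finset.mem_univ i, ?_⟩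
      exact mul_pos (pow_two_pos_of_ne_zero hgi) (ipos _ (hu0 i))
    linarith [this ▸ hpos]
  · -- PosDef
    refine Matrix.PosDef.of_dotProduct_mulVec_pos ?_ ?_
    · ext i j
      simp [Matrix.conjTranspose_apply, real_inner_comm]
    · intro x hx
      have hy : (∑ i, x i • P (u i)) ≠ 0 := by
        intro h0
        have hsum : P (∑ i, x i • u i) = 0 := by
          rw [map_sum]; simpa [ContinuousLinearMap.map_smul] using h0
        have h1 : (∑ i, x i • u i) = 0 :=
          key _ (Submodule.sum_mem _ fun i _ =>
            Submodule.smul_mem _ _ (Submodule.subset_span ⟨i, rfl⟩)) hsum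
        have := sum_smul_inner_self u horth x
        rw [h1, inner_zero_left] at this
        apply hx
        funext i
        by_contra hxi
        have hpos : 0 < ∑ j, x j ^ 2 * ⟪u j, u j⟫ := by
          refine Finset.sum_pos' (fun j _ => mul_nonneg (sq_nonneg _)
            real_inner_self_nonneg) ⟨i, Finset.mem_univ i, ?_⟩
          exact mul_pos (pow_two_pos_of_ne_zero hxi) (ipos _ (hu0 i))
        linarith [this ▸ hpos]
      have : dotProduct (star x) ((Matrix.of fun i j : Fin K => ⟪P (u i), P (u j)⟫).mulVec x)
          = ⟪∑ i, x i • P (u i), ∑ i, x i • P (u i)⟫ := by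
        simp only [dotProduct, Matrix.mulVec, Matrix.of_apply, Pi.star_apply,
          star_trivial, sum_inner, inner_sum, real_inner_smul_left, real_inner_smul_right,
          Finset.mul_sum]
        exact Finset.sum_congr rfl fun i _ => Finset.sum_congr rfl fun j _ => by rw [real_inner_comm (P (u j))]; ring
      rw [this]
      exact ipos _ hy
end

section
/- Let Ω ⊂ ℝ^d be a bounded open set that is star-shaped with respect to a closed ball B_ρ(x₀) ⊂ Ω of radius ρ > 0 (i.e., for every x ∈ Ω the convex hull of {x} ∪ B_ρ(x₀) is contained in Ω). There exists a constant C depending only on d such that every Lipschitz function w : Ω → ℝ that vanishes on B_ρ(x₀) satisfies ‖w‖_{L²(Ω)} ≤ C (1 + diam(Ω)/ρ)^d · diam(Ω) · ‖∇w‖_{L²(Ω)}. (Local Friedrichs/Poincaré estimate for functions vanishing on a ball; the key local estimate (A.3) in the appendix of the paper, proved via averaged Taylor polynomials.) -/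
open MeasureTheory Filter Topology
open scoped ENNReal NNReal

section helpers

private lemma sq_integral_le_integral_sq {α : Type*} {m : MeasurableSpace α}
    {μ : Measure α} [IsProbabilityMeasure μ] {f : α → ℝ} (hf : MemLp f 2 μ) :
    (∫ x, f x ∂μ) ^ 2 ≤ ∫ x, (f x) ^ 2 ∂μ := by
  have h := ProbabilityTheory.variance_nonneg f μ
  rw [ProbabilityTheory.variance_eq_sub hf] at h
  have : (∫ x, (f ^ 2) x ∂μ) = ∫ x, (f x) ^ 2 ∂μ := by
    simp [Pi.pow_apply]
  simp only [this] at h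
  linarith

private lemma ftc_lip {h g : ℝ → ℝ} {M δ : ℝ} (hδ : 0 < δ) (hM : 0 ≤ M)
    (hlip : ∀ s ∈ Set.Icc (-δ) (1:ℝ), ∀ t ∈ Set.Icc (-δ) (1:ℝ), |h s - h t| ≤ M * |s - t|)
    (hderiv : ∀ᵐ t ∂(volume.restrict (Set.Ioo (0:ℝ) 1)), HasDerivAt h (g t) t) :
    h 1 - h 0 = ∫ t in (0:ℝ)..1, g t := by
  have hcont : ContinuousOn h (Set.Icc (-δ) 1) := by
    have : LipschitzOnWith M.toNNReal h (Set.Icc (-δ) 1) := by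
      rw [lipschitzOnWith_iff_dist_le_mul]
      intro x hx y hy
      rw [Real.dist_eq, Real.dist_eq]
      simpa [Real.coe_toNNReal M hM] using hlip x hx y hy
    exact this.continuousOn
  have hIcc : ∀ a b : ℝ, a ∈ Set.Icc (-δ) (1:ℝ) → b ∈ Set.Icc (-δ) (1:ℝ) →
      IntervalIntegrable h volume a b := by
    intro a b ha hb
    apply (hcont.mono ?_).intervalIntegrable
    have : Set.Icc (-δ) (1:ℝ) = Set.uIcc (-δ) 1 := (Set.uIcc_of_le (by linarith)).symm
    rw [this]
    exact Set.uIcc_subset_uIcc (this ▸ ha) (this ▸ hb)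
  set φ : ℕ → ℝ → ℝ := fun n t => (n : ℝ) * (h t - h (t - 1/n)) with hφ
  have hev : ∀ᶠ n : ℕ in atTop, 1 ≤ n ∧ 1/(n:ℝ) ≤ δ := by
    filter_upwards [eventually_ge_atTop 1,
      tendsto_one_div_atTop_nhds_zero_nat.eventually_le_const hδ] with n h1 h2
    exact ⟨h1, h2⟩
  -- memberships
  have hmem : ∀ (n : ℕ), 1 ≤ n → 1/(n:ℝ) ≤ δ → ∀ t ∈ Set.Icc (0:ℝ) 1,
      t ∈ Set.Icc (-δ) (1:ℝ) ∧ t - 1/n ∈ Set.Icc (-δ) (1:ℝ) := by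
    intro n hn1 hnδ t ht
    have hn0 : (0:ℝ) < n := by exact_mod_cast Nat.pos_of_ne_zero (by omega)
    have h1n : 0 < 1/(n:ℝ) := by positivity
    constructor
    · exact ⟨by linarith [ht.1], ht.2⟩
    · exact ⟨by linarith [ht.1], by linarith [ht.2]⟩
  -- Step A : DCT
  have hA : Tendsto (fun n : ℕ => ∫ t in (0:ℝ)..1, φ n t) atTop
      (𝓝 (∫ t in (0:ℝ)..1, g t)) := by
    have huIoc : Set.uIoc (0:ℝ) 1 = Set.Ioc 0 1 := Set.uIoc_of_le zero_le_one
    apply intervalIntegral.tendsto_integral_filter_of_dominated_convergence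
      (bound := fun _ => M)
    · filter_upwards [hev] with n hn
      obtain ⟨hn1, hnδ⟩ := hn
      have hc : ContinuousOn (φ n) (Set.Ioc (0:ℝ) 1) := by
        apply ContinuousOn.mul continuousOn_const
        apply ContinuousOn.sub
        · exact hcont.mono (fun t ht => ((hmem n hn1 hnδ t ⟨ht.1.le, ht.2⟩).1))
        · exact ContinuousOn.comp hcont ((continuous_sub_right (1/(n:ℝ))).continuousOn)
            (fun t ht => (hmem n hn1 hnδ t ⟨ht.1.le, ht.2⟩).2)
      rw [huIoc]
      exact hc.aestronglyMeasurable measurableSet_Ioc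
    · filter_upwards [hev] with n hn
      obtain ⟨hn1, hnδ⟩ := hn
      apply Eventually.of_forall
      intro t ht
      rw [huIoc] at ht
      obtain ⟨htm, htm'⟩ := hmem n hn1 hnδ t ⟨ht.1.le, ht.2⟩
      have hb := hlip t htm (t - 1/n) htm'
      have hn0 : (0:ℝ) < n := by exact_mod_cast Nat.pos_of_ne_zero (by omega)
      have habs : |t - (t - 1/(n:ℝ))| = 1/n := by
        rw [show t - (t - 1/(n:ℝ)) = 1/n by ring]
        exact abs_of_pos (by positivity)
      rw [habs] at hb
      have : ‖φ n t‖ = (n:ℝ) * |h t - h (t - 1/n)| := by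
        rw [hφ]; simp [abs_mul, abs_of_pos hn0]
      rw [this]
      calc (n:ℝ) * |h t - h (t - 1/n)| ≤ (n:ℝ) * (M * (1/n)) := by
            exact mul_le_mul_of_nonneg_left hb hn0.le
        _ = M := by field_simp
    · exact intervalIntegrable_const
    · have hae : ∀ᵐ t : ℝ, t ∈ Set.Ioo (0:ℝ) 1 → HasDerivAt h (g t) t :=
        (ae_restrict_iff' measurableSet_Ioo).mp hderiv
      have h1 : ∀ᵐ t : ℝ, t ≠ 1 := by
        rw [ae_iff]
        have : {t : ℝ | ¬ t ≠ 1} = {1} := by ext t; simp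
        rw [this]
        exact Real.volume_singleton
      filter_upwards [hae, h1] with t hd ht1 htΙ
      rw [huIoc] at htΙ
      have H := hd ⟨htΙ.1, lt_of_le_of_ne htΙ.2 ht1⟩
      have hs := hasDerivAt_iff_tendsto_slope.mp H
      have hu : Tendsto (fun n : ℕ => t - 1/n) atTop (𝓝[≠] t) := by
        apply tendsto_nhdsWithin_of_tendsto_nhds_of_eventually_within
        · simpa using tendsto_const_nhds.sub (tendsto_one_div_atTop_nhds_zero_nat (𝕜 := ℝ))
        · filter_upwards [eventually_ge_atTop 1] with n hn
          have hn0 : (0:ℝ) < n := by exact_mod_cast Nat.pos_of_ne_zero (by omega)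
          have : 0 < 1/(n:ℝ) := by positivity
          simp only [Set.mem_compl_iff, Set.mem_singleton_iff]
          intro hcon
          nlinarith [sub_eq_self.mp hcon]
      have := hs.comp hu
      apply this.congr'
      filter_upwards [eventually_ge_atTop 1] with n hn
      have hn0 : (0:ℝ) < n := by exact_mod_cast Nat.pos_of_ne_zero (by omega)
      show slope h t (t - 1/n) = φ n t
      rw [slope_def_field, hφ]
      field_simp
      ring
  -- Step B : computation of the integral of φ n
  have hB : ∀ᶠ n : ℕ in atTop, ∫ t in (0:ℝ)..1, φ n t =
      ((n:ℝ) * ∫ t in (1 - 1/(n:ℝ))..1, h t) - ((n:ℝ) * ∫ t in (-(1/(n:ℝ)))..0, h t) := by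
    filter_upwards [hev] with n hn
    obtain ⟨hn1, hnδ⟩ := hn
    have hn0 : (0:ℝ) < n := by exact_mod_cast Nat.pos_of_ne_zero (by omega)
    have h1n : 0 < 1/(n:ℝ) := by positivity
    have h1n1 : 1/(n:ℝ) ≤ 1 := by
      rw [div_le_one hn0]; exact_mod_cast hn1
    have m0 : (0:ℝ) ∈ Set.Icc (-δ) (1:ℝ) := ⟨by linarith, by linarith⟩
    have m1 : (1:ℝ) ∈ Set.Icc (-δ) (1:ℝ) := ⟨by linarith, le_refl _⟩
    have m2 : -(1/(n:ℝ)) ∈ Set.Icc (-δ) (1:ℝ) := ⟨by linarith, by linarith⟩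
    have m3 : 1 - 1/(n:ℝ) ∈ Set.Icc (-δ) (1:ℝ) := ⟨by linarith, by linarith⟩
    have I1 := hIcc 0 1 m0 m1
    have I2 := hIcc (-(1/(n:ℝ))) 0 m2 m0
    have I3 := hIcc (1 - 1/(n:ℝ)) 1 m3 m1
    have I4 := hIcc (-(1/(n:ℝ))) (1 - 1/(n:ℝ)) m2 m3
    have I5 : IntervalIntegrable (fun t => h (t - 1/(n:ℝ))) volume 0 1 := by
      have := (hIcc (-(1/(n:ℝ))) (1 - 1/(n:ℝ)) m2 m3).comp_sub_right (1/(n:ℝ))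
      simpa using this
    have e1 : ∫ t in (0:ℝ)..1, φ n t
        = (n:ℝ) * ((∫ t in (0:ℝ)..1, h t) - ∫ t in (0:ℝ)..1, h (t - 1/n)) := by
      calc ∫ t in (0:ℝ)..1, φ n t
          = ∫ t in (0:ℝ)..1, (n:ℝ) * (h t - h (t - 1/n)) := by simp only [hφ]
        _ = (n:ℝ) * ∫ t in (0:ℝ)..1, (h t - h (t - 1/n)) :=
            intervalIntegral.integral_const_mul _ _
        _ = _ := by rw [intervalIntegral.integral_sub I1 I5]
    have e2 : (∫ t in (0:ℝ)..1, h (t - 1/(n:ℝ)))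
        = ∫ t in (-(1/(n:ℝ)))..(1 - 1/(n:ℝ)), h t := by
      have := intervalIntegral.integral_comp_sub_right (a := (0:ℝ)) (b := 1) h (1/(n:ℝ))
      simpa using this
    have e3 : (∫ t in (-(1/(n:ℝ)))..(1 - 1/(n:ℝ)), h t) + ∫ t in (1 - 1/(n:ℝ))..1, h t
        = ∫ t in (-(1/(n:ℝ)))..1, h t := intervalIntegral.integral_add_adjacent_intervals I4 I3
    have e4 : (∫ t in (-(1/(n:ℝ)))..0, h t) + ∫ t in (0:ℝ)..1, h t
        = ∫ t in (-(1/(n:ℝ)))..1, h t := intervalIntegral.integral_add_adjacent_intervals I2 I1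
    rw [e1, e2]
    have : (∫ t in (0:ℝ)..1, h t) - ∫ t in (-(1/(n:ℝ)))..(1 - 1/(n:ℝ)), h t
        = (∫ t in (1 - 1/(n:ℝ))..1, h t) - ∫ t in (-(1/(n:ℝ)))..0, h t := by linarith
    rw [this, mul_sub]
  -- Step C : limits of the two boundary averages
  have hC1 : Tendsto (fun n : ℕ => (n:ℝ) * ∫ t in (1 - 1/(n:ℝ))..1, h t) atTop (𝓝 (h 1)) := by
    have key : ∀ᶠ n : ℕ in atTop,
        ‖(n:ℝ) * (∫ t in (1 - 1/(n:ℝ))..1, h t) - h 1‖ ≤ M / n := by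
      filter_upwards [hev] with n hn
      obtain ⟨hn1, hnδ⟩ := hn
      have hn0 : (0:ℝ) < n := by exact_mod_cast Nat.pos_of_ne_zero (by omega)
      have h1n : 0 < 1/(n:ℝ) := by positivity
      have m1 : (1:ℝ) ∈ Set.Icc (-δ) (1:ℝ) := ⟨by linarith, le_refl _⟩
      have m3 : 1 - 1/(n:ℝ) ∈ Set.Icc (-δ) (1:ℝ) := ⟨by linarith, by linarith⟩
      have I3 := hIcc (1 - 1/(n:ℝ)) 1 m3 m1
      have e1 : (n:ℝ) * (∫ t in (1 - 1/(n:ℝ))..1, h t) - h 1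
          = (n:ℝ) * ∫ t in (1 - 1/(n:ℝ))..1, (h t - h 1) := by
        rw [intervalIntegral.integral_sub I3 intervalIntegrable_const,
          intervalIntegral.integral_const, mul_sub]
        have : (1 - (1 - 1/(n:ℝ))) • h 1 = (1/(n:ℝ)) * h 1 := by norm_num
        rw [this]
        field_simp
      rw [e1]
      have hbd : ∀ t ∈ Set.uIoc (1 - 1/(n:ℝ)) 1, ‖h t - h 1‖ ≤ M * (1/n) := by
        intro t ht
        rw [Set.uIoc_of_le (by linarith)] at ht
        have htm : t ∈ Set.Icc (-δ) (1:ℝ) := ⟨by linarith [ht.1], ht.2⟩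
        have := hlip t htm 1 m1
        have habs : |t - 1| ≤ 1/(n:ℝ) := by
          rw [abs_of_nonpos (by linarith [ht.2])]
          linarith [ht.1]
        calc ‖h t - h 1‖ = |h t - h 1| := rfl
          _ ≤ M * |t - 1| := this
          _ ≤ M * (1/n) := by nlinarith
      have := intervalIntegral.norm_integral_le_of_norm_le_const hbd
      rw [norm_mul, Real.norm_natCast]
      calc (n:ℝ) * ‖∫ t in (1 - 1/(n:ℝ))..1, (h t - h 1)‖
          ≤ (n:ℝ) * (M * (1/n) * |1 - (1 - 1/(n:ℝ))|) := by
            exact mul_le_mul_of_nonneg_left this hn0.le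
        _ = M / n := by
            rw [abs_of_pos (by linarith : (0:ℝ) < 1 - (1 - 1/(n:ℝ)))]
            field_simp
            ring
    have h0 : Tendsto (fun n : ℕ => M / (n:ℝ)) atTop (𝓝 0) :=
      tendsto_const_div_atTop_nhds_zero_nat M
    have := squeeze_zero_norm' key h0
    have h2 := this.add_const (h 1)
    simpa using h2
  have hC2 : Tendsto (fun n : ℕ => (n:ℝ) * ∫ t in (-(1/(n:ℝ)))..0, h t) atTop (𝓝 (h 0)) := by
    have key : ∀ᶠ n : ℕ in atTop,
        ‖(n:ℝ) * (∫ t in (-(1/(n:ℝ)))..0, h t) - h 0‖ ≤ M / n := by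
      filter_upwards [hev] with n hn
      obtain ⟨hn1, hnδ⟩ := hn
      have hn0 : (0:ℝ) < n := by exact_mod_cast Nat.pos_of_ne_zero (by omega)
      have h1n : 0 < 1/(n:ℝ) := by positivity
      have m0 : (0:ℝ) ∈ Set.Icc (-δ) (1:ℝ) := ⟨by linarith, by linarith⟩
      have m2 : -(1/(n:ℝ)) ∈ Set.Icc (-δ) (1:ℝ) := ⟨by linarith, by linarith⟩
      have I2 := hIcc (-(1/(n:ℝ))) 0 m2 m0
      have e1 : (n:ℝ) * (∫ t in (-(1/(n:ℝ)))..0, h t) - h 0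
          = (n:ℝ) * ∫ t in (-(1/(n:ℝ)))..0, (h t - h 0) := by
        rw [intervalIntegral.integral_sub I2 intervalIntegrable_const,
          intervalIntegral.integral_const, mul_sub]
        have : ((0:ℝ) - (-(1/(n:ℝ)))) • h 0 = (1/(n:ℝ)) * h 0 := by norm_num
        rw [this]
        field_simp
      rw [e1]
      have hbd : ∀ t ∈ Set.uIoc (-(1/(n:ℝ))) 0, ‖h t - h 0‖ ≤ M * (1/n) := by
        intro t ht
        rw [Set.uIoc_of_le (by linarith)] at ht
        have htm : t ∈ Set.Icc (-δ) (1:ℝ) := ⟨by linarith [ht.1], by linarith [ht.2]⟩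
        have := hlip t htm 0 m0
        have habs : |t - 0| ≤ 1/(n:ℝ) := by
          rw [sub_zero, abs_of_nonpos (by linarith [ht.2])]
          linarith [ht.1]
        calc ‖h t - h 0‖ = |h t - h 0| := rfl
          _ ≤ M * |t - 0| := this
          _ ≤ M * (1/n) := by nlinarith
      have := intervalIntegral.norm_integral_le_of_norm_le_const hbd
      rw [norm_mul, Real.norm_natCast]
      calc (n:ℝ) * ‖∫ t in (-(1/(n:ℝ)))..0, (h t - h 0)‖
          ≤ (n:ℝ) * (M * (1/n) * |0 - (-(1/(n:ℝ)))|) := by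
            exact mul_le_mul_of_nonneg_left this hn0.le
        _ = M / n := by
            rw [abs_of_pos (by linarith : (0:ℝ) < 0 - (-(1/(n:ℝ))))]
            field_simp
            ring
    have h0 : Tendsto (fun n : ℕ => M / (n:ℝ)) atTop (𝓝 0) :=
      tendsto_const_div_atTop_nhds_zero_nat M
    have := squeeze_zero_norm' key h0
    have h2 := this.add_const (h 0)
    simpa using h2
  have hC : Tendsto (fun n : ℕ => ∫ t in (0:ℝ)..1, φ n t) atTop (𝓝 (h 1 - h 0)) := by
    apply Tendsto.congr' _ (hC1.sub hC2)
    filter_upwards [hB] with n e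
    exact e.symm
  exact tendsto_nhds_unique hC hA

end helpers

set_option maxHeartbeats 2000000 in
/-- the key local estimate (A.3) in the appendix of the paper: local
Friedrichs/Poincaré estimate for functions vanishing on a ball. For every bounded open
set `Ω ⊆ ℝ^d` that is star-shaped with respect to a closed ball `B_ρ(x₀) ⊆ Ω`, there is a
constant `C` depending only on `d` such that every Lipschitz function `w` on `Ω`
vanishing on `B_ρ(x₀)` satisfies
`‖w‖_{L²(Ω)} ≤ C (1 + diam(Ω)/ρ)^d · diam(Ω) · ‖∇w‖_{L²(Ω)}`. -/
theorem statement19 (d : ℕ) (hd : 1 ≤ d) :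
    ∃ C : ℝ, 0 < C ∧
      ∀ (Ω : Set (EuclideanSpace ℝ (Fin d))) (x₀ : EuclideanSpace ℝ (Fin d)) (ρ : ℝ),
        IsOpen Ω → Bornology.IsBounded Ω → 0 < ρ →
        Metric.closedBall x₀ ρ ⊆ Ω →
        (∀ x ∈ Ω, convexHull ℝ ({x} ∪ Metric.closedBall x₀ ρ) ⊆ Ω) →
        ∀ (w : EuclideanSpace ℝ (Fin d) → ℝ) (K : NNReal),
          LipschitzOnWith K w Ω →
          (∀ x ∈ Metric.closedBall x₀ ρ, w x = 0) →
          Real.sqrt (∫ x in Ω, (w x) ^ 2) ≤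
            C * (1 + Metric.diam Ω / ρ) ^ d * Metric.diam Ω *
              Real.sqrt (∫ x in Ω, ‖fderiv ℝ w x‖ ^ 2) := by
  refine ⟨1, one_pos, ?_⟩
  intro Ω x₀ ρ hΩo hΩb hρ hball hstar w K hw hw0
  set D := Metric.diam Ω with hDdef
  have hx₀ : x₀ ∈ Ω := hball (Metric.mem_closedBall_self hρ.le)
  -- ρ ≤ D
  have hρD : ρ ≤ D := by
    set y := x₀ + EuclideanSpace.single (⟨0, by omega⟩ : Fin d) ρ with hy
    have hyd : dist y x₀ = ρ := by
      rw [dist_eq_norm, hy, add_sub_cancel_left, EuclideanSpace.norm_single,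
        Real.norm_eq_abs, abs_of_pos hρ]
    have hymem : y ∈ Metric.closedBall x₀ ρ := by
      rw [Metric.mem_closedBall, hyd]
    calc ρ = dist y x₀ := hyd.symm
      _ ≤ D := Metric.dist_le_diam_of_mem hΩb (hball hymem) hx₀
  have hD0 : 0 < D := lt_of_lt_of_le hρ hρD
  have hdist : ∀ x ∈ Ω, ‖x - x₀‖ ≤ D := by
    intro x hx
    rw [← dist_eq_norm]
    exact Metric.dist_le_diam_of_mem hΩb hx hx₀
  -- segments stay inside Ω
  have hseg : ∀ x ∈ Ω, ∀ s ∈ Set.Icc (0:ℝ) 1, x₀ + s • (x - x₀) ∈ Ω := by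
    intro x hx s hs
    apply hstar x hx
    apply segment_subset_convexHull (s := {x} ∪ Metric.closedBall x₀ ρ)
      (Set.mem_union_right _ (Metric.mem_closedBall_self hρ.le))
      (Set.mem_union_left _ rfl)
    exact ⟨1 - s, s, by linarith [hs.2], hs.1, by ring, by module⟩
  have hseg2 : ∀ x ∈ Ω, ∀ s ∈ Set.Icc (-(ρ/D)) (1:ℝ), x₀ + s • (x - x₀) ∈ Ω := by
    intro x hx s hs
    rcases le_or_gt 0 s with h0 | h0
    · exact hseg x hx s ⟨h0, hs.2⟩
    · apply hball
      rw [Metric.mem_closedBall, dist_eq_norm, add_sub_cancel_left, norm_smul,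
        Real.norm_eq_abs, abs_of_neg h0]
      have h1 : -s ≤ ρ/D := by linarith [hs.1]
      have h2 : ‖x - x₀‖ ≤ D := hdist x hx
      calc -s * ‖x - x₀‖ ≤ (ρ/D) * D := by
            apply mul_le_mul h1 h2 (norm_nonneg _) (by positivity)
        _ = ρ := by field_simp
  -- bound on the gradient
  have hK : ∀ y ∈ Ω, ‖fderiv ℝ w y‖ ≤ (K:ℝ) := by
    intro y hy
    by_cases hdiff : DifferentiableAt ℝ w y
    · exact hdiff.hasFDerivAt.le_of_lipschitzOn (hΩo.mem_nhds hy) hw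
    · rw [fderiv_zero_of_not_differentiableAt hdiff]
      simp
  -- gradient vanishes on the open ball
  have hGb : ∀ y ∈ Metric.ball x₀ ρ, fderiv ℝ w y = 0 := by
    intro y hy
    have h0 : w =ᶠ[𝓝 y] (fun _ => (0:ℝ)) := by
      filter_upwards [Metric.isOpen_ball.mem_nhds hy] with z hz
      exact hw0 z (Metric.ball_subset_closedBall hz)
    rw [h0.fderiv_eq]
    exact fderiv_const_apply 0
  -- measure-theoretic setup
  haveI hfin : IsFiniteMeasure (volume.restrict Ω) :=
    ⟨by rw [Measure.restrict_apply_univ]; exact hΩb.measure_lt_top⟩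
  haveI hprob : IsProbabilityMeasure (volume.restrict (Set.Ioc (0:ℝ) 1)) :=
    ⟨by simp⟩
  set G : EuclideanSpace ℝ (Fin d) → ℝ := fun y => ‖fderiv ℝ w y‖ ^ 2 with hGdef
  have hGmeas : Measurable G := ((measurable_fderiv ℝ w).norm).pow_const 2
  have hGnonneg : ∀ y, 0 ≤ G y := fun y => sq_nonneg _
  have hGK : ∀ y ∈ Ω, G y ≤ (K:ℝ)^2 := by
    intro y hy
    have h1 := hK y hy
    have h2 : G y = ‖fderiv ℝ w y‖ ^ 2 := rfl
    rw [h2]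
    nlinarith [norm_nonneg (fderiv ℝ w y)]
  -- the null set of non-differentiability
  set Nf : Set (EuclideanSpace ℝ (Fin d)) := {y | ¬ DifferentiableAt ℝ w y} ∩ Ω with hNfdef
  have hNmeas : MeasurableSet Nf :=
    (measurableSet_of_differentiableAt ℝ w).compl.inter hΩo.measurableSet
  have hNnull : volume Nf = 0 := by
    have hrad : ∀ᵐ x ∂(volume : Measure (EuclideanSpace ℝ (Fin d))),
        x ∈ Ω → DifferentiableWithinAt ℝ w Ω x :=
      hw.ae_differentiableWithinAt_of_mem
    rw [← nonpos_iff_eq_zero]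
    have : Nf ⊆ {x | ¬ (x ∈ Ω → DifferentiableWithinAt ℝ w Ω x)} := by
      intro x hx
      simp only [Set.mem_setOf_eq]
      intro himp
      exact hx.1 ((himp hx.2).differentiableAt (hΩo.mem_nhds hx.2))
    calc volume Nf ≤ volume {x | ¬ (x ∈ Ω → DifferentiableWithinAt ℝ w Ω x)} :=
          measure_mono this
      _ = 0 := hrad
  -- the product bad set is null
  set A : EuclideanSpace ℝ (Fin d) × ℝ → EuclideanSpace ℝ (Fin d) :=
    fun p => x₀ + p.2 • (p.1 - x₀) with hAdef
  have hAcont : Continuous A := by fun_prop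
  set B : Set (EuclideanSpace ℝ (Fin d) × ℝ) := A ⁻¹' Nf with hBdef
  have hBmeas : MeasurableSet B := hAcont.measurable hNmeas
  -- scaling computation : preimage of a null set under x ↦ x₀ + t(x - x₀) is null
  have hpreim : ∀ t : ℝ, t ≠ 0 →
      volume ((fun x : EuclideanSpace ℝ (Fin d) => x₀ + t • (x - x₀)) ⁻¹' Nf) = 0 := by
    intro t ht
    have hcomp : (fun x : EuclideanSpace ℝ (Fin d) => x₀ + t • (x - x₀))
        = (fun y => x₀ + y) ∘ (fun y => t • y) ∘ (fun x => x - x₀) := by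
      funext x; simp [Function.comp]
    rw [hcomp, Set.preimage_comp, Set.preimage_comp]
    have e1 : volume ((fun y : EuclideanSpace ℝ (Fin d) => x₀ + y) ⁻¹' Nf) = 0 := by
      rw [measure_preimage_add volume x₀ Nf]; exact hNnull
    have e2 : volume ((fun y : EuclideanSpace ℝ (Fin d) => t • y) ⁻¹'
        ((fun y => x₀ + y) ⁻¹' Nf)) = 0 := by
      rw [Measure.addHaar_preimage_smul volume ht, e1, mul_zero]
    calc volume ((fun x : EuclideanSpace ℝ (Fin d) => x - x₀) ⁻¹'
          ((fun y => t • y) ⁻¹' ((fun y => x₀ + y) ⁻¹' Nf)))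
        = volume ((fun y : EuclideanSpace ℝ (Fin d) => t • y) ⁻¹'
          ((fun y => x₀ + y) ⁻¹' Nf)) := by
          have : (fun x : EuclideanSpace ℝ (Fin d) => x - x₀) = (fun x => x + (-x₀)) := by
            funext x; rw [sub_eq_add_neg]
          rw [this, measure_preimage_add_right]
      _ = 0 := e2
  have hBnull : ((volume.restrict Ω).prod (volume.restrict (Set.Ioc (0:ℝ) 1))) B = 0 := by
    rw [Measure.prod_apply_symm hBmeas]
    have hz : ∀ᵐ t ∂(volume.restrict (Set.Ioc (0:ℝ) 1)),
        (volume.restrict Ω) ((fun x => (x, t)) ⁻¹' B) = 0 := by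
      filter_upwards [ae_restrict_mem measurableSet_Ioc] with t ht
      rw [← nonpos_iff_eq_zero]
      have hsub : ((fun x => (x, t)) ⁻¹' B)
          = (fun x : EuclideanSpace ℝ (Fin d) => x₀ + t • (x - x₀)) ⁻¹' Nf := rfl
      calc (volume.restrict Ω) ((fun x => (x, t)) ⁻¹' B)
          ≤ volume ((fun x => (x, t)) ⁻¹' B) := Measure.restrict_le_self _
        _ = 0 := by rw [hsub]; exact hpreim t (ne_of_gt ht.1)
    rw [lintegral_congr_ae hz, lintegral_zero]
  have hae : ∀ᵐ x ∂(volume.restrict Ω),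
      (volume.restrict (Set.Ioc (0:ℝ) 1)) (Prod.mk x ⁻¹' B) = 0 :=
    (Measure.measure_prod_null hBmeas).mp hBnull
  -- pointwise estimate
  have hptwise : ∀ x ∈ Ω,
      (volume.restrict (Set.Ioc (0:ℝ) 1)) (Prod.mk x ⁻¹' B) = 0 →
      (w x)^2 ≤ D^2 * ∫ t in Set.Ioc (0:ℝ) 1, G (x₀ + t • (x - x₀)) := by
    intro x hx hnull
    set v : EuclideanSpace ℝ (Fin d) := x - x₀ with hvdef
    have hv : ‖v‖ ≤ D := hdist x hx
    set h : ℝ → ℝ := fun t => w (x₀ + t • v) with hhdef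
    set gf : ℝ → ℝ := fun t => (fderiv ℝ w (x₀ + t • v)) v with hgfdef
    have hδ : 0 < ρ/D := by positivity
    have hlip : ∀ s ∈ Set.Icc (-(ρ/D)) (1:ℝ), ∀ t ∈ Set.Icc (-(ρ/D)) (1:ℝ),
        |h s - h t| ≤ ((K:ℝ)*D) * |s - t| := by
      intro s hs t ht
      have h1 : x₀ + s • v ∈ Ω := hseg2 x hx s hs
      have h2 : x₀ + t • v ∈ Ω := hseg2 x hx t ht
      have h3 := hw.dist_le_mul _ h1 _ h2
      rw [Real.dist_eq] at h3
      have h4 : dist (x₀ + s • v) (x₀ + t • v) = |s - t| * ‖v‖ := by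
        rw [dist_eq_norm, show (x₀ + s • v) - (x₀ + t • v) = (s - t) • v by module,
          norm_smul, Real.norm_eq_abs]
      have h5 : |h s - h t| = |w (x₀ + s • v) - w (x₀ + t • v)| := rfl
      rw [h5]
      calc |w (x₀ + s • v) - w (x₀ + t • v)| ≤ (K:ℝ) * dist (x₀ + s • v) (x₀ + t • v) := h3
        _ = (K:ℝ) * (|s - t| * ‖v‖) := by rw [h4]
        _ ≤ (K:ℝ) * (|s - t| * D) := by gcongr
        _ = (K:ℝ) * D * |s - t| := by ring
    have hderiv : ∀ᵐ t ∂(volume.restrict (Set.Ioo (0:ℝ) 1)), HasDerivAt h (gf t) t := by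
      have hnull' : (volume.restrict (Set.Ioo (0:ℝ) 1)) {t : ℝ | x₀ + t • v ∈ Nf} = 0 := by
        rw [← nonpos_iff_eq_zero]
        calc (volume.restrict (Set.Ioo (0:ℝ) 1)) {t : ℝ | x₀ + t • v ∈ Nf}
            ≤ (volume.restrict (Set.Ioc (0:ℝ) 1)) {t : ℝ | x₀ + t • v ∈ Nf} :=
              Measure.le_iff'.mp (Measure.restrict_mono Set.Ioo_subset_Ioc_self le_rfl) _
          _ = 0 := hnull
      have hae1 : ∀ᵐ t ∂(volume.restrict (Set.Ioo (0:ℝ) 1)), x₀ + t • v ∉ Nf := by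
        rw [ae_iff]
        have : {t : ℝ | ¬ (x₀ + t • v ∉ Nf)} = {t : ℝ | x₀ + t • v ∈ Nf} := by
          ext t; simp
        rw [this]
        exact hnull'
      filter_upwards [hae1, ae_restrict_mem measurableSet_Ioo] with t hnot htm
      have hmem : x₀ + t • v ∈ Ω := hseg x hx t ⟨htm.1.le, htm.2.le⟩
      have hdiff : DifferentiableAt ℝ w (x₀ + t • v) := by
        by_contra hcon
        exact hnot ⟨hcon, hmem⟩
      have hc : HasDerivAt (fun s : ℝ => x₀ + s • v) v t := by
        simpa using ((hasDerivAt_id t).smul_const v).const_add x₀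
      exact hdiff.hasFDerivAt.comp_hasDerivAt t hc
    have hftc := ftc_lip hδ (by positivity) hlip hderiv
    have hh0 : h 0 = 0 := by
      have e : x₀ + (0:ℝ) • v = x₀ := by simp
      show w (x₀ + (0:ℝ) • v) = 0
      rw [e]
      exact hw0 x₀ (Metric.mem_closedBall_self hρ.le)
    have hh1 : h 1 = w x := by
      show w (x₀ + (1:ℝ) • v) = w x
      congr 1
      rw [hvdef]
      module
    have hwx : w x = ∫ t in Set.Ioc (0:ℝ) 1, gf t := by
      rw [← intervalIntegral.integral_of_le zero_le_one, ← hftc, hh0, hh1, sub_zero]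
    -- integrability facts
    have hgfmeas : Measurable gf := by
      have h2 : Continuous (fun t : ℝ => x₀ + t • v) := by fun_prop
      exact (ContinuousLinearMap.measurable_apply v).comp
        ((measurable_fderiv ℝ w).comp h2.measurable)
    have hgfbd : ∀ᵐ t ∂(volume.restrict (Set.Ioc (0:ℝ) 1)), ‖gf t‖ ≤ (K:ℝ) * D := by
      filter_upwards [ae_restrict_mem measurableSet_Ioc] with t ht
      have hmem : x₀ + t • v ∈ Ω := hseg x hx t ⟨ht.1.le, ht.2⟩
      calc ‖gf t‖ = ‖(fderiv ℝ w (x₀ + t • v)) v‖ := rfl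
        _ ≤ ‖fderiv ℝ w (x₀ + t • v)‖ * ‖v‖ := ContinuousLinearMap.le_opNorm _ _
        _ ≤ (K:ℝ) * D := mul_le_mul (hK _ hmem) hv (norm_nonneg v) K.coe_nonneg
    have hmem2 : MemLp gf 2 (volume.restrict (Set.Ioc (0:ℝ) 1)) :=
      MemLp.of_bound hgfmeas.aestronglyMeasurable _ hgfbd
    have hCS := sq_integral_le_integral_sq hmem2
    have hGcompint : Integrable (fun t : ℝ => G (x₀ + t • v))
        (volume.restrict (Set.Ioc (0:ℝ) 1)) := by
      have hm : Measurable (fun t : ℝ => G (x₀ + t • v)) := by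
        have h2 : Continuous (fun t : ℝ => x₀ + t • v) := by fun_prop
        exact hGmeas.comp h2.measurable
      apply Integrable.mono' (integrable_const ((K:ℝ)^2)) hm.aestronglyMeasurable
      filter_upwards [ae_restrict_mem measurableSet_Ioc] with t ht
      rw [Real.norm_eq_abs, abs_of_nonneg (hGnonneg _)]
      exact hGK _ (hseg x hx t ⟨ht.1.le, ht.2⟩)
    have hmono : ∫ t in Set.Ioc (0:ℝ) 1, (gf t)^2
        ≤ ∫ t in Set.Ioc (0:ℝ) 1, D^2 * G (x₀ + t • v) := by
      refine integral_mono_ae hmem2.integrable_sq (hGcompint.const_mul (D^2)) ?_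
      filter_upwards [ae_restrict_mem measurableSet_Ioc] with t ht
      have hgfc : gf t = (fderiv ℝ w (x₀ + t • v)) v := rfl
      have hGc : G (x₀ + t • v) = ‖fderiv ℝ w (x₀ + t • v)‖^2 := rfl
      have habs : |gf t| ≤ ‖fderiv ℝ w (x₀ + t • v)‖ * ‖v‖ := by
        rw [hgfc, ← Real.norm_eq_abs]; exact ContinuousLinearMap.le_opNorm _ _
      calc (gf t)^2 = |gf t|^2 := (sq_abs _).symm
        _ ≤ (‖fderiv ℝ w (x₀ + t • v)‖ * ‖v‖)^2 := by
            apply pow_le_pow_left₀ (abs_nonneg _) habs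
        _ = ‖fderiv ℝ w (x₀ + t • v)‖^2 * ‖v‖^2 := by ring
        _ ≤ ‖fderiv ℝ w (x₀ + t • v)‖^2 * D^2 := by
            apply mul_le_mul_of_nonneg_left _ (sq_nonneg _)
            apply pow_le_pow_left₀ (norm_nonneg _) hv
        _ = D^2 * G (x₀ + t • v) := by rw [hGc]; ring
    calc (w x)^2 = (∫ t in Set.Ioc (0:ℝ) 1, gf t)^2 := by rw [hwx]
      _ ≤ ∫ t in Set.Ioc (0:ℝ) 1, (gf t)^2 := hCS
      _ ≤ ∫ t in Set.Ioc (0:ℝ) 1, D^2 * G (x₀ + t • v) := hmono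
      _ = D^2 * ∫ t in Set.Ioc (0:ℝ) 1, G (x₀ + t • v) := integral_const_mul _ _
  -- global integrability facts
  have hwbd : ∀ x ∈ Ω, |w x| ≤ (K:ℝ) * D := by
    intro x hx
    have h1 := hw.dist_le_mul _ hx _ hx₀
    rw [Real.dist_eq, hw0 x₀ (Metric.mem_closedBall_self hρ.le), sub_zero] at h1
    calc |w x| ≤ (K:ℝ) * dist x x₀ := h1
      _ ≤ (K:ℝ) * D := by
          have := Metric.dist_le_diam_of_mem hΩb hx hx₀
          exact mul_le_mul_of_nonneg_left this K.coe_nonneg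
  have hwsqint : IntegrableOn (fun x => (w x)^2) Ω volume := by
    have hmeas : AEStronglyMeasurable (fun x => (w x)^2) (volume.restrict Ω) := by
      have : ContinuousOn (fun x => (w x)^2) Ω := (hw.continuousOn).pow 2
      exact this.aestronglyMeasurable hΩo.measurableSet
    apply Integrable.mono' (integrable_const (((K:ℝ) * D)^2)) hmeas
    filter_upwards [ae_restrict_mem hΩo.measurableSet] with x hx
    rw [Real.norm_eq_abs, abs_of_nonneg (sq_nonneg _), ← sq_abs]
    apply pow_le_pow_left₀ (abs_nonneg _) (hwbd x hx)
  set Guc : EuclideanSpace ℝ (Fin d) × ℝ → ℝ := fun p => G (A p) with hGucdef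
  have hGucmeas : Measurable Guc := hGmeas.comp hAcont.measurable
  have hGucint : Integrable Guc
      ((volume.restrict Ω).prod (volume.restrict (Set.Ioc (0:ℝ) 1))) := by
    apply Integrable.mono' (integrable_const ((K:ℝ)^2)) hGucmeas.aestronglyMeasurable
    have hps : ∀ᵐ p ∂((volume.restrict Ω).prod (volume.restrict (Set.Ioc (0:ℝ) 1))),
        p ∈ Ω ×ˢ Set.Ioc (0:ℝ) 1 := by
      rw [Measure.prod_restrict]
      exact ae_restrict_mem (hΩo.measurableSet.prod measurableSet_Ioc)
    filter_upwards [hps] with p hp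
    rw [Real.norm_eq_abs, abs_of_nonneg (hGnonneg _)]
    exact hGK _ (hseg p.1 hp.1 p.2 ⟨hp.2.1.le, hp.2.2⟩)
  have hFint : Integrable (fun x => ∫ t in Set.Ioc (0:ℝ) 1, G (x₀ + t • (x - x₀)))
      (volume.restrict Ω) := hGucint.integral_prod_left
  -- step 1 : pointwise bound integrated over Ω
  have hstep1 : ∫ x in Ω, (w x)^2 ≤
      ∫ x in Ω, D^2 * ∫ t in Set.Ioc (0:ℝ) 1, G (x₀ + t • (x - x₀)) := by
    refine integral_mono_ae hwsqint (hFint.const_mul (D^2)) ?_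
    filter_upwards [ae_restrict_mem hΩo.measurableSet, hae] with x hx hx2
    exact hptwise x hx hx2
  -- step 2 : Fubini
  have hswap : ∫ x in Ω, (∫ t in Set.Ioc (0:ℝ) 1, G (x₀ + t • (x - x₀)))
      = ∫ t in Set.Ioc (0:ℝ) 1, (∫ x in Ω, G (x₀ + t • (x - x₀))) :=
    integral_integral_swap hGucint
  -- step 3 : the scaling estimate for fixed t
  have hGint : IntegrableOn G Ω volume := by
    apply Integrable.mono' (integrable_const ((K:ℝ)^2))
      (hGmeas.aestronglyMeasurable.restrict)
    filter_upwards [ae_restrict_mem hΩo.measurableSet] with y hy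
    rw [Real.norm_eq_abs, abs_of_nonneg (hGnonneg _)]
    exact hGK _ hy
  have hGΩnn : 0 ≤ ∫ x in Ω, G x :=
    setIntegral_nonneg hΩo.measurableSet (fun y _ => hGnonneg y)
  have hinner : ∀ t ∈ Set.Ioc (0:ℝ) 1,
      (∫ x in Ω, G (x₀ + t • (x - x₀))) ≤ (D/ρ)^d * ∫ x in Ω, G x := by
    intro t ht
    have ht0 : 0 < t := ht.1
    rcases lt_or_ge (t * D) ρ with hcase | hcase
    · have hzero : ∀ x ∈ Ω, G (x₀ + t • (x - x₀)) = 0 := by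
        intro x hx
        have hmem : x₀ + t • (x - x₀) ∈ Metric.ball x₀ ρ := by
          rw [Metric.mem_ball, dist_eq_norm, add_sub_cancel_left, norm_smul,
            Real.norm_eq_abs, abs_of_pos ht0]
          calc t * ‖x - x₀‖ ≤ t * D := by
                exact mul_le_mul_of_nonneg_left (hdist x hx) ht0.le
            _ < ρ := hcase
        have : fderiv ℝ w (x₀ + t • (x - x₀)) = 0 := hGb _ hmem
        show ‖fderiv ℝ w (x₀ + t • (x - x₀))‖ ^ 2 = 0
        rw [this]
        simp
      rw [setIntegral_congr_fun hΩo.measurableSet hzero]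
      simp only [integral_zero]
      positivity
    · -- scaling case
      set H : EuclideanSpace ℝ (Fin d) → ℝ := Ω.indicator G with hHdef
      have hHmeas : Measurable H := hGmeas.indicator hΩo.measurableSet
      have hHnn : ∀ y, 0 ≤ H y := fun y => Set.indicator_nonneg (fun z _ => hGnonneg z) y
      have hHint : Integrable H volume :=
        (integrable_indicator_iff hΩo.measurableSet).mpr hGint
      set c₁ : ℝ≥0∞ := ENNReal.ofReal (|((t:ℝ)^d)⁻¹|) with hc₁def
      have hc₁ne : c₁ ≠ ⊤ := ENNReal.ofReal_ne_top
      have hmap : Measure.map (fun x : EuclideanSpace ℝ (Fin d) => x₀ + t • (x - x₀)) volume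
          = c₁ • volume := by
        have e : (fun x : EuclideanSpace ℝ (Fin d) => x₀ + t • (x - x₀))
            = (fun y => x₀ + y) ∘ ((fun y => t • y) ∘ (fun x => x + (-x₀))) := by
          funext x; simp [Function.comp, sub_eq_add_neg]
        rw [e, ← Measure.map_map (by fun_prop) (by fun_prop),
          ← Measure.map_map (by fun_prop) (by fun_prop),
          (measurePreserving_add_right volume (-x₀)).map_eq,
          Measure.map_addHaar_smul volume ht0.ne', Measure.map_smul,
          (measurePreserving_add_left volume x₀).map_eq, hc₁def,
          finrank_euclideanSpace_fin]
      have hcompmeas : Measurable (fun x : EuclideanSpace ℝ (Fin d) => x₀ + t • (x - x₀)) := by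
        fun_prop
      have hcompint : Integrable (fun x => H (x₀ + t • (x - x₀))) volume := by
        have h1 : Integrable H (Measure.map
            (fun x : EuclideanSpace ℝ (Fin d) => x₀ + t • (x - x₀)) volume) := by
          rw [hmap]
          exact hHint.smul_measure hc₁ne
        exact (integrable_map_measure hHmeas.stronglyMeasurable.aestronglyMeasurable
          hcompmeas.aemeasurable).mp h1
      have hval : ∫ x, H (x₀ + t • (x - x₀)) ∂volume = |((t:ℝ)^d)⁻¹| * ∫ y, H y ∂volume := by
        have := integral_map (μ := volume) hcompmeas.aemeasurable
          (f := H) hHmeas.stronglyMeasurable.aestronglyMeasurable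
        rw [hmap] at this
        rw [← this, integral_smul_measure, hc₁def,
          ENNReal.toReal_ofReal (abs_nonneg _), smul_eq_mul]
      calc (∫ x in Ω, G (x₀ + t • (x - x₀)))
          = ∫ x in Ω, H (x₀ + t • (x - x₀)) := by
            apply setIntegral_congr_fun hΩo.measurableSet
            intro x hx
            have hmem : x₀ + t • (x - x₀) ∈ Ω := hseg x hx t ⟨ht0.le, ht.2⟩
            exact (Set.indicator_of_mem hmem G).symm
        _ ≤ ∫ x, H (x₀ + t • (x - x₀)) ∂volume :=
            setIntegral_le_integral hcompint (Filter.Eventually.of_forall (fun x => hHnn _))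
        _ = |((t:ℝ)^d)⁻¹| * ∫ y, H y ∂volume := hval
        _ = |((t:ℝ)^d)⁻¹| * ∫ x in Ω, G x := by rw [hHdef, integral_indicator hΩo.measurableSet]
        _ ≤ (D/ρ)^d * ∫ x in Ω, G x := by
            apply mul_le_mul_of_nonneg_right _ hGΩnn
            have h1 : |((t:ℝ)^d)⁻¹| = (1/t)^d := by
              rw [abs_of_nonneg (by positivity), one_div, inv_pow]
            rw [h1]
            apply pow_le_pow_left₀ (by positivity)
            rw [div_le_div_iff₀ ht0 hρ]
            nlinarith
  -- step 4 : integrate the inner bound in t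
  have hstep2 : ∫ t in Set.Ioc (0:ℝ) 1, (∫ x in Ω, G (x₀ + t • (x - x₀)))
      ≤ (D/ρ)^d * ∫ x in Ω, G x := by
    have hint : Integrable (fun t => ∫ x in Ω, G (x₀ + t • (x - x₀)))
        (volume.restrict (Set.Ioc (0:ℝ) 1)) := hGucint.integral_prod_right
    calc ∫ t in Set.Ioc (0:ℝ) 1, (∫ x in Ω, G (x₀ + t • (x - x₀)))
        ≤ ∫ _t in Set.Ioc (0:ℝ) 1, ((D/ρ)^d * ∫ x in Ω, G x) := by
          refine integral_mono_ae hint (integrable_const _) ?_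
          filter_upwards [ae_restrict_mem measurableSet_Ioc] with t ht
          exact hinner t ht
      _ = (D/ρ)^d * ∫ x in Ω, G x := by
          rw [integral_const]
          simp
  -- combine everything
  have hfinal : ∫ x in Ω, (w x)^2 ≤ D^2 * ((D/ρ)^d * ∫ x in Ω, G x) := by
    calc ∫ x in Ω, (w x)^2
        ≤ ∫ x in Ω, D^2 * ∫ t in Set.Ioc (0:ℝ) 1, G (x₀ + t • (x - x₀)) := hstep1
      _ = D^2 * ∫ x in Ω, (∫ t in Set.Ioc (0:ℝ) 1, G (x₀ + t • (x - x₀))) :=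
          integral_const_mul _ _
      _ = D^2 * ∫ t in Set.Ioc (0:ℝ) 1, (∫ x in Ω, G (x₀ + t • (x - x₀))) := by rw [hswap]
      _ ≤ D^2 * ((D/ρ)^d * ∫ x in Ω, G x) := by
          exact mul_le_mul_of_nonneg_left hstep2 (sq_nonneg _)
  -- take square roots
  have hsq1 : Real.sqrt (∫ x in Ω, (w x)^2) ≤
      Real.sqrt (D^2 * ((D/ρ)^d * ∫ x in Ω, G x)) := Real.sqrt_le_sqrt hfinal
  have hsq2 : Real.sqrt (D^2 * ((D/ρ)^d * ∫ x in Ω, G x))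
      = D * (Real.sqrt ((D/ρ)^d) * Real.sqrt (∫ x in Ω, G x)) := by
    rw [Real.sqrt_mul (sq_nonneg D), Real.sqrt_sq hD0.le,
      Real.sqrt_mul (by positivity : (0:ℝ) ≤ (D/ρ)^d)]
  have hq : Real.sqrt ((D/ρ)^d) ≤ (1 + D/ρ)^d := by
    rw [show ((1 + D/ρ)^d : ℝ) = Real.sqrt (((1 + D/ρ)^d)^2) by
      rw [Real.sqrt_sq (by positivity)]]
    apply Real.sqrt_le_sqrt
    calc (D/ρ)^d ≤ ((1 + D/ρ)^2)^d := by
          apply pow_le_pow_left₀ (by positivity)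
          nlinarith [sq_nonneg (D/ρ), div_nonneg hD0.le hρ.le]
      _ = ((1 + D/ρ)^d)^2 := by rw [← pow_mul, ← pow_mul, Nat.mul_comm]
  have hGsqrtnn : 0 ≤ Real.sqrt (∫ x in Ω, G x) := Real.sqrt_nonneg _
  calc Real.sqrt (∫ x in Ω, (w x)^2)
      ≤ D * (Real.sqrt ((D/ρ)^d) * Real.sqrt (∫ x in Ω, G x)) := by rw [← hsq2]; exact hsq1
    _ ≤ D * ((1 + D/ρ)^d * Real.sqrt (∫ x in Ω, G x)) := by
        apply mul_le_mul_of_nonneg_left _ hD0.le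
        exact mul_le_mul_of_nonneg_right hq hGsqrtnn
    _ = 1 * (1 + D/ρ)^d * D * Real.sqrt (∫ x in Ω, G x) := by ring
end
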